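/- arXiv:2301.01272 — 13 statements merged into one kernel-verified Lean document; each statement's English description precedes it below -/
import Mathlib

section
/- Let P be an n×n real matrix (n ≥ 1) all of whose leading principal minors are positive. Then there exists an n×n diagonal matrix D with positive diagonal entries such that all eigenvalues of the product D·P are real, positive and simple (i.e., the characteristic polynomial of D·P has n distinct positive real roots). -/
open Matrix Polynomial

lemma eval_charpoly' {N : ℕ} (M : Matrix (Fin N) (Fin N) ℝ) (x : ℝ) :
    M.charpoly.eval x = (Matrix.diagonal (fun _ => x) - M).det := by
  rw [Matrix.charpoly, ← Polynomial.coe_evalRingHom, RingHom.map_det]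
  congr 1
  ext i j
  by_cases h : i = j
  · subst h; simp
  · simp [Matrix.charmatrix_apply_ne _ _ _ h, Matrix.diagonal_apply_ne _ h]

lemma sign_alt_factor {n : ℕ} (f : ℝ[X]) (hmon : f.Monic) (hdeg : f.natDegree = n)
    (w : Fin (n+1) → ℝ) (hw : StrictMono w)
    (hsign : ∀ j : Fin (n+1), 0 < (-1 : ℝ)^(n + (j:ℕ)) * f.eval (w j)) :
    ∃ μ : Fin n → ℝ, StrictMono μ ∧
      (∀ i, w (Fin.castSucc i) < μ i ∧ μ i < w i.succ) ∧
      f = ∏ i, (X - C (μ i)) := by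
  have key : ∀ i : Fin n, ∃ x ∈ Set.Ioo (w (Fin.castSucc i)) (w i.succ), f.eval x = 0 := by
    intro i
    have h1 := hsign i.castSucc
    have h2 := hsign i.succ
    have hc1 : ((Fin.castSucc i : Fin (n+1)) : ℕ) = (i : ℕ) := rfl
    have hc2 : ((i.succ : Fin (n+1)) : ℕ) = (i : ℕ) + 1 := rfl
    rw [hc1] at h1
    rw [hc2, ← add_assoc] at h2
    have hle : w (Fin.castSucc i) ≤ w i.succ := (hw (Fin.castSucc_lt_succ (i := i))).le
    have hcont : ContinuousOn (fun x => f.eval x)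
        (Set.Icc (w (Fin.castSucc i)) (w i.succ)) :=
      (Polynomial.continuous f).continuousOn
    rcases Nat.even_or_odd (n + (i : ℕ)) with he | ho
    · have e1 : ((-1 : ℝ)) ^ (n + (i:ℕ)) = 1 := he.neg_one_pow
      have e2 : ((-1 : ℝ)) ^ (n + (i:ℕ) + 1) = -1 := by
        rw [pow_succ, e1, one_mul]
      rw [e1, one_mul] at h1
      rw [e2, neg_one_mul, neg_pos] at h2
      have := intermediate_value_Ioo' hle hcont (Set.mem_Ioo.2 ⟨h2, h1⟩)
      obtain ⟨x, hx, hfx⟩ := this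
      exact ⟨x, hx, hfx⟩
    · have e1 : ((-1 : ℝ)) ^ (n + (i:ℕ)) = -1 := ho.neg_one_pow
      have e2 : ((-1 : ℝ)) ^ (n + (i:ℕ) + 1) = 1 := by
        rw [pow_succ, e1]; norm_num
      rw [e1, neg_one_mul, neg_pos] at h1
      rw [e2, one_mul] at h2
      obtain ⟨x, hx, hfx⟩ := intermediate_value_Ioo hle hcont (Set.mem_Ioo.2 ⟨h1, h2⟩)
      exact ⟨x, hx, hfx⟩
  choose μ hμmem hμroot using key
  have hmono : StrictMono μ := by
    intro i j hij
    have h1 : μ i < w i.succ := (hμmem i).2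
    have h2 : w (Fin.castSucc j) < μ j := (hμmem j).1
    have h3 : w i.succ ≤ w (Fin.castSucc j) := by
      apply hw.monotone
      simp only [Fin.le_def, Fin.coe_castSucc, Fin.val_succ]
      exact hij
    linarith
  refine ⟨μ, hmono, hμmem, ?_⟩
  have hf0 : f ≠ 0 := hmon.ne_zero
  set T : Multiset ℝ := Finset.univ.val.map μ with hT
  have hTnodup : T.Nodup := Multiset.Nodup.map hmono.injective Finset.univ.nodup
  have hTle : T ≤ f.roots := by
    rw [Multiset.le_iff_count]
    intro a
    by_cases ha : a ∈ T
    · rw [Multiset.count_eq_one_of_mem hTnodup ha]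
      obtain ⟨i, _, rfl⟩ := Multiset.mem_map.1 ha
      rw [Nat.one_le_iff_ne_zero]
      exact Multiset.count_ne_zero.2 (Polynomial.mem_roots'.2 ⟨hf0, hμroot i⟩)
    · rw [Multiset.count_eq_zero_of_notMem ha]; exact Nat.zero_le _
  have hcardT : T.card = n := by simp [hT]
  have hrc : f.roots.card ≤ n := hdeg ▸ f.card_roots'
  have hTeq : T = f.roots :=
    Multiset.eq_of_le_of_card_le hTle (by rw [hcardT]; exact hrc)
  have hsplits : f.Splits :=
    (Polynomial.splits_iff_card_roots).2 (by rw [← hTeq, hcardT, hdeg])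
  have hprod := hsplits.eq_prod_roots_of_monic hmon
  rw [← hTeq, hT, Multiset.map_map] at hprod
  rw [hprod]
  rfl

lemma prod_sign {m : ℕ} (a : Fin m → ℝ) (z : ℝ) (j : ℕ)
    (h1 : ∀ i : Fin m, (i : ℕ) < j → a i < z)
    (h2 : ∀ i : Fin m, j ≤ (i : ℕ) → z < a i) :
    0 < (-1 : ℝ) ^ (m - j) * ∏ i, (z - a i) := by
  classical
  set S : Finset (Fin m) := Finset.univ.filter (fun i => j ≤ (i : ℕ)) with hS
  have hcard : S.card = m - j := by
    have hbij : S.card = (Finset.Ico j m).card := by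
      refine Finset.card_bij (fun i _ => (i : ℕ)) ?_ ?_ ?_
      · intro i hi
        simp only [hS, Finset.mem_filter] at hi
        exact Finset.mem_Ico.2 ⟨hi.2, i.isLt⟩
      · intro i _ i' _ h
        exact Fin.val_injective h
      · intro k hk
        rw [Finset.mem_Ico] at hk
        exact ⟨⟨k, hk.2⟩, by simp [hS, hk.1], rfl⟩
    rw [hbij, Nat.card_Ico]
  have hsplit : (∏ i ∈ S, (z - a i)) * ∏ i ∈ Sᶜ, (z - a i) = ∏ i, (z - a i) :=
    Finset.prod_mul_prod_compl S _
  have hSneg : ∏ i ∈ S, (z - a i) = (-1 : ℝ) ^ (m - j) * ∏ i ∈ S, (a i - z) := by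
    rw [← hcard, ← Finset.prod_const (-1 : ℝ), ← Finset.prod_mul_distrib]
    apply Finset.prod_congr rfl
    intro i _
    ring
  have hpos1 : 0 < ∏ i ∈ S, (a i - z) := by
    apply Finset.prod_pos
    intro i hi
    simp only [hS, Finset.mem_filter] at hi
    linarith [h2 i hi.2]
  have hpos2 : 0 < ∏ i ∈ Sᶜ, (z - a i) := by
    apply Finset.prod_pos
    intro i hi
    simp only [hS, Finset.mem_compl, Finset.mem_filter, Finset.mem_univ, true_and,
      not_le] at hi
    linarith [h1 i hi]
  have hsq : (-1 : ℝ) ^ (m - j) * (-1 : ℝ) ^ (m - j) = 1 := by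
    rw [← pow_add, Even.neg_one_pow ⟨m - j, rfl⟩]
  calc (0 : ℝ) < (∏ i ∈ S, (a i - z)) * ∏ i ∈ Sᶜ, (z - a i) := mul_pos hpos1 hpos2
    _ = ((-1 : ℝ) ^ (m - j) * (-1 : ℝ) ^ (m - j) * ∏ i ∈ S, (a i - z)) * ∏ i ∈ Sᶜ, (z - a i) := by
        rw [hsq, one_mul]
    _ = (-1 : ℝ) ^ (m - j) * ∏ i, (z - a i) := by
        rw [← hsplit, hSneg]; ring

lemma det_single_last_row {n : ℕ} (A : Matrix (Fin (n+1)) (Fin (n+1)) ℝ) (x : ℝ)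
    (h : ∀ j, A (Fin.last n) j = if Fin.last n = j then x else 0) :
    A.det = x * (A.submatrix Fin.castSucc Fin.castSucc).det := by
  rw [Matrix.det_succ_row A (Fin.last n)]
  rw [Finset.sum_eq_single (Fin.last n)]
  · rw [h, if_pos rfl, Fin.succAbove_last]
    have : ((-1 : ℝ)) ^ ((Fin.last n : ℕ) + (Fin.last n : ℕ)) = 1 :=
      Even.neg_one_pow ⟨(Fin.last n : ℕ), rfl⟩
    rw [this, one_mul]
  · intro j _ hj
    rw [h, if_neg (Ne.symm hj)]
    ring
  · intro hmem
    exact absurd (Finset.mem_univ _) hmem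

lemma det_split {n : ℕ} (P : Matrix (Fin (n+1)) (Fin (n+1)) ℝ) (d' : Fin n → ℝ)
    (t x : ℝ) :
    Matrix.det (Matrix.diagonal (fun _ => x) - Matrix.diagonal (Fin.snoc d' t) * P)
      = x * Matrix.det (Matrix.diagonal (fun _ => x)
            - Matrix.diagonal d' * (P.submatrix Fin.castSucc Fin.castSucc))
        + (-t) * Matrix.det (Matrix.updateRow
            (Matrix.diagonal (fun _ => x) - Matrix.diagonal (Fin.snoc d' t) * P)
            (Fin.last n) (P (Fin.last n))) := by
  set M : Matrix (Fin (n+1)) (Fin (n+1)) ℝ :=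
    Matrix.diagonal (fun _ => x) - Matrix.diagonal (Fin.snoc d' t) * P with hM
  have hrow : M (Fin.last n) = (fun j => if Fin.last n = j then x else 0) +
      (-t) • (P (Fin.last n)) := by
    funext j
    simp only [hM, Matrix.sub_apply, Matrix.diagonal_apply, Matrix.diagonal_mul,
      Pi.add_apply, Pi.smul_apply, smul_eq_mul]
    rw [Fin.snoc_last]
    ring_nf
  have h1 : M = Matrix.updateRow M (Fin.last n)
      ((fun j => if Fin.last n = j then x else 0) + (-t) • (P (Fin.last n))) := by
    rw [← hrow, Matrix.updateRow_eq_self]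
  conv_lhs => rw [h1]
  rw [Matrix.det_updateRow_add, Matrix.det_updateRow_smul]
  congr 1
  · -- first term
    have hsub : (Matrix.updateRow M (Fin.last n)
          (fun j => if Fin.last n = j then x else 0)).submatrix Fin.castSucc Fin.castSucc
        = Matrix.diagonal (fun _ => x)
            - Matrix.diagonal d' * (P.submatrix Fin.castSucc Fin.castSucc) := by
      ext i j
      simp only [Matrix.submatrix_apply]
      rw [Matrix.updateRow_ne (Fin.castSucc_lt_last i).ne]
      simp only [hM, Matrix.sub_apply, Matrix.diagonal_apply, Matrix.diagonal_mul]
      rw [Fin.snoc_castSucc]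
      congr 1
      by_cases hij : i = j
      · subst hij; simp
      · rw [if_neg (by simpa [Fin.castSucc_inj] using hij), if_neg hij]
    rw [det_single_last_row (Matrix.updateRow M (Fin.last n)
        (fun j => if Fin.last n = j then x else 0)) x
      (fun j => by rw [Matrix.updateRow_self]), hsub]

lemma neg_one_pow_mod {a b : ℕ} (h : a % 2 = b % 2) : (-1 : ℝ) ^ a = (-1 : ℝ) ^ b := by
  rcases Nat.even_or_odd a with ha | ha
  · rw [ha.neg_one_pow, (Nat.even_iff.mpr (by rw [← h]; exact Nat.even_iff.mp ha)).neg_one_pow]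
  · rw [ha.neg_one_pow, (Nat.odd_iff.mpr (by rw [← h]; exact Nat.odd_iff.mp ha)).neg_one_pow]

lemma updateRow_snoc_indep {n : ℕ} (P : Matrix (Fin (n+1)) (Fin (n+1)) ℝ)
    (d' : Fin n → ℝ) (t s x : ℝ) :
    Matrix.updateRow (Matrix.diagonal (fun _ => x) - Matrix.diagonal (Fin.snoc d' t) * P)
      (Fin.last n) (P (Fin.last n)) =
    Matrix.updateRow (Matrix.diagonal (fun _ => x) - Matrix.diagonal (Fin.snoc d' s) * P)
      (Fin.last n) (P (Fin.last n)) := by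
  ext i j
  by_cases h : i = Fin.last n
  · subst h; rw [Matrix.updateRow_self, Matrix.updateRow_self]
  · rw [Matrix.updateRow_ne h, Matrix.updateRow_ne h]
    obtain ⟨k, rfl⟩ := Fin.exists_castSucc_eq.2 h
    simp [Matrix.sub_apply, Matrix.diagonal_mul, Fin.snoc_castSucc]

lemma charpoly_fin_one (M : Matrix (Fin 1) (Fin 1) ℝ) : M.charpoly = X - C (M 0 0) := by
  rw [Matrix.charpoly, Matrix.det_fin_one]
  exact Matrix.charmatrix_apply_eq M 0


lemma FF_aux (n : ℕ) (P : Matrix (Fin (n+1)) (Fin (n+1)) ℝ)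
    (hm : ∀ k : Fin (n+1), 0 < (P.submatrix (Fin.castLE k.isLt) (Fin.castLE k.isLt)).det) :
    ∃ d : Fin (n+1) → ℝ, (∀ i, 0 < d i) ∧
      ∃ μ : Fin (n+1) → ℝ, StrictMono μ ∧ (∀ i, 0 < μ i) ∧
        (Matrix.diagonal d * P).charpoly = ∏ i, (X - C (μ i)) := by
  induction n with
  | zero =>
    refine ⟨fun _ => 1, fun _ => one_pos, fun _ => P 0 0, ?_, ?_, ?_⟩
    · intro a b hab
      rw [Fin.lt_def] at hab
      have := a.isLt
      have := b.isLt
      omega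
    · intro i
      have h0 := hm 0
      have he : (P.submatrix (Fin.castLE (0 : Fin 1).isLt)
          (Fin.castLE (0 : Fin 1).isLt)).det = P 0 0 := by
        rw [Matrix.det_fin_one]; rfl
      rw [he] at h0
      exact h0
    · have h1 : Matrix.diagonal (fun _ => (1:ℝ)) * P = P := by
        rw [Matrix.diagonal_one, one_mul]
      rw [h1, charpoly_fin_one, Fin.prod_univ_one]
  | succ n IH =>
    set P' : Matrix (Fin (n+1)) (Fin (n+1)) ℝ := P.submatrix Fin.castSucc Fin.castSucc with hP'
    have hm' : ∀ k : Fin (n+1),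
        0 < (P'.submatrix (Fin.castLE k.isLt) (Fin.castLE k.isLt)).det := by
      intro k
      have h := hm (Fin.castSucc k)
      have heq : P'.submatrix (Fin.castLE k.isLt) (Fin.castLE k.isLt)
          = P.submatrix (Fin.castLE (Fin.castSucc k).isLt)
              (Fin.castLE (Fin.castSucc k).isLt) := by
        ext i j
        simp only [hP', Matrix.submatrix_apply]
        congr 1 <;> exact Fin.ext rfl
      rw [heq]
      exact h
    have hdetP : 0 < P.det := by
      have h := hm (Fin.last (n+1))
      have heq : P.submatrix (Fin.castLE (Fin.last (n+1)).isLt)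
          (Fin.castLE (Fin.last (n+1)).isLt) = P := by
        ext i j
        simp only [Matrix.submatrix_apply]
        congr 1 <;> exact Fin.ext rfl
      rwa [heq] at h
    obtain ⟨d', hd'pos, lam, hlmono, hlpos, hchar'⟩ := IH P' hm'
    set p := (Matrix.diagonal d' * P').charpoly with hp
    have hpev : ∀ x : ℝ, p.eval x = ∏ i, (x - lam i) := by
      intro x
      rw [hchar']
      simp [eval_prod]
    set z : Fin (n+2) → ℝ := fun j =>
      if h : (j : ℕ) < n+1 then
        (if (j:ℕ) = 0 then lam 0 / 2
         else (lam ⟨(j:ℕ)-1, by omega⟩ + lam ⟨(j:ℕ), h⟩)/2)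
      else lam (Fin.last n) + 1 with hzdef
    have hsep2 : ∀ (j : Fin (n+2)) (i : Fin (n+1)), (j:ℕ) ≤ (i:ℕ) → z j < lam i := by
      intro j i hji
      have hj : (j:ℕ) < n+1 := lt_of_le_of_lt hji i.isLt
      rw [hzdef]
      simp only
      rw [dif_pos hj]
      by_cases h0 : (j:ℕ) = 0
      · rw [if_pos h0]
        have hle : lam 0 ≤ lam i := hlmono.monotone (by
          rw [Fin.le_def]; simp)
        have := hlpos 0
        linarith
      · rw [if_neg h0]
        have h1 : lam ⟨(j:ℕ)-1, by omega⟩ < lam ⟨(j:ℕ), hj⟩ := hlmono (by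
          rw [Fin.lt_def]; simp; rw [Fin.lt_def, Fin.val_zero]; omega)
        have h2 : lam ⟨(j:ℕ), hj⟩ ≤ lam i := hlmono.monotone (by
          rw [Fin.le_def]; simpa using hji)
        linarith
    have hsep1 : ∀ (j : Fin (n+2)) (i : Fin (n+1)), (i:ℕ) < (j:ℕ) → lam i < z j := by
      intro j i hij
      rw [hzdef]
      simp only
      by_cases hj : (j:ℕ) < n+1
      · rw [dif_pos hj]
        have h0 : ¬((j:ℕ) = 0) := by omega
        rw [if_neg h0]
        have h1 : lam i ≤ lam ⟨(j:ℕ)-1, by omega⟩ := hlmono.monotone (by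
          rw [Fin.le_def]; simp; omega)
        have h2 : lam ⟨(j:ℕ)-1, by omega⟩ < lam ⟨(j:ℕ), hj⟩ := hlmono (by
          rw [Fin.lt_def]; simp; rw [Fin.lt_def, Fin.val_zero]; omega)
        linarith
      · rw [dif_neg hj]
        have h1 : lam i ≤ lam (Fin.last n) := hlmono.monotone (by
          rw [Fin.le_def]; simp [Fin.last]; omega)
        linarith
    have hzpos : ∀ j, 0 < z j := by
      intro j
      by_cases h0 : (j:ℕ) = 0
      · have hj : (j:ℕ) < n+1 := by omega
        rw [hzdef]
        simp only
        rw [dif_pos hj, if_pos h0]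
        have := hlpos 0
        linarith
      · have h1 : ((0 : Fin (n+1)) : ℕ) < (j:ℕ) := by simp; rw [Fin.lt_def, Fin.val_zero]; omega
        have h2 := hsep1 j 0 h1
        have := hlpos 0
        linarith
    have hzmono : StrictMono z := by
      intro a b hab
      have hab' : (a:ℕ) < (b:ℕ) := hab
      have ha : (a:ℕ) < n+1 := by have := b.isLt; omega
      have h1 : z a < lam ⟨(a:ℕ), ha⟩ := hsep2 a ⟨(a:ℕ), ha⟩ (le_refl _)
      have h2 : lam ⟨(a:ℕ), ha⟩ < z b := hsep1 b ⟨(a:ℕ), ha⟩ hab'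
      linarith
    have hpsign : ∀ j : Fin (n+2), 0 < (-1:ℝ)^(n+1 - (j:ℕ)) * p.eval (z j) := by
      intro j
      rw [hpev (z j)]
      exact prod_sign lam (z j) (j:ℕ) (fun i hi => hsep1 j i hi) (fun i hi => hsep2 j i hi)
    set q : ℝ → ℝ := fun x => Matrix.det (Matrix.updateRow
        (Matrix.diagonal (fun _ => x) - Matrix.diagonal (Fin.snoc d' 1) * P)
        (Fin.last (n+1)) (P (Fin.last (n+1)))) with hq
    have hpne : ∀ j, p.eval (z j) ≠ 0 := by
      intro j h
      have := hpsign j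
      rw [h, mul_zero] at this
      exact lt_irrefl _ this
    set B : Fin (n+2) → ℝ := fun j => (z j * |p.eval (z j)|) / (|q (z j)| + 1) with hB
    have hBpos : ∀ j, 0 < B j := by
      intro j
      exact div_pos (mul_pos (hzpos j) (abs_pos.2 (hpne j))) (by positivity)
    set t : ℝ := Finset.univ.inf' Finset.univ_nonempty B with ht
    have htpos : 0 < t := (Finset.lt_inf'_iff _).2 (fun j _ => hBpos j)
    have htB : ∀ j, t ≤ B j := fun j => Finset.inf'_le _ (Finset.mem_univ j)
    have hbound : ∀ j, t * |q (z j)| < z j * |p.eval (z j)| := by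
      intro j
      have h1 : t * |q (z j)| ≤ B j * |q (z j)| :=
        mul_le_mul_of_nonneg_right (htB j) (abs_nonneg _)
      have hzp : 0 < z j * |p.eval (z j)| := mul_pos (hzpos j) (abs_pos.2 (hpne j))
      have h2 : B j * |q (z j)| < z j * |p.eval (z j)| := by
        rw [hB]
        simp only
        rw [div_mul_eq_mul_div, div_lt_iff₀ (by positivity)]
        nlinarith [abs_nonneg (q (z j))]
      linarith
    set d : Fin (n+2) → ℝ := Fin.snoc d' t with hd
    have hdpos : ∀ i, 0 < d i := by
      intro i
      induction i using Fin.lastCases with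
      | last => simpa [hd] using htpos
      | cast k => simpa [hd, Fin.snoc_castSucc] using hd'pos k
    set f := (Matrix.diagonal d * P).charpoly with hf
    have hfmonic : f.Monic := Matrix.charpoly_monic (Matrix.diagonal d * P)
    have hfdeg : f.natDegree = n+2 := by
      rw [hf, Matrix.charpoly_natDegree_eq_dim]
      simp
    have hfe : ∀ x : ℝ, f.eval x = x * p.eval x - t * q x := by
      intro x
      rw [hf, eval_charpoly', hd, det_split P d' t x,
        updateRow_snoc_indep P d' t 1 x, ← hP']
      have e1 := eval_charpoly' (Matrix.diagonal d' * P') x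
      rw [← e1]
      simp only [hq]
      ring
    have hf0 : 0 < (-1:ℝ)^(n+2) * f.eval 0 := by
      rw [hf, eval_charpoly']
      have he : Matrix.diagonal (fun _ => (0:ℝ)) - Matrix.diagonal d * P
          = -(Matrix.diagonal d * P) := by
        rw [Matrix.diagonal_zero, zero_sub]
      rw [he, Matrix.det_neg, Matrix.det_mul, Matrix.det_diagonal]
      simp only [Fintype.card_fin]
      rw [← mul_assoc, ← pow_add, Even.neg_one_pow ⟨n+2, by ring⟩, one_mul]
      exact mul_pos (Finset.prod_pos (fun i _ => hdpos i)) hdetP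
    set w : Fin (n+3) → ℝ := Fin.cons 0 z with hw
    have hwmono : StrictMono w := by
      intro a b hab
      induction b using Fin.cases with
      | zero => exact absurd hab (by simp)
      | succ jb =>
        induction a using Fin.cases with
        | zero =>
          rw [hw]
          rw [Fin.cons_zero, Fin.cons_succ]
          exact hzpos jb
        | succ ja =>
          rw [hw, Fin.cons_succ, Fin.cons_succ]
          exact hzmono (by rwa [Fin.succ_lt_succ_iff] at hab)
    have hwsign : ∀ j : Fin (n+3), 0 < (-1:ℝ)^((n+2) + (j:ℕ)) * f.eval (w j) := by
      intro j
      induction j using Fin.cases with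
      | zero =>
        have : w 0 = 0 := by rw [hw, Fin.cons_zero]
        rw [this]
        simpa using hf0
      | succ j' =>
        have hcoe : ((Fin.succ j' : Fin (n+3)) : ℕ) = (j' : ℕ) + 1 := rfl
        have heq : (-1:ℝ)^((n+2) + ((Fin.succ j' : Fin (n+3)):ℕ))
            = (-1:ℝ)^(n+1 - (j':ℕ)) := by
          rw [hcoe]
          exact neg_one_pow_mod (by have := j'.isLt; omega)
        have hwj : w (Fin.succ j') = z j' := by rw [hw, Fin.cons_succ]
        rw [heq, hwj, hfe (z j')]
        have hz := hpsign j'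
        have hb := hbound j'
        have habs : |t * q (z j')| < z j' * |p.eval (z j')| := by
          rw [abs_mul, abs_of_pos htpos]
          exact hb
        rcases Nat.even_or_odd (n+1-(j':ℕ)) with he | ho
        · rw [he.neg_one_pow, one_mul] at hz ⊢
          rw [abs_of_pos hz] at habs
          have h3 := (abs_lt.1 habs).2
          linarith
        · rw [ho.neg_one_pow, neg_one_mul, neg_pos] at hz ⊢
          rw [abs_of_neg hz] at habs
          have h3 := (abs_lt.1 habs).1
          linarith
    obtain ⟨μ, hμmono, hμmem, hμfact⟩ := sign_alt_factor f hfmonic hfdeg w hwmono hwsign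
    refine ⟨d, hdpos, μ, hμmono, ?_, hμfact⟩
    intro i
    have h1 := (hμmem i).1
    have h2 : w 0 ≤ w (Fin.castSucc i) := hwmono.monotone (Fin.zero_le _)
    have h3 : w 0 = 0 := by rw [hw, Fin.cons_zero]
    linarith


/-- **Fisher–Fuller theorem.** If all leading principal minors of a real `n × n`
matrix `P` (`n ≥ 1`) are positive, then there is a positive diagonal matrix `D`
such that all eigenvalues of `D * P` are real, positive and simple, i.e. the
characteristic polynomial of `D * P` has `n` distinct positive real roots. -/
theorem fisher_fuller {n : ℕ} (hn : 1 ≤ n) (P : Matrix (Fin n) (Fin n) ℝ)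
    (hminors : ∀ k : Fin n,
      0 < (P.submatrix (Fin.castLE k.isLt) (Fin.castLE k.isLt)).det) :
    ∃ d : Fin n → ℝ, (∀ i, 0 < d i) ∧
      ∃ μ : Fin n → ℝ, Function.Injective μ ∧ (∀ i, 0 < μ i) ∧
        (Matrix.diagonal d * P).charpoly = ∏ i, (X - C (μ i)) := by
  obtain ⟨m, rfl⟩ : ∃ m, n = m + 1 := ⟨n - 1, by omega⟩
  obtain ⟨d, hd, μ, hμmono, hμpos, hμfact⟩ := FF_aux m P hminors
  exact ⟨d, hd, μ, hμmono.injective, hμpos, hμfact⟩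
end

section
/- Let A be an n×n complex matrix all of whose leading principal minors are real and positive, and let ε > 0. Then there exists an n×n real diagonal matrix D with positive diagonal entries such that all eigenvalues of D·A are simple and every eigenvalue μ of D·A satisfies |arg(μ)| < ε. -/
open Matrix Polynomial

noncomputable def Complex.abs : AbsoluteValue ℂ ℝ := NormedField.toAbsoluteValue ℂ

lemma Complex.abs_ofReal (r : ℝ) : Complex.abs (r : ℂ) = |r| := by
  show ‖(r : ℂ)‖ = |r|
  simp


lemma posMin {α : Type*} [Fintype α] (f : α → ℝ) (hf : ∀ a, 0 < f a) :
    ∃ δ : ℝ, 0 < δ ∧ ∀ a, δ ≤ f a := by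
  rcases isEmpty_or_nonempty α with h | h
  · exact ⟨1, one_pos, fun a => (IsEmpty.false a).elim⟩
  · exact ⟨Finset.univ.inf' Finset.univ_nonempty f,
      (Finset.lt_inf'_iff _).2 fun a _ => hf a,
      fun a => Finset.inf'_le _ (Finset.mem_univ a)⟩

lemma prodSubOneLe {α : Type*} (s : Finset α) (z : α → ℂ) (x : ℝ) (hx : 0 ≤ x)
    (h : ∀ a ∈ s, Complex.abs (z a - 1) ≤ x) :
    Complex.abs (∏ a ∈ s, z a - 1) ≤ (1 + x) ^ s.card - 1 := by
  induction s using Finset.cons_induction with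
  | empty => simp
  | cons a s ha ih =>
    have hza : Complex.abs (z a - 1) ≤ x := h a (Finset.mem_cons_self a s)
    have hz : Complex.abs (z a) ≤ 1 + x := by
      calc Complex.abs (z a) = Complex.abs ((z a - 1) + 1) := by ring_nf
      _ ≤ Complex.abs (z a - 1) + 1 := by
          simpa using Complex.abs.add_le (z a - 1) 1
      _ ≤ 1 + x := by linarith
    have ih' := ih (fun b hb => h b (Finset.mem_cons_of_mem hb))
    rw [Finset.prod_cons]
    have key : z a * ∏ b ∈ s, z b - 1 = z a * (∏ b ∈ s, z b - 1) + (z a - 1) := by ring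
    rw [key, Finset.card_cons]
    calc Complex.abs (z a * (∏ b ∈ s, z b - 1) + (z a - 1))
        ≤ Complex.abs (z a) * Complex.abs (∏ b ∈ s, z b - 1) + Complex.abs (z a - 1) := by
          simpa [_root_.map_mul] using Complex.abs.add_le (z a * (∏ b ∈ s, z b - 1)) (z a - 1)
      _ ≤ (1 + x) * ((1 + x) ^ s.card - 1) + x := by
          have h1 : (0:ℝ) ≤ Complex.abs (∏ b ∈ s, z b - 1) := Complex.abs.nonneg _
          nlinarith [Complex.abs.nonneg (z a)]
      _ = (1 + x) ^ (s.card + 1) - 1 := by ring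

lemma onAddPowLe (m : ℕ) (x : ℝ) (hx : 0 ≤ x) (hx1 : x ≤ 1) :
    (1 + x) ^ m ≤ 1 + (2 ^ m - 1) * x := by
  induction m with
  | zero => simp
  | succ m ih =>
    have h2 : (1:ℝ) ≤ 2 ^ m := one_le_pow₀ (by norm_num)
    calc (1 + x) ^ (m + 1) = (1 + x) ^ m * (1 + x) := by ring
      _ ≤ (1 + (2 ^ m - 1) * x) * (1 + x) := by nlinarith
      _ ≤ 1 + (2 ^ (m + 1) - 1) * x := by
          have h3 : (2:ℝ) ^ (m+1) = 2 * 2 ^ m := by ring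
          nlinarith [mul_nonneg (mul_nonneg (sub_nonneg.2 h2) hx) (sub_nonneg.2 hx1)]

lemma extractClose {α : Type*} [Fintype α] [Nonempty α] (f : α → ℝ) (δ : ℝ) (hδ : 0 < δ)
    (h : ∏ a, f a ≤ δ ^ Fintype.card α) : ∃ a, f a ≤ δ := by
  by_contra hc
  push_neg at hc
  have : δ ^ Fintype.card α < ∏ a, f a := by
    have := Finset.prod_lt_prod_of_nonempty (f := fun _ : α => δ) (g := f)
      (fun i _ => hδ) (fun i _ => hc i) Finset.univ_nonempty
    simpa [Finset.prod_const, Finset.card_univ] using this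
  linarith

lemma existsProdForm (p : Polynomial ℂ) (hm : p.Monic) (N : ℕ) (hd : p.natDegree = N) :
    ∃ ν : Fin N → ℂ, p = ∏ i, (X - C (ν i)) := by
  have hs : p.Splits := IsAlgClosed.splits p
  have hp : p = (Multiset.map (fun a => X - C a) p.roots).prod :=
    hs.eq_prod_roots_of_monic hm
  have hcard : Multiset.card p.roots = N := by
    have := hs.natDegree_eq_card_roots
    omega
  set l := p.roots.toList with hl
  have hlen : l.length = N := by rw [hl, Multiset.length_toList, hcard]
  refine ⟨fun i => l.get (Fin.cast hlen.symm i), ?_⟩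
  have hroots : p.roots = (l : Multiset ℂ) := (Multiset.coe_toList _).symm
  rw [hp, hroots, Multiset.map_coe, Multiset.prod_coe]
  conv_lhs => rw [← List.ofFn_get l, List.map_ofFn, List.prod_ofFn]
  exact (Fin.prod_congr' (fun i => X - C (l.get i)) hlen.symm).symm

lemma evalCharpoly {N : Type*} [DecidableEq N] [Fintype N] (M : Matrix N N ℂ) (z : ℂ) :
    (M.charpoly).eval z = (Matrix.diagonal (fun _ => z) - M).det := by
  have h := RingHom.map_det (Polynomial.evalRingHom z) M.charmatrix
  rw [Matrix.charpoly]
  rw [show Polynomial.eval z M.charmatrix.det = (Polynomial.evalRingHom z) M.charmatrix.det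
    from rfl, h]
  congr 1
  ext i j
  by_cases hij : i = j <;>
    simp [RingHom.mapMatrix_apply, Matrix.map_apply, Matrix.charmatrix_apply,
      Matrix.diagonal, hij, Matrix.sub_apply]

lemma detLastRow {m : ℕ} (C : Matrix (Fin (m+1)) (Fin (m+1)) ℂ) (z : ℂ) :
    (C.updateRow (Fin.last m) (Pi.single (Fin.last m) z)).det
      = z * (C.submatrix Fin.castSucc Fin.castSucc).det := by
  rw [← Matrix.det_submatrix_equiv_self (finSumFinEquiv (m := m) (n := 1))]
  have hnat : ∀ i : Fin 1, (finSumFinEquiv (m := m) (n := 1)) (Sum.inr i) = Fin.last m := by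
    intro i
    have : (i : ℕ) = 0 := by omega
    simp [finSumFinEquiv_apply_right, Fin.natAdd, Fin.last, Fin.ext_iff, this]
  have hcast : ∀ i : Fin m, (finSumFinEquiv (m := m) (n := 1)) (Sum.inl i) = Fin.castSucc i := by
    intro i
    simp [finSumFinEquiv_apply_left, Fin.castAdd, Fin.castSucc, Fin.ext_iff]
  have hne : ∀ i : Fin m, Fin.castSucc i ≠ Fin.last m := fun i => (Fin.castSucc_lt_last i).ne
  have hblock : (C.updateRow (Fin.last m) (Pi.single (Fin.last m) z)).submatrix
      (finSumFinEquiv (m := m) (n := 1)) (finSumFinEquiv (m := m) (n := 1))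
      = Matrix.fromBlocks (C.submatrix Fin.castSucc Fin.castSucc)
          (Matrix.of fun i (_ : Fin 1) => C (Fin.castSucc i) (Fin.last m)) 0
          (Matrix.of fun _ _ => z) := by
    ext i j
    rcases i with i | i <;> rcases j with j | j <;>
      simp [Matrix.submatrix_apply, hnat, hcast, Matrix.updateRow_apply, hne,
        Pi.single_apply, (hne _).symm, Matrix.fromBlocks]
  rw [hblock, Matrix.det_fromBlocks_zero₂₁]
  have : (Matrix.of fun (_ : Fin 1) (_ : Fin 1) => z).det = z := by
    rw [Matrix.det_fin_one]; rfl
  rw [this, mul_comm]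

set_option maxHeartbeats 2000000 in
lemma hershAux (m : ℕ) :
    ∀ (A : Matrix (Fin m) (Fin m) ℂ),
    (∀ k : Fin m, ((A.submatrix (Fin.castLE k.isLt) (Fin.castLE k.isLt)).det.im = 0 ∧
        0 < (A.submatrix (Fin.castLE k.isLt) (Fin.castLE k.isLt)).det.re)) →
    ∀ (ε : ℝ), 0 < ε → ε < Real.pi / 2 →
    ∃ d : Fin m → ℝ, (∀ i, 0 < d i) ∧
      ∃ μ : Fin m → ℂ, Function.Injective μ ∧
        (∀ i, 0 < (μ i).re ∧ |(μ i).im| < (μ i).re * Real.tan ε) ∧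
        ((∏ i, μ i).im = 0 ∧ 0 < (∏ i, μ i).re) ∧
        (Matrix.diagonal (fun i => (d i : ℂ)) * A).charpoly = ∏ i, (X - C (μ i)) := by
  induction m with
  | zero =>
    intro A _ ε hε hε2
    refine ⟨fun i => i.elim0, fun i => i.elim0, fun i => i.elim0,
      fun a b _ => Subsingleton.elim a b, fun i => i.elim0, ⟨by simp, by simp⟩, ?_⟩
    simp [Matrix.charpoly, Matrix.det_isEmpty]
  | succ m ih =>
    intro A hminors ε hε hε2
    -- leading block
    set A₁ : Matrix (Fin m) (Fin m) ℂ := A.submatrix Fin.castSucc Fin.castSucc with hA₁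
    have hminors₁ : ∀ k : Fin m,
        ((A₁.submatrix (Fin.castLE k.isLt) (Fin.castLE k.isLt)).det.im = 0 ∧
          0 < (A₁.submatrix (Fin.castLE k.isLt) (Fin.castLE k.isLt)).det.re) := by
      intro k
      have key : A₁.submatrix (Fin.castLE k.isLt) (Fin.castLE k.isLt)
          = A.submatrix (Fin.castLE (Nat.lt_succ_of_lt k.isLt))
              (Fin.castLE (Nat.lt_succ_of_lt k.isLt)) := by
        rw [hA₁, Matrix.submatrix_submatrix]
        congr 1 <;> (funext i; exact Fin.ext rfl)
      rw [key]
      exact hminors ⟨k.val, Nat.lt_succ_of_lt k.isLt⟩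
    obtain ⟨d', hd', μ', hinj', hcond', ⟨hP'im, hP're⟩, hq'⟩ := ih A₁ hminors₁ ε hε hε2
    -- determinant of A is a positive real
    have hdetA := hminors (Fin.last m)
    have hidfun : (Fin.castLE (Fin.last m).isLt : Fin (m+1) → Fin (m+1)) = id :=
      funext fun i => Fin.ext rfl
    rw [hidfun, Matrix.submatrix_id_id] at hdetA
    obtain ⟨hAim, hρA⟩ := hdetA
    set ρA : ℝ := A.det.re with hρAdef
    have hAdet : A.det = (ρA : ℂ) := by
      apply Complex.ext
      · simp [hρAdef]
      · simpa using hAim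
    -- basic positive constants
    have ht : 0 < Real.tan ε := Real.tan_pos_of_pos_of_lt_pi_div_two hε hε2
    set tε := Real.tan ε with htε
    set κ : ℝ := tε / (1 + tε) with hκdef
    have hκ0 : 0 < κ := by positivity
    have hκ1 : κ < 1 := by rw [hκdef, div_lt_one (by linarith)]; linarith
    have hκε : κ * (1 + tε) = tε := by rw [hκdef]; field_simp
    obtain ⟨r, hr0, hr⟩ := posMin (fun i => (μ' i).re) (fun i => (hcond' i).1)
    obtain ⟨g, hg0, hgmin⟩ := posMin
      (fun p : Fin m × Fin m => if p.1 = p.2 then 1 else Complex.abs (μ' p.1 - μ' p.2))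
      (by
        intro p
        by_cases hp : p.1 = p.2
        · simp [hp]
        · simp only [hp, if_false]
          exact AbsoluteValue.pos _ (sub_ne_zero.mpr fun h => hp (hinj' h)))
    have hgap : ∀ i i', i ≠ i' → g ≤ Complex.abs (μ' i - μ' i') := by
      intro i i' hne
      have := hgmin (i, i')
      simpa [hne] using this
    obtain ⟨t₃, ht₃0, ht₃⟩ := posMin (fun i => (μ' i).re * tε - |(μ' i).im|)
      (fun i => by have := (hcond' i).2; linarith)
    set δ : ℝ := min (min (g/4) (r/2)) (min (t₃/(2*(1+tε))) (r*κ/(4*2^m))) with hδdef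
    have hδ0 : 0 < δ := by
      refine lt_min (lt_min (by linarith) (by linarith)) (lt_min (by positivity) (by positivity))
    have hδg : δ ≤ g/4 := le_trans (min_le_left _ _) (min_le_left _ _)
    have hδr : δ ≤ r/2 := le_trans (min_le_left _ _) (min_le_right _ _)
    have hδt : δ ≤ t₃/(2*(1+tε)) := le_trans (min_le_right _ _) (min_le_left _ _)
    have hδκ : δ ≤ r*κ/(4*2^m) := le_trans (min_le_right _ _) (min_le_right _ _)
    -- the s-free correction determinant
    set T₂ : ℂ → ℂ := fun z =>
      ((Matrix.diagonal (fun _ : Fin (m+1) => z)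
          - Matrix.diagonal (fun i => ((Fin.snoc (α := fun _ => ℝ) d' 0 i) : ℂ)) * A).updateRow
        (Fin.last m) (fun j => A (Fin.last m) j)).det with hT₂
    -- choice of the last diagonal entry s
    obtain ⟨s₁, hs₁0, hs₁⟩ := posMin
      (fun i => δ^(m+1) / (1 + Complex.abs (T₂ (μ' i))))
      (fun i => by positivity)
    set Pd : ℝ := ∏ i, d' i with hPdDef
    have hPd : 0 < Pd := Finset.prod_pos fun i _ => hd' i
    set Pre : ℝ := ∏ i, ((μ' i).re / 2) with hPreDef
    have hPre0 : 0 < Pre := Finset.prod_pos fun i _ => by linarith [(hcond' i).1]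
    set s₂ : ℝ := ((r/2) * Pre) / (2 * (Pd * ρA)) with hs₂def
    have hs₂0 : 0 < s₂ := by positivity
    set s : ℝ := min s₁ s₂ with hsdef
    have hs0 : 0 < s := lt_min hs₁0 hs₂0
    -- the diagonal
    set d : Fin (m+1) → ℝ := Fin.snoc d' s with hddef
    have hd : ∀ i, 0 < d i := by
      intro i
      refine Fin.lastCases ?_ ?_ i
      · simp [hddef, Fin.snoc_last, hs0]
      · intro j; simp [hddef, Fin.snoc_castSucc]; exact hd' j
    set M : Matrix (Fin (m+1)) (Fin (m+1)) ℂ := Matrix.diagonal (fun i => (d i : ℂ)) * A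
      with hMdef
    set p : Polynomial ℂ := M.charpoly with hpdef
    have hpm : p.Monic := Matrix.charpoly_monic M
    have hpd : p.natDegree = m+1 := by
      rw [hpdef, Matrix.charpoly_natDegree_eq_dim, Fintype.card_fin]
    obtain ⟨q', hq'def⟩ : ∃ q, q = (Matrix.diagonal (fun i => (d' i : ℂ)) * A₁).charpoly :=
      ⟨_, rfl⟩
    rw [← hq'def] at hq'
    -- THE KEY EVALUATION IDENTITY
    have hkey : ∀ z : ℂ, p.eval z = z * q'.eval z - s * T₂ z := by
      intro z
      rw [hpdef, evalCharpoly]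
      set W : Matrix (Fin (m+1)) (Fin (m+1)) ℂ := Matrix.diagonal (fun _ => z) - M with hW
      have hrow : W (Fin.last m)
          = Pi.single (Fin.last m) z + (-(s:ℂ)) • (fun j => A (Fin.last m) j) := by
        funext j
        have hWlast : W (Fin.last m) j
            = (if (Fin.last m) = j then z else 0) - (s:ℂ) * A (Fin.last m) j := by
          simp [hW, hMdef, Matrix.sub_apply, Matrix.diagonal_mul, Matrix.diagonal_apply,
            hddef, Fin.snoc_last]
        rw [show (W (Fin.last m)) j = W (Fin.last m) j from rfl, hWlast]
        by_cases hj : (Fin.last m) = j <;>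
          simp [Pi.single_apply, hj, eq_comm] <;> ring
      have hlastrow : W = W.updateRow (Fin.last m)
          (Pi.single (Fin.last m) z + (-(s:ℂ)) • (fun j => A (Fin.last m) j)) := by
        conv_lhs => rw [← Matrix.updateRow_eq_self W (Fin.last m)]
        rw [hrow]
      rw [hlastrow, Matrix.det_updateRow_add, Matrix.det_updateRow_smul, detLastRow]
      have hsub : W.submatrix Fin.castSucc Fin.castSucc
          = Matrix.diagonal (fun _ : Fin m => z) - Matrix.diagonal (fun i => (d' i : ℂ)) * A₁ := by
        ext i j
        by_cases hij : i = j <;>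
          simp [hW, hMdef, hA₁, Matrix.sub_apply, Matrix.submatrix_apply, Matrix.diagonal_mul,
            Matrix.diagonal_apply, hddef, Fin.snoc_castSucc, hij, Fin.castSucc_inj]
      have hVeq : W.updateRow (Fin.last m) (fun j => A (Fin.last m) j)
          = (Matrix.diagonal (fun _ : Fin (m+1) => z)
            - Matrix.diagonal (fun i => ((Fin.snoc (α := fun _ => ℝ) d' 0 i) : ℂ)) * A).updateRow
              (Fin.last m) (fun j => A (Fin.last m) j) := by
        ext i j
        refine Fin.lastCases ?_ ?_ i
        · simp [Matrix.updateRow_self]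
        · intro i'
          have hne : (Fin.castSucc i' : Fin (m+1)) ≠ Fin.last m := (Fin.castSucc_lt_last i').ne
          rw [Matrix.updateRow_ne hne, Matrix.updateRow_ne hne]
          simp [hW, hMdef, Matrix.sub_apply, Matrix.diagonal_mul, hddef, Fin.snoc_castSucc]
      rw [hsub, hVeq, ← evalCharpoly, ← hq'def, hT₂]
      beta_reduce
      push_cast
      ring
    -- eigenvalues of the small block kill q'
    have hq'zero : ∀ i, q'.eval (μ' i) = 0 := by
      intro i
      rw [hq', eval_prod]
      exact Finset.prod_eq_zero (Finset.mem_univ i) (by simp)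
    -- evaluation bound at the old eigenvalues
    have heval : ∀ i, Complex.abs (p.eval (μ' i)) ≤ δ^(m+1) := by
      intro i
      rw [hkey, hq'zero, mul_zero, zero_sub, map_neg_eq_map, _root_.map_mul, Complex.abs_ofReal,
        abs_of_pos hs0]
      have h1 : s ≤ δ^(m+1) / (1 + Complex.abs (T₂ (μ' i))) := by
        exact le_trans (min_le_left _ _) (hs₁ i)
      have h2 : 0 ≤ Complex.abs (T₂ (μ' i)) := AbsoluteValue.nonneg _ _
      calc s * Complex.abs (T₂ (μ' i))
          ≤ (δ^(m+1) / (1 + Complex.abs (T₂ (μ' i)))) * Complex.abs (T₂ (μ' i)) :=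
            mul_le_mul_of_nonneg_right h1 h2
        _ ≤ δ^(m+1) := by
            rw [div_mul_eq_mul_div, div_le_iff₀ (by linarith)]
            nlinarith [pow_pos hδ0 (m+1)]
    -- factor the characteristic polynomial
    obtain ⟨ν, hν⟩ := existsProdForm p hpm (m+1) hpd
    have habs : ∀ y : ℂ, Complex.abs (p.eval y) = ∏ j, Complex.abs (y - ν j) := by
      intro y
      rw [hν, eval_prod, map_prod]
      simp
    -- matching roots to old eigenvalues
    have hclose : ∀ i, ∃ j, Complex.abs (μ' i - ν j) ≤ δ := by
      intro i
      apply extractClose (f := fun j => Complex.abs (μ' i - ν j)) δ hδ0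
      rw [Fintype.card_fin, ← habs]
      exact heval i
    choose jm hjm using hclose
    have htri : ∀ (i i' : Fin m), ν (jm i) = ν (jm i') → Complex.abs (μ' i - μ' i') ≤ 2*δ := by
      intro i i' hii
      have e : μ' i - μ' i' = (μ' i - ν (jm i)) - (μ' i' - ν (jm i')) := by
        rw [hii]; ring
      calc Complex.abs (μ' i - μ' i')
          ≤ Complex.abs (μ' i - ν (jm i)) + Complex.abs (μ' i' - ν (jm i')) := by
            rw [e, show (μ' i - ν (jm i)) - (μ' i' - ν (jm i'))
              = (μ' i - ν (jm i)) + (ν (jm i') - μ' i') from by ring]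
            refine le_trans (Complex.abs.add_le _ _) ?_
            rw [Complex.abs.map_sub (ν (jm i')) (μ' i')]
        _ ≤ 2*δ := by linarith [hjm i, hjm i']
    have hjminj : Function.Injective jm := by
      intro i i' hii
      by_contra hne
      have h4 := hgap i i' hne
      have h5 := htri i i' (congrArg ν hii)
      linarith
    have hcardim : (Finset.image jm Finset.univ).card = m := by
      rw [Finset.card_image_of_injective _ hjminj, Finset.card_univ, Fintype.card_fin]
    have hsd : (Finset.univ \ Finset.image jm Finset.univ).card = 1 := by
      rw [Finset.card_sdiff_of_subset (Finset.subset_univ _), Finset.card_univ, Fintype.card_fin, hcardim]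
      omega
    obtain ⟨j₀, hj₀⟩ := Finset.card_eq_one.mp hsd
    have hj₀nm : j₀ ∉ Finset.image jm Finset.univ := by
      have hmem : j₀ ∈ Finset.univ \ Finset.image jm Finset.univ := by
        rw [hj₀]; exact Finset.mem_singleton_self j₀
      exact (Finset.mem_sdiff.mp hmem).2
    have huniv : insert j₀ (Finset.image jm Finset.univ) = Finset.univ := by
      apply Finset.eq_univ_of_card
      rw [Finset.card_insert_of_notMem hj₀nm, hcardim, Fintype.card_fin]
    have prodν : ∏ j, ν j = ν j₀ * ∏ i, ν (jm i) := by
      rw [← huniv, Finset.prod_insert hj₀nm,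
        Finset.prod_image (fun x _ y _ h => hjminj h)]
    -- determinant of M is a positive real
    have hdetM : M.det = ((Pd * s * ρA : ℝ) : ℂ) := by
      rw [hMdef, Matrix.det_mul, Matrix.det_diagonal]
      have h1 : ∏ i, ((d i : ℝ) : ℂ) = ((∏ i, d i : ℝ) : ℂ) := by
        rw [Complex.ofReal_prod]
      have h2 : ∏ i, d i = Pd * s := by
        rw [hddef, hPdDef]
        exact Fin.prod_snoc s d'
      rw [h1, h2, hAdet, ← Complex.ofReal_mul]
    -- the product of all the roots
    have hprodall : ∏ j, ν j = ((Pd * s * ρA : ℝ) : ℂ) := by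
      have h1 : p.eval 0 = (-1)^(m+1) * ∏ j, ν j := by
        rw [hν, eval_prod]
        simp only [eval_sub, eval_X, eval_C, zero_sub]
        have : ∀ j : Fin (m+1), -ν j = (-1) * ν j := fun j => by ring
        simp_rw [this]
        rw [Finset.prod_mul_distrib, Finset.prod_const, Finset.card_univ, Fintype.card_fin]
      have h2 : p.eval 0 = (-1)^(m+1) * M.det := by
        rw [hpdef, evalCharpoly]
        have hz : Matrix.diagonal (fun _ : Fin (m+1) => (0:ℂ)) - M = -M := by
          rw [Matrix.diagonal_zero, zero_sub]
        rw [hz, Matrix.det_neg, Fintype.card_fin]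
      have h3 := h1.symm.trans h2
      have h4 : ((-1:ℂ)^(m+1)) ≠ 0 := pow_ne_zero _ (by norm_num)
      have h5 := mul_left_cancel₀ h4 h3
      rw [h5, hdetM]
    have hprodν : ν j₀ * ∏ i, ν (jm i) = ((Pd * s * ρA : ℝ) : ℂ) := by
      rw [← prodν, hprodall]
    -- real/imaginary bounds for matched roots
    have hreim : ∀ i, |(μ' i - ν (jm i)).re| ≤ δ ∧ |(μ' i - ν (jm i)).im| ≤ δ := fun i =>
      ⟨le_trans (Complex.abs_re_le_norm _) (hjm i), le_trans (Complex.abs_im_le_norm _) (hjm i)⟩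
    have hνre : ∀ i, (μ' i).re - δ ≤ (ν (jm i)).re := by
      intro i
      have h1 := abs_le.mp (hreim i).1
      have h2 : (μ' i - ν (jm i)).re = (μ' i).re - (ν (jm i)).re := Complex.sub_re _ _
      rw [h2] at h1
      linarith [h1.2]
    have hνrehalf : ∀ i, (μ' i).re / 2 ≤ (ν (jm i)).re := by
      intro i
      have := hνre i
      have h2 := hr i
      linarith
    have hνre0 : ∀ i, 0 < (ν (jm i)).re := by
      intro i
      have := hνrehalf i
      have := (hcond' i).1
      linarith
    have hνim : ∀ i, |(ν (jm i)).im| ≤ |(μ' i).im| + δ := by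
      intro i
      have h1 := abs_le.mp (hreim i).2
      have h2 : (μ' i - ν (jm i)).im = (μ' i).im - (ν (jm i)).im := Complex.sub_im _ _
      rw [h2] at h1
      have h3 := le_abs_self (μ' i).im
      have h4 := neg_abs_le (μ' i).im
      apply abs_le.mpr
      constructor <;> linarith [h1.1, h1.2]
    have hgoodm : ∀ i, 0 < (ν (jm i)).re ∧ |(ν (jm i)).im| < (ν (jm i)).re * tε := by
      intro i
      refine ⟨hνre0 i, ?_⟩
      have h1 := hνim i
      have h2 : 2*δ*(1+tε) ≤ t₃ := by
        have := hδt
        have h3 : (0:ℝ) < 2*(1+tε) := by linarith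
        rw [le_div_iff₀ h3] at this
        linarith
      have h3 : t₃ ≤ (μ' i).re * tε - |(μ' i).im| := ht₃ i
      have h4 := hνre i
      have h5 : ((μ' i).re - δ) * tε ≤ (ν (jm i)).re * tε :=
        mul_le_mul_of_nonneg_right h4 ht.le
      nlinarith [hδ0, ht]
    -- matched roots are nonzero and not too small
    have habsν : ∀ i, (μ' i).re / 2 ≤ Complex.abs (ν (jm i)) := fun i =>
      le_trans (hνrehalf i) (Complex.re_le_norm _)
    have hνne : ∀ i, ν (jm i) ≠ 0 := by
      intro i h
      have := hνre0 i
      rw [h] at this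
      simp at this
    have hμ'ne : ∀ i, μ' i ≠ 0 := by
      intro i h
      have := (hcond' i).1
      rw [h] at this
      simp at this
    -- the product correction factor w
    set w : ℂ := ∏ i, (μ' i / ν (jm i)) with hwdef
    have hwfac : ∀ i, Complex.abs (μ' i / ν (jm i) - 1) ≤ 2*δ/r := by
      intro i
      rw [div_sub_one (hνne i)]
      rw [map_div₀]
      have hb : r/2 ≤ Complex.abs (ν (jm i)) := le_trans (by linarith [hr i]) (habsν i)
      calc Complex.abs (μ' i - ν (jm i)) / Complex.abs (ν (jm i))
          ≤ δ / (r/2) := by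
            apply div_le_div₀ hδ0.le (hjm i) (by linarith) hb
        _ = 2*δ/r := by field_simp
    have hx1 : 2*δ/r ≤ 1 := by
      rw [div_le_one hr0]
      linarith
    have hw1 : Complex.abs (w - 1) ≤ κ/2 := by
      have h1 := prodSubOneLe Finset.univ (fun i => μ' i / ν (jm i)) (2*δ/r)
        (by positivity) (fun i _ => hwfac i)
      have h2 := onAddPowLe m (2*δ/r) (by positivity) hx1
      rw [Finset.card_univ, Fintype.card_fin] at h1
      have h2m : (0:ℝ) < 2^m := by positivity
      have h3 : (2:ℝ)^m * (2*δ/r) ≤ κ/2 := by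
        calc (2:ℝ)^m*(2*δ/r) ≤ 2^m*(2*(r*κ/(4*2^m))/r) := by
              gcongr
            _ = κ/2 := by field_simp; ring
      have hxnn : (0:ℝ) ≤ 2*δ/r := by positivity
      rw [← hwdef] at h1
      nlinarith
    have hwre : 1 - κ/2 ≤ w.re ∧ |w.im| ≤ κ/2 := by
      have h1 : |(w-1).re| ≤ κ/2 := le_trans (Complex.abs_re_le_norm _) hw1
      have h2 : |(w-1).im| ≤ κ/2 := le_trans (Complex.abs_im_le_norm _) hw1
      rw [Complex.sub_re, Complex.one_re] at h1
      rw [Complex.sub_im, Complex.one_im] at h2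
      have h3 := abs_le.mp h1
      constructor
      · linarith [h3.1]
      · simpa using h2
    have hwre0 : 0 < w.re := by
      have := hwre.1
      linarith
    have hwne : w ≠ 0 := by
      intro h
      rw [h] at hwre0
      simp at hwre0
    have hQw : w * ∏ i, ν (jm i) = ∏ i, μ' i := by
      rw [hwdef, ← Finset.prod_mul_distrib]
      apply Finset.prod_congr rfl
      intro i _
      exact div_mul_cancel₀ _ (hνne i)
    set ρ' : ℝ := (∏ i, μ' i).re with hρ'def
    have hρ'0 : 0 < ρ' := hP're
    have hP'c : ∏ i, μ' i = (ρ' : ℂ) := by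
      apply Complex.ext
      · simp [hρ'def]
      · simpa using hP'im
    set ρ₀ : ℝ := Pd*s*ρA/ρ' with hρ₀def
    have hρ₀ : 0 < ρ₀ := by positivity
    have hνj₀ : ν j₀ = (ρ₀ : ℂ) * w := by
      have hkey2 : ν j₀ * (ρ' : ℂ) = ((Pd*s*ρA : ℝ) : ℂ) * w := by
        calc ν j₀ * (ρ':ℂ) = ν j₀ * ∏ i, μ' i := by rw [hP'c]
          _ = ν j₀ * (w * ∏ i, ν (jm i)) := by rw [hQw]
          _ = w * (ν j₀ * ∏ i, ν (jm i)) := by ring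
          _ = w * ((Pd*s*ρA:ℝ):ℂ) := by rw [hprodν]
          _ = ((Pd*s*ρA:ℝ):ℂ) * w := by ring
      have hρ'ne : ((ρ':ℝ):ℂ) ≠ 0 := Complex.ofReal_ne_zero.mpr (ne_of_gt hρ'0)
      rw [hρ₀def, Complex.ofReal_div, div_mul_eq_mul_div, eq_div_iff hρ'ne]
      linear_combination hkey2
    -- real/imaginary parts of the remaining root
    have hre_j₀ : (ν j₀).re = ρ₀ * w.re ∧ (ν j₀).im = ρ₀ * w.im := by
      rw [hνj₀]
      constructor <;>
        simp [Complex.mul_re, Complex.mul_im, Complex.ofReal_re, Complex.ofReal_im]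
    have hgood₀ : 0 < (ν j₀).re ∧ |(ν j₀).im| < (ν j₀).re * tε := by
      rw [hre_j₀.1, hre_j₀.2]
      constructor
      · exact mul_pos hρ₀ hwre0
      · rw [abs_mul, abs_of_pos hρ₀]
        have h1 : |w.im| ≤ κ/2 := hwre.2
        have h2 : 1 - κ/2 ≤ w.re := hwre.1
        have h3 : (1 - κ/2) * tε ≤ w.re * tε := mul_le_mul_of_nonneg_right h2 ht.le
        have h4 : |w.im| < w.re * tε := by nlinarith [hκε, ht, hκ0]
        calc ρ₀ * |w.im| < ρ₀ * (w.re * tε) := mul_lt_mul_of_pos_left h4 hρ₀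
          _ = ρ₀ * w.re * tε := by ring
    -- the remaining root is small in absolute value
    have hj₀small : Complex.abs (ν j₀) < r/2 := by
      have habsQ : Pre ≤ Complex.abs (∏ i, ν (jm i)) := by
        rw [map_prod, hPreDef]
        apply Finset.prod_le_prod
        · intro i _; linarith [(hcond' i).1]
        · intro i _; exact habsν i
      have hQpos : 0 < Complex.abs (∏ i, ν (jm i)) := lt_of_lt_of_le hPre0 habsQ
      have h1 : Complex.abs (ν j₀) * Complex.abs (∏ i, ν (jm i)) = Pd*s*ρA := by
        rw [← _root_.map_mul, hprodν, Complex.abs_ofReal, abs_of_pos (by positivity)]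
      have h2 : Pd*s*ρA ≤ Pd*ρA*s₂ := by
        have hss₂ : s ≤ s₂ := min_le_right _ _
        calc Pd*s*ρA = (Pd*ρA)*s := by ring
          _ ≤ (Pd*ρA)*s₂ := mul_le_mul_of_nonneg_left hss₂ (by positivity)
          _ = Pd*ρA*s₂ := by ring
      have h3 : Pd*ρA*s₂ = (r/2)*Pre/2 := by
        rw [hs₂def]
        field_simp
      have h4 : Complex.abs (ν j₀) * Complex.abs (∏ i, ν (jm i))
          < (r/2) * Complex.abs (∏ i, ν (jm i)) := by
        rw [h1]
        calc Pd*s*ρA ≤ (r/2)*Pre/2 := by rw [← h3]; exact h2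
          _ < (r/2)*Pre := by nlinarith
          _ ≤ (r/2) * Complex.abs (∏ i, ν (jm i)) := by nlinarith
      exact lt_of_mul_lt_mul_right h4 (AbsoluteValue.nonneg _ _)
    -- every index is the remaining one or a matched one
    have hcases : ∀ j : Fin (m+1), j = j₀ ∨ ∃ i, jm i = j := by
      intro j
      have hj : j ∈ insert j₀ (Finset.image jm Finset.univ) := huniv ▸ Finset.mem_univ j
      rcases Finset.mem_insert.mp hj with h | h
      · left; exact h
      · right
        obtain ⟨i, _, hi⟩ := Finset.mem_image.mp h
        exact ⟨i, hi⟩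
    have hbig : ∀ i, r/2 ≤ Complex.abs (ν (jm i)) := by
      intro i
      have := habsν i
      have := hr i
      linarith
    -- injectivity of the root enumeration
    have hνinj : Function.Injective ν := by
      intro j j' heq
      rcases hcases j with hj | ⟨i, hi⟩ <;> rcases hcases j' with hj' | ⟨i', hi'⟩
      · rw [hj, hj']
      · exfalso
        rw [hj] at heq
        have h2 := hbig i'
        rw [hi'] at h2
        rw [← heq] at h2
        linarith [hj₀small]
      · exfalso
        rw [hj'] at heq
        have h2 := hbig i
        rw [hi] at h2
        rw [heq] at h2
        linarith [hj₀small]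
      · have hii : i = i' := by
          by_contra hne
          have h4 := hgap i i' hne
          have h5 : ν (jm i) = ν (jm i') := by rw [hi, hi', heq]
          have h6 := htri i i' h5
          linarith
        rw [← hi, ← hi', hii]
    -- conclusion
    refine ⟨d, hd, ν, hνinj, ?_, ?_, ?_⟩
    · intro jj
      rcases hcases jj with h | ⟨i, hi⟩
      · rw [h]; exact hgood₀
      · rw [← hi]; exact hgoodm i
    · rw [hprodall]
      constructor
      · simp
      · simp
        positivity
    · rw [← hMdef, ← hpdef]
      exact hν

/-- **Hershkowitz.** Let `A` be a complex square matrix with positive (real)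
leading principal minors and let `ε > 0`. Then there exists a positive real
diagonal matrix `D` such that the eigenvalues of `D * A` are simple and the
principal argument of every eigenvalue is less than `ε` in absolute value. -/
theorem hershkowitz_small_argument {n : ℕ} (A : Matrix (Fin n) (Fin n) ℂ)
    (hminors : ∀ k : Fin n,
      ((A.submatrix (Fin.castLE k.isLt) (Fin.castLE k.isLt)).det.im = 0 ∧
        0 < (A.submatrix (Fin.castLE k.isLt) (Fin.castLE k.isLt)).det.re))
    (ε : ℝ) (hε : 0 < ε) :
    ∃ d : Fin n → ℝ, (∀ i, 0 < d i) ∧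
      ∃ μ : Fin n → ℂ, Function.Injective μ ∧ (∀ i, |(μ i).arg| < ε) ∧
        (Matrix.diagonal (fun i => (d i : ℂ)) * A).charpoly = ∏ i, (X - C (μ i)) := by
  
  have hpi := Real.pi_pos
  set ε' : ℝ := min (ε/2) (Real.pi/4) with hε'def
  have hε'0 : 0 < ε' := lt_min (by linarith) (by linarith)
  have hε'2 : ε' < Real.pi/2 := lt_of_le_of_lt (min_le_right _ _) (by linarith)
  obtain ⟨d, hd, μ, hinj, hcond, _, hchar⟩ := hershAux n A hminors ε' hε'0 hε'2
  refine ⟨d, hd, μ, hinj, ?_, hchar⟩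
  intro i
  obtain ⟨hre, him⟩ := hcond i
  have harg2 : |(μ i).arg| < Real.pi/2 := Complex.abs_arg_lt_pi_div_two_iff.mpr (Or.inl hre)
  have hargub : (μ i).arg < Real.pi/2 := lt_of_le_of_lt (le_abs_self _) harg2
  have harglb : -(Real.pi/2) < (μ i).arg := by
    have := neg_abs_le (μ i).arg
    linarith [harg2]
  have htanarg : Real.tan (μ i).arg = (μ i).im / (μ i).re := Complex.tan_arg _
  have htan_abs : Real.tan |(μ i).arg| = |Real.tan (μ i).arg| := by
    rcases le_or_gt 0 ((μ i).arg) with h | h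
    · rw [abs_of_nonneg h,
        abs_of_nonneg (Real.tan_nonneg_of_nonneg_of_le_pi_div_two h hargub.le)]
    · have htneg : Real.tan (μ i).arg < 0 :=
        Real.tan_neg_of_neg_of_pi_div_two_lt h harglb
      rw [abs_of_neg h, Real.tan_neg, abs_of_neg htneg]
  have hlt : Real.tan |(μ i).arg| < Real.tan ε' := by
    rw [htan_abs, htanarg, abs_div, abs_of_pos hre, div_lt_iff₀ hre]
    calc |(μ i).im| < (μ i).re * Real.tan ε' := him
      _ = Real.tan ε' * (μ i).re := by ring
  have hfin : |(μ i).arg| < ε' := by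
    by_contra hcon
    push_neg at hcon
    have hmem1 : ε' ∈ Set.Ioo (-(Real.pi/2)) (Real.pi/2) := ⟨by linarith, hε'2⟩
    have hmem2 : |(μ i).arg| ∈ Set.Ioo (-(Real.pi/2)) (Real.pi/2) :=
      ⟨by linarith [abs_nonneg ((μ i).arg)], harg2⟩
    have := Real.strictMonoOn_tan.monotoneOn hmem1 hmem2 hcon
    linarith
  have : ε' ≤ ε/2 := min_le_left _ _
  linarith
end

section
/- Let A be an n×n real Hurwitz matrix (n ≥ 2) with strictly negative diagonal entries, let A_{n−1} denote its leading (n−1)×(n−1) submatrix, and let B_{n−1} denote the leading (n−1)×(n−1) submatrix of A⁻¹. Then A is diagonally stable (there exists an n×n diagonal matrix D with positive diagonal entries such that AᵀD + DA is negative definite) if and only if there exists an (n−1)×(n−1) diagonal matrix D' with positive diagonal entries such that both A_{n−1}ᵀD' + D'A_{n−1} and B_{n−1}ᵀD' + D'B_{n−1} are negative definite. -/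
open Matrix

noncomputable def lyap {ι : Type*} [Fintype ι] [DecidableEq ι] (X : Matrix ι ι ℝ) (d : ι → ℝ) :
    Matrix ι ι ℝ := -(Xᵀ * Matrix.diagonal d + Matrix.diagonal d * X)

lemma lyap_apply {ι : Type*} [Fintype ι] [DecidableEq ι] (X : Matrix ι ι ℝ) (d : ι → ℝ)
    (i j : ι) : lyap X d i j = -(X j i * d j + d i * X i j) := by
  simp [lyap, Matrix.mul_diagonal, Matrix.diagonal_mul]

lemma lyap_transpose {ι : Type*} [Fintype ι] [DecidableEq ι] (X : Matrix ι ι ℝ) (d : ι → ℝ) :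
    (lyap X d)ᵀ = lyap X d := by
  ext i j; rw [transpose_apply, lyap_apply, lyap_apply]; ring

lemma conjT_eq_transpose {ι κ : Type*} (M : Matrix ι κ ℝ) : Mᴴ = Mᵀ := by
  ext i j; simp [conjTranspose_apply]

lemma lyap_isHermitian {ι : Type*} [Fintype ι] [DecidableEq ι] (X : Matrix ι ι ℝ) (d : ι → ℝ) :
    (lyap X d).IsHermitian := by
  unfold Matrix.IsHermitian
  rw [conjT_eq_transpose, lyap_transpose]

lemma posDef_iff_quad {ι : Type*} [Fintype ι] {M : Matrix ι ι ℝ} (h : M.IsHermitian) :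
    M.PosDef ↔ ∀ x : ι → ℝ, x ≠ 0 → 0 < x ⬝ᵥ M *ᵥ x := by
  constructor
  · rintro hM x hx; simpa using hM.dotProduct_mulVec_pos hx
  · intro h2; exact PosDef.of_dotProduct_mulVec_pos h fun x hx => by simpa using h2 x hx

lemma lyap_quad {ι : Type*} [Fintype ι] [DecidableEq ι] (X : Matrix ι ι ℝ) (d : ι → ℝ)
    (x : ι → ℝ) :
    x ⬝ᵥ (lyap X d) *ᵥ x = -(2 * ∑ i, d i * x i * (X *ᵥ x) i) := by
  unfold lyap
  rw [neg_mulVec, dotProduct_neg, add_mulVec, dotProduct_add,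
    ← mulVec_mulVec, ← mulVec_mulVec, dotProduct_mulVec x Xᵀ, vecMul_transpose]
  simp only [dotProduct, mulVec_diagonal, Finset.mul_sum]
  congr 1
  rw [← Finset.sum_add_distrib]
  exact Finset.sum_congr rfl fun i _ => by ring

lemma posDef_submatrix_inj {ι κ : Type*} [Fintype ι] [Fintype κ] [DecidableEq ι] [DecidableEq κ]
    {M : Matrix ι ι ℝ} (hM : M.PosDef) {f : κ → ι} (hf : Function.Injective f) :
    (M.submatrix f f).PosDef := by
  have hherm : (M.submatrix f f).IsHermitian := by
    unfold Matrix.IsHermitian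
    rw [conjTranspose_submatrix, hM.isHermitian.eq]
  rw [posDef_iff_quad hherm]
  intro x hx
  set E : Matrix ι κ ℝ := fun a i => if f i = a then 1 else 0 with hE
  have hsub : M.submatrix f f = Eᵀ * M * E := by
    ext i j
    simp only [Matrix.mul_apply, transpose_apply, hE, submatrix_apply]
    change M (f i) (f j) = (Eᵀ * M * E) i j
    simp only [Matrix.mul_apply, transpose_apply]
    simp [hE, ite_mul, mul_ite, Finset.sum_ite_eq, Finset.sum_ite_eq']
  have hEx : ∀ i, (E *ᵥ x) (f i) = x i := by
    intro i
    simp only [mulVec, dotProduct, hE]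
    rw [Finset.sum_eq_single i]
    · simp
    · intro b _ hb
      have : f b ≠ f i := fun h => hb (hf h)
      simp [this]
    · simp
  have hy0 : E *ᵥ x ≠ 0 := by
    intro h
    apply hx
    funext i
    have := congrFun h (f i)
    rw [hEx i] at this
    exact this
  have hquad : x ⬝ᵥ (M.submatrix f f) *ᵥ x = (E *ᵥ x) ⬝ᵥ M *ᵥ (E *ᵥ x) := by
    rw [hsub, Matrix.mul_assoc, ← mulVec_mulVec, dotProduct_mulVec x Eᵀ, vecMul_transpose,
      mulVec_mulVec]
  rw [hquad]
  simpa using hM.dotProduct_mulVec_pos hy0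

lemma posDef_conj {ι : Type*} [Fintype ι] [DecidableEq ι] {M : Matrix ι ι ℝ}
    (hM : M.PosDef) {X : Matrix ι ι ℝ} (hX : IsUnit X.det) : (Xᵀ * M * X).PosDef := by
  have hherm : (Xᵀ * M * X).IsHermitian := by
    have := isHermitian_conjTranspose_mul_mul X hM.isHermitian
    rwa [conjT_eq_transpose] at this
  rw [posDef_iff_quad hherm]
  intro x hx
  have hXx : X *ᵥ x ≠ 0 := by
    intro h
    apply hx
    have : X⁻¹ *ᵥ (X *ᵥ x) = x := by
      rw [mulVec_mulVec, Matrix.nonsing_inv_mul X hX, one_mulVec]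
    rw [h, mulVec_zero] at this
    exact this.symm
  have : x ⬝ᵥ (Xᵀ * M * X) *ᵥ x = (X *ᵥ x) ⬝ᵥ M *ᵥ (X *ᵥ x) := by
    rw [Matrix.mul_assoc, ← mulVec_mulVec, dotProduct_mulVec x Xᵀ, vecMul_transpose,
      mulVec_mulVec]
  rw [this]
  simpa using hM.dotProduct_mulVec_pos hXx

lemma dot_symm {ι : Type*} [Fintype ι] {P : Matrix ι ι ℝ} (hP : Pᵀ = P) (v w : ι → ℝ) :
    v ⬝ᵥ P *ᵥ w = w ⬝ᵥ P *ᵥ v := by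
  rw [dotProduct_mulVec v P w]
  conv_lhs => rw [← hP]
  rw [vecMul_transpose, dotProduct_comm]

lemma schur_pos {k : ℕ} {R : Matrix (Fin k) (Fin k) ℝ} (hR : R.PosDef) (hRsym : Rᵀ = R)
    (w : Fin k → ℝ) (α : ℝ) (hschur : 0 < α - w ⬝ᵥ R⁻¹ *ᵥ w) (y : Fin k → ℝ) (t : ℝ)
    (hyt : y ≠ 0 ∨ t ≠ 0) :
    0 < y ⬝ᵥ R *ᵥ y + 2 * t * (w ⬝ᵥ y) + t ^ 2 * α := by
  have hdet : IsUnit R.det := hR.det_pos.ne'.isUnit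
  have hRP : R * R⁻¹ = 1 := Matrix.mul_nonsing_inv R hdet
  have hPsym : (R⁻¹)ᵀ = R⁻¹ := by
    rw [Matrix.transpose_nonsing_inv, hRsym]
  set P := R⁻¹ with hPdef
  set z := y + t • (P *ᵥ w) with hz
  have hRz : R *ᵥ z = R *ᵥ y + t • w := by
    rw [hz, mulVec_add, mulVec_smul, mulVec_mulVec, hRP, one_mulVec]
  have hkey : y ⬝ᵥ R *ᵥ y + 2 * t * (w ⬝ᵥ y) + t ^ 2 * α
      = z ⬝ᵥ R *ᵥ z + t ^ 2 * (α - w ⬝ᵥ P *ᵥ w) := by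
    rw [hRz, hz]
    have e1 : (P *ᵥ w) ⬝ᵥ (R *ᵥ y) = w ⬝ᵥ y := by
      rw [dotProduct_mulVec, ← hRsym, vecMul_transpose, mulVec_mulVec, hRP, one_mulVec]
    have e2 : (P *ᵥ w) ⬝ᵥ w = w ⬝ᵥ P *ᵥ w := dotProduct_comm _ _
    rw [dotProduct_add, add_dotProduct, add_dotProduct, smul_dotProduct, smul_dotProduct,
      dotProduct_smul, dotProduct_smul, e1, e2, dotProduct_comm y w]
    simp only [smul_eq_mul]
    ring
  rw [hkey]
  rcases eq_or_ne t 0 with ht | ht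
  · have hy : y ≠ 0 := by
      rcases hyt with h | h
      · exact h
      · exact absurd ht h
    have hz0 : z = y := by rw [hz, ht, zero_smul, add_zero]
    rw [hz0, ht]
    have := hR.dotProduct_mulVec_pos hy
    simpa using this
  · have h1 : 0 ≤ z ⬝ᵥ R *ᵥ z := by
      have := hR.posSemidef.dotProduct_mulVec_nonneg z
      simpa using this
    have h2 : 0 < t ^ 2 * (α - w ⬝ᵥ P *ᵥ w) := by positivity
    linarith


lemma core {k : ℕ} {R : Matrix (Fin k) (Fin k) ℝ} (hR : R.PosDef) (hRsym : Rᵀ = R)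
    (u c : Fin k → ℝ) {a' : ℝ} (ha' : 0 < a')
    (hS : ∀ y : Fin k → ℝ, y ≠ 0 → 2 * ((u ⬝ᵥ y) * (c ⬝ᵥ y)) < a' * (y ⬝ᵥ R *ᵥ y)) :
    ∃ t : ℝ, 0 < t ∧ (u + t • c) ⬝ᵥ R⁻¹ *ᵥ (u + t • c) < 2 * t * a' := by
  have hdet : IsUnit R.det := hR.det_pos.ne'.isUnit
  have hRP : R * R⁻¹ = 1 := Matrix.mul_nonsing_inv R hdet
  have hP : (R⁻¹).PosDef := hR.inv
  have hPsym : (R⁻¹)ᵀ = R⁻¹ := by rw [Matrix.transpose_nonsing_inv, hRsym]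
  set P := R⁻¹ with hPdef
  set p := u ⬝ᵥ P *ᵥ u with hp
  set q := c ⬝ᵥ P *ᵥ c with hq
  set r := u ⬝ᵥ P *ᵥ c with hr
  have hcu : c ⬝ᵥ P *ᵥ u = r := by rw [hr]; exact dot_symm hPsym c u
  have hexp : ∀ t : ℝ, (u + t • c) ⬝ᵥ P *ᵥ (u + t • c) = p + 2 * t * r + t ^ 2 * q := by
    intro t
    simp only [mulVec_add, mulVec_smul, dotProduct_add, add_dotProduct, dotProduct_smul,
      smul_dotProduct, smul_eq_mul]
    rw [hcu, ← hp, ← hq, ← hr]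
    ring
  have hp0 : 0 ≤ p := by
    have := hP.posSemidef.dotProduct_mulVec_nonneg u
    rw [hp]; simpa using this
  rcases eq_or_ne c 0 with hc | hc
  · -- case c = 0 : take t = (p+1)/(2a')
    have hq0 : q = 0 := by rw [hq, hc]; simp
    have hr0 : r = 0 := by rw [hr, hc]; simp
    have ht : (0:ℝ) < (p + 1) / (2 * a') := by positivity
    refine ⟨(p + 1) / (2 * a'), ht, ?_⟩
    rw [hexp, hq0, hr0]
    have h2 : 2 * ((p + 1) / (2 * a')) * a' = p + 1 := by field_simp
    rw [h2]
    linarith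
  · -- case c ≠ 0
    have hq0 : 0 < q := by
      have := hP.dotProduct_mulVec_pos hc
      rw [hq]; simpa using this
    set sp := Real.sqrt p with hspdef
    set sq := Real.sqrt q with hsqdef
    have hsp2 : sp * sp = p := Real.mul_self_sqrt hp0
    have hsq2 : sq * sq = q := Real.mul_self_sqrt hq0.le
    have hsq : 0 < sq := Real.sqrt_pos.mpr hq0
    have hsp0 : 0 ≤ sp := Real.sqrt_nonneg _
    have hstep : sp * sq < a' - r := by
      rcases le_or_gt (sp * sq + r) 0 with hsr | hsr
      · have : 0 ≤ sp * sq := mul_nonneg hsp0 hsq.le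
        linarith
      · have hu : u ≠ 0 := by
          intro h
          have hr0 : r = 0 := by rw [hr, h]; simp
          have hpz : p = 0 := by rw [hp, h]; simp
          have hspz : sp = 0 := by rw [hspdef, hpz, Real.sqrt_zero]
          rw [hspz, hr0] at hsr
          simp at hsr
        have hpp : 0 < p := by
          have := hP.dotProduct_mulVec_pos hu
          rw [hp]; simpa using this
        have hsp : 0 < sp := Real.sqrt_pos.mpr hpp
        set y := sq • (P *ᵥ u) + sp • (P *ᵥ c) with hy
        have hRy : R *ᵥ y = sq • u + sp • c := by
          simp only [hy, mulVec_add, mulVec_smul, mulVec_mulVec, hRP, one_mulVec]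
        have hy0 : y ≠ 0 := by
          intro h
          have h2 : sq • u + sp • c = 0 := by rw [← hRy, h, mulVec_zero]
          have h3 : sq * r + sp * q = 0 := by
            have := congrArg (fun v => v ⬝ᵥ P *ᵥ c) h2
            simpa [add_dotProduct, smul_dotProduct, smul_eq_mul, ← hr, ← hq] using this
          have h4 : sq * (sp * sq + r) = 0 := by
            have h5 : sq * (sp * sq + r) = sp * (sq * sq) + sq * r := by ring
            rw [h5, hsq2]
            linarith
          exact absurd h4 (mul_pos hsq hsr).ne'
        have e1 : u ⬝ᵥ y = sq * p + sp * r := by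
          rw [hy, dotProduct_add, dotProduct_smul, dotProduct_smul, ← hp, ← hr]
          simp [smul_eq_mul]
        have e2 : c ⬝ᵥ y = sq * r + sp * q := by
          rw [hy, dotProduct_add, dotProduct_smul, dotProduct_smul, hcu, ← hq]
          simp [smul_eq_mul]
        have e3 : y ⬝ᵥ R *ᵥ y = 2 * (p * q) + 2 * (sp * sq) * r := by
          rw [hRy, hy, add_dotProduct, smul_dotProduct, smul_dotProduct,
            dotProduct_add, dotProduct_add, dotProduct_smul, dotProduct_smul,
            dotProduct_smul, dotProduct_smul]
          have f1 : (P *ᵥ u) ⬝ᵥ u = p := by rw [hp]; exact dotProduct_comm _ _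
          have f2 : (P *ᵥ u) ⬝ᵥ c = r := by
            rw [← hcu]; exact dotProduct_comm _ _
          have f3 : (P *ᵥ c) ⬝ᵥ u = r := by
            rw [hr]; exact dotProduct_comm _ _
          have f4 : (P *ᵥ c) ⬝ᵥ c = q := by rw [hq]; exact dotProduct_comm _ _
          rw [f1, f2, f3, f4]
          simp only [smul_eq_mul]
          linear_combination p * hsq2 + q * hsp2
        have hSy := hS y hy0
        rw [e1, e2, e3] at hSy
        have hfac1 : 2 * ((sq * p + sp * r) * (sq * r + sp * q))
            = 2 * (sp * sq) * (sp * sq + r) ^ 2 := by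
          rw [← hsp2, ← hsq2]; ring
        have hfac2 : a' * (2 * (p * q) + 2 * (sp * sq) * r)
            = 2 * a' * (sp * sq) * (sp * sq + r) := by
          rw [← hsp2, ← hsq2]; ring
        rw [hfac1, hfac2] at hSy
        nlinarith [mul_pos (mul_pos hsp hsq) hsr, hSy]
    have har : 0 < a' - r := lt_of_le_of_lt (mul_nonneg hsp0 hsq.le) hstep
    have ht : 0 < (a' - r) / q := div_pos har hq0
    refine ⟨(a' - r) / q, ht, ?_⟩
    rw [hexp]
    have h6 : (a' - r) / q * q = a' - r := div_mul_cancel₀ _ hq0.ne'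
    have h5 : p * q < (a' - r) ^ 2 := by nlinarith [hstep, mul_nonneg hsp0 hsq.le, hsp2, hsq2]
    have h7 : p < (a' - r) / q * (a' - r) := by nlinarith [h5, h6, hq0, ht]
    have h8 : ((a' - r) / q) ^ 2 * q = (a' - r) / q * (a' - r) := by
      rw [pow_two, mul_assoc, h6]
    rw [h8]
    nlinarith [h7]

lemma block_inv {m : ℕ} (A Ainv : Matrix (Fin (m+1)) (Fin (m+1)) ℝ) (hAA : A * Ainv = 1)
    (ha : A (Fin.last m) (Fin.last m) ≠ 0)
    (S : Matrix (Fin m) (Fin m) ℝ)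
    (hSdef : ∀ i j, S i j = A (Fin.castSucc i) (Fin.castSucc j)
      - (A (Fin.last m) (Fin.last m))⁻¹ * A (Fin.castSucc i) (Fin.last m)
        * A (Fin.last m) (Fin.castSucc j)) :
    S * (Ainv.submatrix Fin.castSucc Fin.castSucc) = 1 := by
  ext i j
  have h0 : (A * Ainv) (Fin.castSucc i) (Fin.castSucc j)
      = (1 : Matrix (Fin (m+1)) (Fin (m+1)) ℝ) (Fin.castSucc i) (Fin.castSucc j) := by
    rw [hAA]
  have h1 : (A * Ainv) (Fin.last m) (Fin.castSucc j)
      = (1 : Matrix (Fin (m+1)) (Fin (m+1)) ℝ) (Fin.last m) (Fin.castSucc j) := by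
    rw [hAA]
  rw [mul_apply, Fin.sum_univ_castSucc] at h0 h1
  have hlast : (1 : Matrix (Fin (m+1)) (Fin (m+1)) ℝ) (Fin.last m) (Fin.castSucc j) = 0 := by
    rw [one_apply_ne]
    exact (Fin.castSucc_lt_last j).ne'
  rw [hlast] at h1
  have hone : (1 : Matrix (Fin (m+1)) (Fin (m+1)) ℝ) (Fin.castSucc i) (Fin.castSucc j)
      = (1 : Matrix (Fin m) (Fin m) ℝ) i j := by
    by_cases h : i = j
    · subst h; simp
    · rw [one_apply_ne (by simpa [Fin.castSucc_inj] using h), one_apply_ne h]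
  rw [hone] at h0
  rw [mul_apply]
  have expand : ∀ k : Fin m, S i k * Ainv.submatrix Fin.castSucc Fin.castSucc k j
      = A (Fin.castSucc i) (Fin.castSucc k) * Ainv (Fin.castSucc k) (Fin.castSucc j)
        - (A (Fin.last m) (Fin.last m))⁻¹ * A (Fin.castSucc i) (Fin.last m)
          * (A (Fin.last m) (Fin.castSucc k) * Ainv (Fin.castSucc k) (Fin.castSucc j)) := by
    intro k
    rw [hSdef, submatrix_apply]
    ring
  rw [Finset.sum_congr rfl fun k _ => expand k, Finset.sum_sub_distrib, ← Finset.mul_sum]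
  have h2 : ∑ k : Fin m, A (Fin.last m) (Fin.castSucc k) * Ainv (Fin.castSucc k) (Fin.castSucc j)
      = -(A (Fin.last m) (Fin.last m) * Ainv (Fin.last m) (Fin.castSucc j)) := by
    linarith [h1]
  rw [h2]
  have h3 : (A (Fin.last m) (Fin.last m))⁻¹ * A (Fin.castSucc i) (Fin.last m)
      * -(A (Fin.last m) (Fin.last m) * Ainv (Fin.last m) (Fin.castSucc j))
      = -(A (Fin.castSucc i) (Fin.last m) * Ainv (Fin.last m) (Fin.castSucc j)) := by
    field_simp
  rw [h3]
  linarith [h0]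

lemma sineq {m : ℕ} {A₁ Bm S : Matrix (Fin m) (Fin m) ℝ} (d' : Fin m → ℝ) (b c : Fin m → ℝ)
    {a : ℝ} (ha : a < 0)
    (hSdef : ∀ i j, S i j = A₁ i j - a⁻¹ * b i * c j)
    (hBS : Bm * S = 1)
    (hB : (lyap Bm d').PosDef) :
    ∀ y : Fin m → ℝ, y ≠ 0 →
      2 * (((fun i => d' i * b i) ⬝ᵥ y) * (c ⬝ᵥ y)) < (-a) * (y ⬝ᵥ (lyap A₁ d') *ᵥ y) := by
  intro y hy
  have hz0 : S *ᵥ y ≠ 0 := by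
    intro h
    apply hy
    have h2 : Bm *ᵥ (S *ᵥ y) = y := by rw [mulVec_mulVec, hBS, one_mulVec]
    rw [h, mulVec_zero] at h2
    exact h2.symm
  have hpos : 0 < (S *ᵥ y) ⬝ᵥ (lyap Bm d') *ᵥ (S *ᵥ y) := by
    simpa using hB.dotProduct_mulVec_pos hz0
  have hq : (S *ᵥ y) ⬝ᵥ (lyap Bm d') *ᵥ (S *ᵥ y)
      = -(2 * ∑ i, d' i * (S *ᵥ y) i * y i) := by
    have hBSy : Bm *ᵥ (S *ᵥ y) = y := by rw [mulVec_mulVec, hBS, one_mulVec]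
    rw [lyap_quad, hBSy]
  have hSy : ∀ i, (S *ᵥ y) i = (A₁ *ᵥ y) i - a⁻¹ * b i * (c ⬝ᵥ y) := by
    intro i
    simp only [mulVec, dotProduct]
    rw [Finset.mul_sum, ← Finset.sum_sub_distrib]
    exact Finset.sum_congr rfl fun k _ => by rw [hSdef]; ring
  have hsum : ∑ i, d' i * (S *ᵥ y) i * y i
      = (∑ i, d' i * y i * (A₁ *ᵥ y) i)
        - a⁻¹ * ((c ⬝ᵥ y) * ((fun i => d' i * b i) ⬝ᵥ y)) := by
    have hU : (fun i => d' i * b i) ⬝ᵥ y = ∑ i, (d' i * b i) * y i := rfl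
    rw [hU, Finset.mul_sum, Finset.mul_sum, ← Finset.sum_sub_distrib]
    exact Finset.sum_congr rfl fun k _ => by rw [hSy]; ring
  rw [hq, hsum] at hpos
  rw [lyap_quad]
  set T := ∑ i, d' i * y i * (A₁ *ᵥ y) i
  set C := c ⬝ᵥ y
  set U := (fun i => d' i * b i) ⬝ᵥ y
  have h1 : T < a⁻¹ * (C * U) := by linarith
  have h2 := mul_lt_mul_of_neg_left h1 (by linarith : 2 * a < 0)
  have h3 : 2 * a * (a⁻¹ * (C * U)) = 2 * (C * U) := by
    have h4 : a * a⁻¹ = 1 := mul_inv_cancel₀ ha.ne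
    linear_combination (2 * (C * U)) * h4
  rw [h3] at h2
  nlinarith [h2]

lemma lyap_snoc_quad {m : ℕ} (A : Matrix (Fin (m+1)) (Fin (m+1)) ℝ) (d' : Fin m → ℝ) (t : ℝ)
    (y : Fin m → ℝ) (s : ℝ) :
    (Fin.snoc y s : Fin (m+1) → ℝ) ⬝ᵥ (lyap A (Fin.snoc d' t)) *ᵥ (Fin.snoc y s : Fin (m+1) → ℝ)
      = y ⬝ᵥ (lyap (A.submatrix Fin.castSucc Fin.castSucc) d') *ᵥ y
        + 2 * s * ((fun i => -(d' i * A (Fin.castSucc i) (Fin.last m)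
            + t * A (Fin.last m) (Fin.castSucc i))) ⬝ᵥ y)
        + s ^ 2 * (-(2 * t * A (Fin.last m) (Fin.last m))) := by
  have hAx_cs : ∀ i : Fin m, (A *ᵥ (Fin.snoc y s : Fin (m+1) → ℝ)) (Fin.castSucc i)
      = (∑ k, A (Fin.castSucc i) (Fin.castSucc k) * y k)
        + A (Fin.castSucc i) (Fin.last m) * s := by
    intro i
    simp [mulVec, dotProduct, Fin.sum_univ_castSucc]
  have hAx_last : (A *ᵥ (Fin.snoc y s : Fin (m+1) → ℝ)) (Fin.last m)
      = (∑ k, A (Fin.last m) (Fin.castSucc k) * y k)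
        + A (Fin.last m) (Fin.last m) * s := by
    simp [mulVec, dotProduct, Fin.sum_univ_castSucc]
  have hA1y : ∀ i : Fin m, ((A.submatrix Fin.castSucc Fin.castSucc) *ᵥ y) i
      = ∑ k, A (Fin.castSucc i) (Fin.castSucc k) * y k := by
    intro i
    simp [mulVec, dotProduct]
  rw [lyap_quad, lyap_quad, Fin.sum_univ_castSucc]
  simp only [Fin.snoc_castSucc, Fin.snoc_last, hAx_cs, hAx_last, hA1y]
  have hsplit : ∑ i, d' i * y i * ((∑ k, A (Fin.castSucc i) (Fin.castSucc k) * y k)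
        + A (Fin.castSucc i) (Fin.last m) * s)
      = (∑ i, d' i * y i * (∑ k, A (Fin.castSucc i) (Fin.castSucc k) * y k))
        + s * ∑ i, d' i * A (Fin.castSucc i) (Fin.last m) * y i := by
    rw [Finset.mul_sum, ← Finset.sum_add_distrib]
    exact Finset.sum_congr rfl fun i _ => by ring
  have hw : ((fun i => -(d' i * A (Fin.castSucc i) (Fin.last m)
        + t * A (Fin.last m) (Fin.castSucc i))) ⬝ᵥ y)
      = -((∑ i, d' i * A (Fin.castSucc i) (Fin.last m) * y i)
          + t * ∑ i, A (Fin.last m) (Fin.castSucc i) * y i) := by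
    simp only [dotProduct, neg_add, Finset.mul_sum, ← Finset.sum_neg_distrib,
      ← Finset.sum_add_distrib]
    exact Finset.sum_congr rfl fun i _ => by ring
  rw [hsplit, hw]
  ring

lemma key {m : ℕ} (A : Matrix (Fin (m+1)) (Fin (m+1)) ℝ)
    (hdet : IsUnit A.det) (hdiag : ∀ i, A i i < 0) :
    (∃ d : Fin (m+1) → ℝ, (∀ i, 0 < d i) ∧ (lyap A d).PosDef) ↔
    (∃ d' : Fin m → ℝ, (∀ i, 0 < d' i) ∧
        (lyap (A.submatrix Fin.castSucc Fin.castSucc) d').PosDef ∧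
        (lyap (A⁻¹.submatrix Fin.castSucc Fin.castSucc) d').PosDef) := by
  constructor
  · rintro ⟨d, hdpos, hM⟩
    refine ⟨fun i => d i.castSucc, fun i => hdpos _, ?_, ?_⟩
    · have h1 : lyap (A.submatrix Fin.castSucc Fin.castSucc) (fun i => d i.castSucc)
          = (lyap A d).submatrix Fin.castSucc Fin.castSucc := by
        ext i j
        rw [submatrix_apply, lyap_apply, lyap_apply]
        rfl
      rw [h1]
      exact posDef_submatrix_inj hM (Fin.castSucc_injective m)
    · have hdetInv : IsUnit (A⁻¹).det := A.isUnit_nonsing_inv_det hdet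
      have h2 : lyap A⁻¹ d = (A⁻¹)ᵀ * (lyap A d) * A⁻¹ := by
        unfold lyap
        have e : (A⁻¹)ᵀ * (-(Aᵀ * Matrix.diagonal d + Matrix.diagonal d * A)) * A⁻¹
            = -((A * A⁻¹)ᵀ * (Matrix.diagonal d * A⁻¹)
              + ((A⁻¹)ᵀ * Matrix.diagonal d) * (A * A⁻¹)) := by
          rw [transpose_mul]
          noncomm_ring
        rw [e, Matrix.mul_nonsing_inv A hdet, transpose_one, one_mul, mul_one]
        abel
      have h3 : lyap (A⁻¹.submatrix Fin.castSucc Fin.castSucc) (fun i => d i.castSucc)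
          = (lyap A⁻¹ d).submatrix Fin.castSucc Fin.castSucc := by
        ext i j
        rw [submatrix_apply, lyap_apply, lyap_apply]
        rfl
      rw [h3, h2]
      exact posDef_submatrix_inj (posDef_conj hM hdetInv) (Fin.castSucc_injective m)
  · rintro ⟨d', hd'pos, hR, hB⟩
    have ha : A (Fin.last m) (Fin.last m) < 0 := hdiag _
    have hAA : A * A⁻¹ = 1 := Matrix.mul_nonsing_inv A hdet
    set S : Matrix (Fin m) (Fin m) ℝ := Matrix.of fun i j =>
      A (Fin.castSucc i) (Fin.castSucc j)
        - (A (Fin.last m) (Fin.last m))⁻¹ * A (Fin.castSucc i) (Fin.last m)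
          * A (Fin.last m) (Fin.castSucc j) with hSdef
    have hSapp : ∀ i j, S i j = A (Fin.castSucc i) (Fin.castSucc j)
        - (A (Fin.last m) (Fin.last m))⁻¹ * A (Fin.castSucc i) (Fin.last m)
          * A (Fin.last m) (Fin.castSucc j) := fun i j => rfl
    have hSB := block_inv A A⁻¹ hAA ha.ne S hSapp
    have hBS : A⁻¹.submatrix Fin.castSucc Fin.castSucc * S = 1 :=
      mul_eq_one_comm.mp hSB
    have hS := sineq (A₁ := A.submatrix Fin.castSucc Fin.castSucc)
      (Bm := A⁻¹.submatrix Fin.castSucc Fin.castSucc) (S := S) d'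
      (fun i => A (Fin.castSucc i) (Fin.last m))
      (fun j => A (Fin.last m) (Fin.castSucc j)) ha (fun i j => hSapp i j) hBS hB
    obtain ⟨t, ht, hcore⟩ := core hR (lyap_transpose _ _)
      (fun i => d' i * A (Fin.castSucc i) (Fin.last m))
      (fun j => A (Fin.last m) (Fin.castSucc j))
      (neg_pos.mpr ha) hS
    refine ⟨Fin.snoc d' t, ?_, ?_⟩
    · intro i
      refine Fin.lastCases ?_ ?_ i
      · simpa using ht
      · intro j
        simpa using hd'pos j
    · rw [posDef_iff_quad (lyap_isHermitian A (Fin.snoc d' t))]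
      intro x hx
      have hq := lyap_snoc_quad A d' t (Fin.init x) (x (Fin.last m))
      rw [Fin.snoc_init_self] at hq
      rw [hq]
      have hyt : (Fin.init x) ≠ 0 ∨ x (Fin.last m) ≠ 0 := by
        by_contra h
        push_neg at h
        obtain ⟨h1, h2⟩ := h
        apply hx
        funext i
        refine Fin.lastCases ?_ ?_ i
        · exact h2
        · intro j
          exact congrFun h1 j
      refine schur_pos hR (lyap_transpose _ _) _ _ ?_ (Fin.init x) (x (Fin.last m)) hyt
      have hveq : (fun i => -(d' i * A (Fin.castSucc i) (Fin.last m)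
            + t * A (Fin.last m) (Fin.castSucc i)))
          = -((fun i => d' i * A (Fin.castSucc i) (Fin.last m))
            + t • (fun j => A (Fin.last m) (Fin.castSucc j))) := by
        funext i
        simp
      rw [hveq, mulVec_neg, dotProduct_neg, neg_dotProduct, neg_neg]
      linarith [hcore]


/-- A real square matrix is Hurwitz if all its (complex) eigenvalues have
strictly negative real part. -/
def IsHurwitz {n : Type*} [Fintype n] [DecidableEq n] (M : Matrix n n ℝ) : Prop :=
  ∀ μ ∈ spectrum ℂ (M.map (Complex.ofReal)), μ.re < 0

/-- **Redheffer / Shorten–Narendra.** Let `A` be an `n × n` real Hurwitz matrix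
(`n ≥ 2`) with negative diagonal entries, let `A₍ₙ₋₁₎` denote its leading
`(n-1) × (n-1)` submatrix and `B₍ₙ₋₁₎` the leading `(n-1) × (n-1)` submatrix of
`A⁻¹`. Then `A` is diagonally stable if and only if `A₍ₙ₋₁₎` and `B₍ₙ₋₁₎` admit
a common diagonal Lyapunov function. -/
theorem redheffer_shorten_narendra {n : ℕ} (hn : 2 ≤ n)
    (A : Matrix (Fin n) (Fin n) ℝ)
    (hHurwitz : IsHurwitz A) (hdiag : ∀ i, A i i < 0) :
    (∃ d : Fin n → ℝ, (∀ i, 0 < d i) ∧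
        (-(Aᵀ * Matrix.diagonal d + Matrix.diagonal d * A)).PosDef) ↔
    (∃ d' : Fin (n - 1) → ℝ, (∀ i, 0 < d' i) ∧
        (-((A.submatrix (Fin.castLE (Nat.sub_le n 1)) (Fin.castLE (Nat.sub_le n 1)))ᵀ *
            Matrix.diagonal d' +
          Matrix.diagonal d' *
            A.submatrix (Fin.castLE (Nat.sub_le n 1)) (Fin.castLE (Nat.sub_le n 1)))).PosDef ∧
        (-((A⁻¹.submatrix (Fin.castLE (Nat.sub_le n 1)) (Fin.castLE (Nat.sub_le n 1)))ᵀ *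
            Matrix.diagonal d' +
          Matrix.diagonal d' *
            A⁻¹.submatrix (Fin.castLE (Nat.sub_le n 1)) (Fin.castLE (Nat.sub_le n 1)))).PosDef) := by
  obtain ⟨m, rfl⟩ : ∃ m, n = m + 1 := ⟨n - 1, by omega⟩
  have hdet : IsUnit A.det := by
    by_contra hcon
    have h0 : ¬ IsUnit (A.map Complex.ofReal) := by
      intro h
      apply hcon
      rw [Matrix.isUnit_iff_isUnit_det] at h
      have hd : (A.map Complex.ofReal).det = Complex.ofReal A.det :=
        (RingHom.map_det Complex.ofRealHom A).symm
      rw [hd, isUnit_iff_ne_zero, Ne, Complex.ofReal_eq_zero] at h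
      exact (isUnit_iff_ne_zero.mpr h)
    have h1 : (0 : ℂ) ∈ spectrum ℂ (A.map Complex.ofReal) := spectrum.zero_mem ℂ h0
    have h2 := hHurwitz 0 h1
    simp at h2
  exact key A hdet hdiag
end

section
/- A real n×n matrix A is Lyapunov diagonally stable if and only if for every nonzero real symmetric positive semidefinite n×n matrix H, the product H·A has at least one strictly positive diagonal entry. -/
open Matrix Finset

-- scaling helpers
lemma helperB {u v : ℝ} (h : ∀ c : ℝ, 0 < c → c * v < u) : v ≤ 0 := by
  by_contra hv
  push_neg at hv
  have h1 := h 1 one_pos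
  rw [one_mul] at h1
  have hu : 0 < u := lt_trans hv h1
  have h2 := h (u / v) (div_pos hu hv)
  rw [div_mul_cancel₀ _ (ne_of_gt hv)] at h2
  exact lt_irrefl _ h2

lemma helperA1 {u v : ℝ} (h : ∀ c : ℝ, 0 < c → u ≤ c * v) : 0 ≤ v := by
  by_contra hv
  push_neg at hv
  have hc : (0:ℝ) < max 1 ((u - 1) / v) := lt_of_lt_of_le one_pos (le_max_left _ _)
  have h2 := h _ hc
  have h3 : (u - 1) / v ≤ max 1 ((u - 1) / v) := le_max_right _ _
  rw [div_le_iff_of_neg hv] at h3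
  linarith

lemma helperA2 {u v : ℝ} (h : ∀ c : ℝ, 0 < c → u ≤ c * v) : u ≤ 0 := by
  have hv := helperA1 h
  by_contra hu
  push_neg at hu
  have hc : 0 < u / (2 * v + 2) := div_pos hu (by linarith)
  have h2 := h _ hc
  rw [div_mul_eq_mul_div, le_div_iff₀ (by linarith)] at h2
  nlinarith [mul_nonneg hu.le hv]

lemma helperC {v w : ℝ} (h : ∀ ε : ℝ, 0 < ε → v ≤ ε * w) : v ≤ 0 := by
  by_contra hv
  push_neg at hv
  have hw : 0 < w := by
    by_contra hw
    push_neg at hw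
    have := h 1 one_pos
    nlinarith
  have h2 := h (v / (2 * w)) (div_pos hv (by linarith))
  rw [div_mul_eq_mul_div, le_div_iff₀ (by linarith)] at h2
  nlinarith

lemma sum_eq_trace {n : ℕ} (M H : Matrix (Fin n) (Fin n) ℝ) :
    (∑ i, ∑ j, M i j * H i j) = Matrix.trace (M * Hᵀ) := by
  simp [Matrix.trace, Matrix.diag, Matrix.mul_apply]

lemma trace_diag_mul {n : ℕ} (d : Fin n → ℝ) (B : Matrix (Fin n) (Fin n) ℝ) :
    Matrix.trace (Matrix.diagonal d * B) = ∑ i, d i * B i i := by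
  simp [Matrix.trace, Matrix.diag, Matrix.diagonal_mul]

-- key sum identity
lemma key_sum {n : ℕ} (A H : Matrix (Fin n) (Fin n) ℝ) (d : Fin n → ℝ) :
    (∑ i, ∑ j, (A * Matrix.diagonal d + Matrix.diagonal d * Aᵀ) i j * H i j)
      = ∑ i, d i * ((H * A) i i + (Hᵀ * A) i i) := by
  rw [sum_eq_trace, add_mul, Matrix.trace_add]
  rw [mul_assoc A, Matrix.trace_mul_comm A (Matrix.diagonal d * Hᵀ), mul_assoc,
      trace_diag_mul, mul_assoc, trace_diag_mul, ← Finset.sum_add_distrib]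
  apply Finset.sum_congr rfl; intro i _
  have e1 : (Aᵀ * Hᵀ) i i = (H * A) i i := by
    simp [Matrix.mul_apply, mul_comm]
  have e2 : (Hᵀ * A) i i = (Hᵀ * A) i i := rfl
  rw [e1]
  ring


lemma quad_sum {n : ℕ} (M B : Matrix (Fin n) (Fin n) ℝ) :
    ∑ i, ∑ j, M i j * (Bᵀ * B) i j = ∑ k, (B k) ⬝ᵥ M.mulVec (B k) := by
  simp only [Matrix.mul_apply, Matrix.transpose_apply, dotProduct, Matrix.mulVec,
    Finset.mul_sum, Finset.sum_mul]
  have : ∀ i : Fin n, (∑ j, ∑ k, M i j * (B k i * B k j)) = ∑ k, ∑ j, M i j * (B k i * B k j) :=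
    fun i => Finset.sum_comm
  simp only [this]
  rw [Finset.sum_comm]
  apply Finset.sum_congr rfl; intro k _
  apply Finset.sum_congr rfl; intro i _
  apply Finset.sum_congr rfl; intro j _
  ring

lemma forward {n : ℕ} (A : Matrix (Fin n) (Fin n) ℝ) (d : Fin n → ℝ) (hd : ∀ i, 0 < d i)
    (hPD : (A * Matrix.diagonal d + Matrix.diagonal d * Aᵀ).PosDef)
    (H : Matrix (Fin n) (Fin n) ℝ) (hH0 : H ≠ 0) (hH : H.PosSemidef) :
    ∃ i, 0 < (H * A) i i := by
  open scoped MatrixOrder in obtain ⟨B, hB⟩ := CStarAlgebra.nonneg_iff_eq_star_mul_self.mp hH.nonneg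
  have hBt : H = Bᵀ * B := by rw [hB]; rfl
  have hsym : Hᵀ = H := hH.1
  set M := A * Matrix.diagonal d + Matrix.diagonal d * Aᵀ with hM
  have hq : ∀ x : Fin n → ℝ, x ≠ 0 → 0 < x ⬝ᵥ M.mulVec x := by
    intro x hx
    have := (posDef_iff_dotProduct_mulVec.mp hPD).2 hx
    simpa using this
  have hqn : ∀ x : Fin n → ℝ, 0 ≤ x ⬝ᵥ M.mulVec x := by
    intro x
    by_cases hx : x = 0
    · simp [hx]
    · exact (hq x hx).le
  have hBne : ∃ k, B k ≠ 0 := by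
    by_contra hc
    push_neg at hc
    apply hH0
    rw [hBt]
    ext i j
    simp only [Matrix.mul_apply, Matrix.transpose_apply, Matrix.zero_apply]
    apply Finset.sum_eq_zero
    intro k _
    have := congrFun (hc k) i
    simp only [Pi.zero_apply] at this
    simp [this]
  obtain ⟨k₀, hk₀⟩ := hBne
  have hpos : 0 < ∑ k, (B k) ⬝ᵥ M.mulVec (B k) := by
    apply Finset.sum_pos' (fun k _ => hqn (B k))
    exact ⟨k₀, Finset.mem_univ _, hq (B k₀) hk₀⟩
  have heq : ∑ k, (B k) ⬝ᵥ M.mulVec (B k) = ∑ i, d i * ((H * A) i i + (H * A) i i) := by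
    rw [← quad_sum M B, ← hBt, key_sum A H d, hsym]
  rw [heq] at hpos
  by_contra hc
  push_neg at hc
  refine absurd hpos (not_lt.mpr (Finset.sum_nonpos fun i _ => ?_))
  have := hc i
  nlinarith [hd i]

variable {n : ℕ}

lemma quad_cont : Continuous fun z : Matrix (Fin n) (Fin n) ℝ × (Fin n → ℝ) =>
    z.2 ⬝ᵥ z.1.mulVec z.2 := by
  simp only [dotProduct, Matrix.mulVec]
  apply continuous_finset_sum; intro i _
  apply Continuous.mul
  · exact (continuous_apply i).comp continuous_snd
  · apply continuous_finset_sum; intro j _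
    exact ((continuous_apply j).comp ((continuous_apply i).comp continuous_fst)).mul
      ((continuous_apply j).comp continuous_snd)

lemma quad_smul (M : Matrix (Fin n) (Fin n) ℝ) (c : ℝ) (x : Fin n → ℝ) :
    (c • x) ⬝ᵥ M.mulVec (c • x) = c^2 * (x ⬝ᵥ M.mulVec x) := by
  rw [Matrix.mulVec_smul, smul_dotProduct, dotProduct_smul]
  simp [smul_eq_mul]; ring

lemma isOpen_quadPos :
    IsOpen {M : Matrix (Fin n) (Fin n) ℝ | ∀ x : Fin n → ℝ, x ≠ 0 → 0 < x ⬝ᵥ M.mulVec x} := by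
  rw [isOpen_iff_mem_nhds]
  intro M₀ hM₀
  have hK : IsCompact (Metric.sphere (0 : Fin n → ℝ) 1) := isCompact_sphere 0 1
  have hev : ∀ᶠ M in nhds M₀, ∀ x ∈ Metric.sphere (0 : Fin n → ℝ) 1, 0 < x ⬝ᵥ M.mulVec x := by
    apply hK.eventually_forall_of_forall_eventually
    intro y hy
    have hy0 : y ≠ 0 := by
      intro h; rw [h] at hy; simp at hy
    have hpos : 0 < (fun z : Matrix (Fin n) (Fin n) ℝ × (Fin n → ℝ) => z.2 ⬝ᵥ z.1.mulVec z.2) (M₀, y) :=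
      hM₀ y hy0
    exact (isOpen_lt continuous_const quad_cont).eventually_mem hpos
  refine Filter.mem_of_superset hev ?_
  intro M hM x hx
  have hnx : ‖x‖ ≠ 0 := norm_ne_zero_iff.mpr hx
  set y : Fin n → ℝ := ‖x‖⁻¹ • x with hy
  have hysph : y ∈ Metric.sphere (0 : Fin n → ℝ) 1 := by
    simp [hy, norm_smul, inv_mul_cancel₀ hnx]
  have hxy : x = ‖x‖ • y := by
    rw [hy, smul_smul, mul_inv_cancel₀ hnx, one_smul]
  have := hM y hysph
  have h2 : (0:ℝ) < ‖x‖^2 := pow_pos (lt_of_le_of_ne (norm_nonneg x) (Ne.symm hnx)) 2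
  calc (0:ℝ) < ‖x‖^2 * (y ⬝ᵥ M.mulVec y) := mul_pos h2 this
    _ = x ⬝ᵥ M.mulVec x := by
        conv_rhs => rw [hxy]
        exact (quad_smul M ‖x‖ y).symm

variable {n : ℕ}

lemma convex_quadPos :
    Convex ℝ {M : Matrix (Fin n) (Fin n) ℝ | ∀ x : Fin n → ℝ, x ≠ 0 → 0 < x ⬝ᵥ M.mulVec x} := by
  intro M hM N hN a b ha hb hab
  intro x hx
  have h1 := hM x hx
  have h2 := hN x hx
  have : x ⬝ᵥ (a • M + b • N).mulVec x
      = a * (x ⬝ᵥ M.mulVec x) + b * (x ⬝ᵥ N.mulVec x) := by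
    rw [Matrix.add_mulVec, dotProduct_add, Matrix.smul_mulVec, Matrix.smul_mulVec,
      dotProduct_smul, dotProduct_smul]
    simp [smul_eq_mul]
  rw [this]
  rcases eq_or_lt_of_le ha with h | h
  · have hb1 : b = 1 := by linarith
    rw [← h, hb1]
    simpa using h2
  · exact add_pos_of_pos_of_nonneg (mul_pos h h1) (mul_nonneg hb h2.le)

lemma convex_lyap (A : Matrix (Fin n) (Fin n) ℝ) :
    Convex ℝ {M : Matrix (Fin n) (Fin n) ℝ | ∃ d : Fin n → ℝ, (∀ i, 0 < d i) ∧
      M = A * Matrix.diagonal d + Matrix.diagonal d * Aᵀ} := by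
  rintro M ⟨d, hd, rfl⟩ N ⟨e, he, rfl⟩ a b ha hb hab
  refine ⟨fun i => a * d i + b * e i, fun i => ?_, ?_⟩
  · rcases eq_or_lt_of_le ha with h | h
    · have hb1 : b = 1 := by linarith
      rw [← h, hb1]
      simpa using he i
    · exact add_pos_of_pos_of_nonneg (mul_pos h (hd i)) (mul_nonneg hb (he i).le)
  · have : Matrix.diagonal (fun i => a * d i + b * e i)
        = a • Matrix.diagonal d + b • Matrix.diagonal e := by
      rw [← Matrix.diagonal_smul, ← Matrix.diagonal_smul, ← Matrix.diagonal_add]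
      rfl
    rw [this]
    simp only [smul_add, Matrix.mul_add, Matrix.add_mul, mul_smul_comm, smul_mul_assoc]
    abel

variable {n : ℕ}

lemma repr_f (f : Matrix (Fin n) (Fin n) ℝ →L[ℝ] ℝ) (M : Matrix (Fin n) (Fin n) ℝ) :
    f M = ∑ i, ∑ j, M i j * f (Matrix.single i j 1) := by
  conv_lhs => rw [Matrix.matrix_eq_sum_single M]
  rw [map_sum]
  apply Finset.sum_congr rfl; intro i _
  rw [map_sum]
  apply Finset.sum_congr rfl; intro j _
  have : Matrix.single i j (M i j) = (M i j) • Matrix.single i j 1 := by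
    ext a b
    simp [Matrix.single, Matrix.smul_apply]
  rw [this, _root_.map_smul, smul_eq_mul]

lemma quad_vecMulVec (x y : Fin n → ℝ) :
    y ⬝ᵥ (Matrix.vecMulVec x x).mulVec y = (x ⬝ᵥ y)^2 := by
  simp only [dotProduct, Matrix.mulVec, Matrix.vecMulVec_apply, Finset.mul_sum, Finset.sum_mul]
  rw [sq, Finset.sum_mul]
  apply Finset.sum_congr rfl; intro i _
  rw [Finset.mul_sum]
  apply Finset.sum_congr rfl; intro j _
  ring

lemma quad_transpose {n : ℕ} (H : Matrix (Fin n) (Fin n) ℝ) (x : Fin n → ℝ) :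
    x ⬝ᵥ Hᵀ.mulVec x = x ⬝ᵥ H.mulVec x := by
  simp only [dotProduct, Matrix.mulVec, Matrix.transpose_apply, Finset.mul_sum]
  rw [Finset.sum_comm]
  apply Finset.sum_congr rfl; intro i _
  apply Finset.sum_congr rfl; intro j _
  ring

lemma quad_repr {n : ℕ} (H : Matrix (Fin n) (Fin n) ℝ) (x : Fin n → ℝ) :
    ∑ i, ∑ j, (Matrix.vecMulVec x x) i j * H i j = x ⬝ᵥ H.mulVec x := by
  simp only [Matrix.vecMulVec_apply, dotProduct, Matrix.mulVec, Finset.mul_sum]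
  apply Finset.sum_congr rfl; intro i _
  apply Finset.sum_congr rfl; intro j _
  ring

lemma converse_dir {n : ℕ} (A : Matrix (Fin n) (Fin n) ℝ)
    (hyp : ∀ H : Matrix (Fin n) (Fin n) ℝ, H ≠ 0 → H.PosSemidef → ∃ i, 0 < (H * A) i i) :
    ∃ d : Fin n → ℝ, (∀ i, 0 < d i) ∧
      (A * Matrix.diagonal d + Matrix.diagonal d * Aᵀ).PosDef := by
  by_contra hno
  push_neg at hno
  set s : Set (Matrix (Fin n) (Fin n) ℝ) :=
    {M | ∀ x : Fin n → ℝ, x ≠ 0 → 0 < x ⬝ᵥ M.mulVec x} with hs_def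
  set t : Set (Matrix (Fin n) (Fin n) ℝ) :=
    {M | ∃ d : Fin n → ℝ, (∀ i, 0 < d i) ∧
      M = A * Matrix.diagonal d + Matrix.diagonal d * Aᵀ} with ht_def
  have hherm : ∀ d : Fin n → ℝ,
      (A * Matrix.diagonal d + Matrix.diagonal d * Aᵀ).IsHermitian := by
    intro d
    have : (A * Matrix.diagonal d + Matrix.diagonal d * Aᵀ)ᵀ
        = A * Matrix.diagonal d + Matrix.diagonal d * Aᵀ := by
      rw [Matrix.transpose_add, Matrix.transpose_mul, Matrix.transpose_mul,
        Matrix.transpose_transpose, Matrix.diagonal_transpose, add_comm]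
    exact this
  have hdisj : Disjoint s t := by
    rw [Set.disjoint_left]
    rintro M hMs ⟨d, hd, rfl⟩
    exact hno d hd (posDef_iff_dotProduct_mulVec.mpr ⟨hherm d, fun x hx => by simpa using hMs x hx⟩)
  obtain ⟨f, u, hfs, hft⟩ :=
    geometric_hahn_banach_open convex_quadPos isOpen_quadPos (convex_lyap A) hdisj
  -- H matrix representing f
  set H : Matrix (Fin n) (Fin n) ℝ := Matrix.of fun i j => f (Matrix.single i j 1)
    with hH_def
  have hfH : ∀ M, f M = ∑ i, ∑ j, M i j * H i j := fun M => repr_f f M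
  -- scaling in s : f a ≤ 0 on s
  have hs_smul : ∀ M ∈ s, ∀ c : ℝ, 0 < c → c • M ∈ s := by
    intro M hM c hc x hx
    rw [Matrix.smul_mulVec, dotProduct_smul, smul_eq_mul]
    exact mul_pos hc (hM x hx)
  have hf_nonpos : ∀ M ∈ s, f M ≤ 0 := by
    intro M hM
    apply helperB (u := u)
    intro c hc
    have := hfs _ (hs_smul M hM c hc)
    rwa [_root_.map_smul, smul_eq_mul] at this
  -- scaling in t
  have ht_smul : ∀ d : Fin n → ℝ, (∀ i, 0 < d i) → ∀ c : ℝ, 0 < c →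
      c • (A * Matrix.diagonal d + Matrix.diagonal d * Aᵀ) ∈ t := by
    intro d hd c hc
    refine ⟨fun i => c * d i, fun i => mul_pos hc (hd i), ?_⟩
    have : Matrix.diagonal (fun i => c * d i) = c • Matrix.diagonal d := by
      rw [← Matrix.diagonal_smul]; rfl
    rw [this, smul_add, mul_smul_comm, smul_mul_assoc]
  have hfMd : ∀ d : Fin n → ℝ, (∀ i, 0 < d i) →
      0 ≤ f (A * Matrix.diagonal d + Matrix.diagonal d * Aᵀ) := by
    intro d hd
    apply helperA1 (u := u)
    intro c hc
    have := hft _ (ht_smul d hd c hc)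
    rwa [_root_.map_smul, smul_eq_mul] at this
  have hu0 : u ≤ 0 := by
    apply helperA2 (v := f (A * Matrix.diagonal 1 + Matrix.diagonal 1 * Aᵀ))
    intro c hc
    have := hft _ (ht_smul 1 (fun _ => one_pos) c hc)
    rwa [_root_.map_smul, smul_eq_mul] at this
  -- identity matrix is in s
  have hI : (1 : Matrix (Fin n) (Fin n) ℝ) ∈ s := by
    intro x hx
    rw [Matrix.one_mulVec]
    obtain ⟨i, hi⟩ := Function.ne_iff.mp hx
    apply Finset.sum_pos' (fun j _ => mul_self_nonneg (x j))
    exact ⟨i, Finset.mem_univ _, mul_self_pos.mpr hi⟩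
  have hf1 : f 1 < 0 := lt_of_lt_of_le (hfs 1 hI) hu0
  -- f (xxᵀ) ≤ 0 for every x
  have houter : ∀ x : Fin n → ℝ, x ⬝ᵥ H.mulVec x ≤ 0 := by
    intro x
    rw [← quad_repr, ← hfH]
    apply helperC (w := -(f 1))
    intro ε hε
    have hmem : Matrix.vecMulVec x x + ε • (1 : Matrix (Fin n) (Fin n) ℝ) ∈ s := by
      intro y hy
      rw [Matrix.add_mulVec, dotProduct_add, Matrix.smul_mulVec, dotProduct_smul,
        smul_eq_mul, quad_vecMulVec]
      have h2 : 0 < y ⬝ᵥ (1 : Matrix (Fin n) (Fin n) ℝ).mulVec y := hI y hy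
      nlinarith [sq_nonneg (x ⬝ᵥ y), mul_pos hε h2]
    have := hf_nonpos _ hmem
    rw [map_add, _root_.map_smul, smul_eq_mul] at this
    linarith
  -- the separating PSD matrix
  set G : Matrix (Fin n) (Fin n) ℝ := -(H + Hᵀ) with hG_def
  have hGherm : G.IsHermitian := by
    have : Gᵀ = G := by
      rw [hG_def, Matrix.transpose_neg, Matrix.transpose_add, Matrix.transpose_transpose,
        add_comm]
    exact this
  have hGquad : ∀ x : Fin n → ℝ, 0 ≤ x ⬝ᵥ G.mulVec x := by
    intro x
    rw [hG_def, Matrix.neg_mulVec, dotProduct_neg, Matrix.add_mulVec, dotProduct_add,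
      quad_transpose]
    have := houter x
    linarith
  have hGpsd : G.PosSemidef := posSemidef_iff_dotProduct_mulVec.mpr ⟨hGherm, fun x => by simpa using hGquad x⟩
  have hf1trace : f 1 = ∑ i, H i i := by
    rw [hfH]
    apply Finset.sum_congr rfl; intro i _
    rw [Finset.sum_eq_single i]
    · rw [Matrix.one_apply_eq, one_mul]
    · intro j _ hj
      rw [Matrix.one_apply_ne (Ne.symm hj), zero_mul]
    · intro h; exact absurd (Finset.mem_univ i) h
  have hGne : G ≠ 0 := by
    intro h
    have h2 : ∑ i, G i i = 0 := by rw [h]; simp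
    have h3 : ∑ i, G i i = -(2 * f 1) := by
      rw [hf1trace]
      simp only [hG_def, Matrix.neg_apply, Matrix.add_apply, Matrix.transpose_apply, ← two_mul]
      rw [Finset.sum_neg_distrib, ← Finset.mul_sum]
    rw [h2] at h3
    linarith
  -- diagonal entries of G * A are nonpositive
  have hGA : ∀ i, (G * A) i i ≤ 0 := by
    have hGAval : ∀ i, (G * A) i i = -((H * A) i i + (Hᵀ * A) i i) := by
      intro i
      rw [hG_def, Matrix.neg_mul, Matrix.add_mul]
      simp [Matrix.neg_apply, Matrix.add_apply]
    have hsum : ∀ d : Fin n → ℝ, (∀ i, 0 < d i) → ∑ i, d i * (G * A) i i ≤ 0 := by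
      intro d hd
      have h0 := hfMd d hd
      rw [hfH, key_sum A H d] at h0
      have : ∑ i, d i * (G * A) i i
          = -∑ i, d i * ((H * A) i i + (Hᵀ * A) i i) := by
        rw [← Finset.sum_neg_distrib]
        apply Finset.sum_congr rfl; intro i _
        rw [hGAval i]; ring
      rw [this]
      linarith
    intro i₀
    apply helperC (w := ∑ i ∈ Finset.univ.erase i₀, -((G * A) i i))
    intro ε hε
    have hd : ∀ i : Fin n, 0 < (if i = i₀ then 1 else ε) := by
      intro i; split
      · exact one_pos
      · exact hε
    have h := hsum _ hd
    rw [← Finset.add_sum_erase _ _ (Finset.mem_univ i₀)] at h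
    rw [if_pos rfl, one_mul] at h
    have he : ∑ i ∈ Finset.univ.erase i₀, (if i = i₀ then 1 else ε) * (G * A) i i
        = ∑ i ∈ Finset.univ.erase i₀, ε * (G * A) i i := by
      apply Finset.sum_congr rfl; intro i hi
      rw [if_neg (Finset.ne_of_mem_erase hi)]
    rw [he] at h
    rw [Finset.mul_sum]
    have : ∑ i ∈ Finset.univ.erase i₀, ε * -((G * A) i i)
        = -∑ i ∈ Finset.univ.erase i₀, ε * (G * A) i i := by
      rw [← Finset.sum_neg_distrib]
      apply Finset.sum_congr rfl; intro i _; ring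
    rw [this]
    linarith
  obtain ⟨i, hi⟩ := hyp G hGne hGpsd
  exact absurd hi (not_lt.mpr (hGA i))

/-- **Barker–Berman–Plemmons (BBP) theorem.** A real `n × n` matrix `A` is
Lyapunov diagonally stable (there is a positive diagonal `D` with
`A * D + D * Aᵀ` positive definite) if and only if for every nonzero real
symmetric positive semidefinite matrix `H`, the matrix `H * A` has at least
one strictly positive diagonal entry. -/
theorem bbp_theorem {n : ℕ} (A : Matrix (Fin n) (Fin n) ℝ) :
    (∃ d : Fin n → ℝ, (∀ i, 0 < d i) ∧
        (A * Matrix.diagonal d + Matrix.diagonal d * Aᵀ).PosDef) ↔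
    (∀ H : Matrix (Fin n) (Fin n) ℝ, H ≠ 0 → H.PosSemidef →
        ∃ i, 0 < (H * A) i i) := by
  constructor
  · rintro ⟨d, hd, hPD⟩ H hH0 hH
    exact forward A d hd hPD H hH0 hH
  · exact converse_dir A
end

section
/- If a real n×n matrix A is Lyapunov diagonally stable, then A is a P-matrix, i.e., every principal minor of A is strictly positive. -/
open Matrix

lemma myPosDef_smul {m : Type*} [Fintype m] {M : Matrix m m ℝ} (h : M.PosDef)
    {c : ℝ} (hc : 0 < c) : (c • M).PosDef := by
  refine posDef_iff_dotProduct_mulVec.mpr ⟨?_, fun x hx => ?_⟩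
  · have := h.1
    rw [Matrix.IsHermitian] at this ⊢
    rw [conjTranspose_smul, this, star_trivial]
  · rw [smul_mulVec, dotProduct_smul]
    exact mul_pos hc (h.dotProduct_mulVec_pos hx)

lemma myPosSemidef_smul {m : Type*} [Fintype m] {M : Matrix m m ℝ} (h : M.PosSemidef)
    {c : ℝ} (hc : 0 ≤ c) : (c • M).PosSemidef := by
  refine posSemidef_iff_dotProduct_mulVec.mpr ⟨?_, fun x => ?_⟩
  · have := h.1
    rw [Matrix.IsHermitian] at this ⊢
    rw [conjTranspose_smul, this, star_trivial]
  · rw [smul_mulVec, dotProduct_smul]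
    exact mul_nonneg hc (h.dotProduct_mulVec_nonneg x)

/-- Submatrix of a PosDef matrix along an injective map is PosDef. -/
lemma posDef_submatrix_of_injective {m n : Type*} [Fintype m] [Fintype n] [DecidableEq m]
    [DecidableEq n] {M : Matrix n n ℝ} (hM : M.PosDef) (e : m → n) (he : Function.Injective e) :
    (M.submatrix e e).PosDef := by
  rw [posDef_iff_dotProduct_mulVec]
  constructor
  · have h := hM.1
    ext i j
    have := congrFun (congrFun h (e i)) (e j)
    simpa using this
  · intro x hx
    set y : n → ℝ := fun j => ∑ i, if e i = j then x i else 0 with hy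
    have hsum : ∀ f : n → ℝ, ∑ j, y j * f j = ∑ i, x i * f (e i) := by
      intro f
      simp only [hy, Finset.sum_mul]
      rw [Finset.sum_comm]
      refine Finset.sum_congr rfl fun i _ => ?_
      simp [ite_mul, Finset.sum_ite_eq]
    have hy_ne : y ≠ 0 := by
      obtain ⟨i, hi⟩ := Function.ne_iff.mp hx
      intro h
      apply hi
      have h2 : y (e i) = x i := by
        simp [hy, Function.Injective.eq_iff he, Finset.sum_ite_eq']
      rw [h, Pi.zero_apply] at h2
      exact h2.symm
    have key : dotProduct (star x) (M.submatrix e e *ᵥ x) = dotProduct (star y) (M *ᵥ y) := by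
      simp only [star_trivial, dotProduct, mulVec]
      rw [hsum (fun j => ∑ k, M j k * y k)]
      refine Finset.sum_congr rfl fun i _ => ?_
      congr 1
      have : ∑ k, M (e i) k * y k = ∑ j, y j * M (e i) j := by
        exact Finset.sum_congr rfl fun j _ => mul_comm _ _
      rw [this, hsum (fun k => M (e i) k)]
      exact Finset.sum_congr rfl fun i' _ => by rw [submatrix_apply, mul_comm (x i')]
    rw [key]
    exact hM.dotProduct_mulVec_pos hy_ne

/-- A real matrix `M` with `M + Mᵀ` positive definite has nonzero determinant. -/
lemma det_ne_zero_of_posDef_add_transpose {m : ℕ} {M : Matrix (Fin m) (Fin m) ℝ}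
    (h : (M + Mᵀ).PosDef) : M.det ≠ 0 := by
  intro hdet
  obtain ⟨v, hv, hMv⟩ := (Matrix.exists_mulVec_eq_zero_iff).mpr hdet
  have hpos := h.dotProduct_mulVec_pos hv
  rw [add_mulVec, hMv, zero_add, star_trivial] at hpos
  have h2 : v ⬝ᵥ Mᵀ *ᵥ v = (M *ᵥ v) ⬝ᵥ v := by
    rw [dotProduct_mulVec, vecMul_transpose]
  rw [h2, hMv, zero_dotProduct] at hpos
  exact lt_irrefl 0 hpos

/-- A real matrix `M` with `M + Mᵀ` positive definite has positive determinant. -/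
lemma det_pos_of_posDef_add_transpose {m : ℕ} {M : Matrix (Fin m) (Fin m) ℝ}
    (h : (M + Mᵀ).PosDef) : 0 < M.det := by
  set f : ℝ → ℝ := fun t => ((1 - t) • (1 : Matrix (Fin m) (Fin m) ℝ) + t • M).det with hf
  have hcont : Continuous f := by
    apply Continuous.matrix_det
    fun_prop
  have hne : ∀ t ∈ Set.Icc (0:ℝ) 1, f t ≠ 0 := by
    rintro t ⟨ht0, ht1⟩
    apply det_ne_zero_of_posDef_add_transpose (M := (1 - t) • 1 + t • M)
    have heq : ((1 - t) • (1:Matrix (Fin m) (Fin m) ℝ) + t • M) + ((1 - t) • 1 + t • M)ᵀ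
        = (2 * (1 - t)) • (1:Matrix (Fin m) (Fin m) ℝ) + t • (M + Mᵀ) := by
      rw [transpose_add, transpose_smul, transpose_smul, transpose_one]
      module
    rw [heq]
    rcases eq_or_lt_of_le ht0 with h0 | h0
    · rw [← h0]
      simpa using myPosDef_smul (Matrix.PosDef.one) (by norm_num : (0:ℝ) < 2)
    · exact Matrix.PosDef.posSemidef_add
        (myPosSemidef_smul Matrix.PosSemidef.one (by nlinarith : (0:ℝ) ≤ 2 * (1 - t)))
        (myPosDef_smul h h0)
  have hf0 : f 0 = 1 := by simp [hf]
  by_contra hle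
  push_neg at hle
  have hf1 : f 1 ≤ 0 := by simpa [hf] using hle
  have hmem : (0:ℝ) ∈ Set.Icc (f 1) (f 0) := ⟨hf1, by rw [hf0]; norm_num⟩
  obtain ⟨t, ht, hft⟩ := intermediate_value_Icc' (by norm_num : (0:ℝ) ≤ 1)
    hcont.continuousOn hmem
  exact hne t ht hft

/-- **Barker–Berman–Plemmons.** A Lyapunov diagonally stable real matrix is a
P-matrix: every principal minor is strictly positive. -/
theorem lyapunov_diag_stable_is_P_matrix {n : ℕ} (A : Matrix (Fin n) (Fin n) ℝ)
    (hA : ∃ d : Fin n → ℝ, (∀ i, 0 < d i) ∧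
        (A * Matrix.diagonal d + Matrix.diagonal d * Aᵀ).PosDef) :
    ∀ S : Finset (Fin n), S.Nonempty →
      0 < (A.submatrix (fun i : S => (i : Fin n)) (fun i : S => (i : Fin n))).det := by
  obtain ⟨d, hd, hpd⟩ := hA
  intro S hS
  set e : S → Fin n := fun i => (i : Fin n) with he_def
  have he : Function.Injective e := Subtype.coe_injective
  set B : Matrix S S ℝ := A.submatrix e e with hB
  set dS : S → ℝ := fun i => d (e i) with hdS
  -- the submatrix of the Lyapunov certificate
  have hsub : ((A * Matrix.diagonal d + Matrix.diagonal d * Aᵀ).submatrix e e)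
      = B * Matrix.diagonal dS + Matrix.diagonal dS * Bᵀ := by
    ext i j
    simp [hB, hdS, Matrix.add_apply, Matrix.mul_apply, Matrix.diagonal_apply,
      Finset.mul_sum, Finset.sum_mul, mul_ite, ite_mul, mul_zero, zero_mul,
      Finset.sum_ite_eq, Finset.sum_ite_eq', he.eq_iff]
  have hpd' : (B * Matrix.diagonal dS + Matrix.diagonal dS * Bᵀ).PosDef := by
    rw [← hsub]
    exact posDef_submatrix_of_injective hpd e he
  -- set M = B * diagonal dS; then M + Mᵀ is PosDef
  have hMt : (B * Matrix.diagonal dS)ᵀ = Matrix.diagonal dS * Bᵀ := by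
    rw [transpose_mul, Matrix.diagonal_transpose]
  have hpd'' : ((B * Matrix.diagonal dS) + (B * Matrix.diagonal dS)ᵀ).PosDef := by
    rw [hMt]; exact hpd'
  -- transfer to Fin (card S) via an equiv to use the det lemma
  have hcard : 0 < (B * Matrix.diagonal dS).det := by
    let eq : S ≃ Fin S.card := S.equivFin
    have : ((B * Matrix.diagonal dS).submatrix eq.symm eq.symm
        + ((B * Matrix.diagonal dS).submatrix eq.symm eq.symm)ᵀ).PosDef := by
      have : ((B * Matrix.diagonal dS) + (B * Matrix.diagonal dS)ᵀ).submatrix eq.symm eq.symm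
          = (B * Matrix.diagonal dS).submatrix eq.symm eq.symm
            + ((B * Matrix.diagonal dS).submatrix eq.symm eq.symm)ᵀ := by
        ext i j; simp [Matrix.add_apply]
      rw [← this]
      exact posDef_submatrix_of_injective hpd'' _ eq.symm.injective
    have hdet := det_pos_of_posDef_add_transpose this
    rwa [Matrix.det_submatrix_equiv_self] at hdet
  rw [Matrix.det_mul, Matrix.det_diagonal] at hcard
  have hprod : 0 < ∏ i, dS i := Finset.prod_pos fun i _ => hd _
  nlinarith [hcard, hprod, mul_pos_iff.mp hcard]
end

section
/- A 2×2 real matrix A is Lyapunov diagonally stable if and only if A is a P-matrix, i.e., its two diagonal entries and its determinant are all strictly positive. -/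
open Matrix

lemma exists_good_d (a b c e : ℝ) (ha : 0 < a) (he : 0 < e) (hdet : b * c < a * e) :
    ∃ d0 d1 : ℝ, 0 < d0 ∧ 0 < d1 ∧ (b * d1 + c * d0) ^ 2 < 4 * d0 * d1 * a * e := by
  have hae : 0 < a * e := mul_pos ha he
  rcases eq_or_ne b 0 with hb | hb
  · refine ⟨1, c ^ 2 / (4 * (a * e)) + 1, one_pos, by positivity, ?_⟩
    subst hb
    have h2 : 4 * 1 * (c ^ 2 / (4 * (a * e)) + 1) * a * e = c ^ 2 + 4 * (a * e) := by
      field_simp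
    rw [h2]
    simp only [zero_mul, zero_add, mul_one]
    nlinarith [hae]
  rcases eq_or_ne c 0 with hc | hc
  · refine ⟨b ^ 2 / (4 * (a * e)) + 1, 1, by positivity, one_pos, ?_⟩
    subst hc
    have h2 : 4 * (b ^ 2 / (4 * (a * e)) + 1) * 1 * a * e = b ^ 2 + 4 * (a * e) := by
      field_simp
    rw [h2]
    simp only [zero_mul, add_zero, mul_one]
    nlinarith [hae]
  refine ⟨|b|, |c|, abs_pos.mpr hb, abs_pos.mpr hc, ?_⟩
  rcases hb.lt_or_gt with hb' | hb' <;> rcases hc.lt_or_gt with hc' | hc'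
  · rw [abs_of_neg hb', abs_of_neg hc']
    have hbc : 0 < b * c := mul_pos_of_neg_of_neg hb' hc'
    nlinarith [mul_lt_mul_of_pos_left hdet (by linarith : (0:ℝ) < 4 * (b * c))]
  · rw [abs_of_neg hb', abs_of_pos hc']
    nlinarith [mul_pos (mul_pos (mul_pos (neg_pos.mpr hb') hc') ha) he]
  · rw [abs_of_pos hb', abs_of_neg hc']
    nlinarith [mul_pos (mul_pos (mul_pos hb' (neg_pos.mpr hc')) ha) he]
  · rw [abs_of_pos hb', abs_of_pos hc']
    have hbc : 0 < b * c := mul_pos hb' hc'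
    nlinarith [mul_lt_mul_of_pos_left hdet (by linarith : (0:ℝ) < 4 * (b * c))]

lemma quadform_eq (A : Matrix (Fin 2) (Fin 2) ℝ) (d : Fin 2 → ℝ) (x : Fin 2 → ℝ) :
    dotProduct (star x) ((A * Matrix.diagonal d + Matrix.diagonal d * Aᵀ) *ᵥ x) =
      2 * A 0 0 * d 0 * x 0 ^ 2 + 2 * (A 0 1 * d 1 + A 1 0 * d 0) * x 0 * x 1
        + 2 * A 1 1 * d 1 * x 1 ^ 2 := by
  simp [dotProduct, mulVec, Fin.sum_univ_two, Matrix.add_apply, mul_diagonal,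
    diagonal_mul, transpose_apply]
  ring

/-- **Barker–Berman–Plemmons.** A `2 × 2` real matrix is Lyapunov diagonally
stable if and only if it is a P-matrix, i.e. both diagonal entries and the
determinant are strictly positive. -/
theorem lyapunov_diag_stable_two_by_two_iff_P_matrix
    (A : Matrix (Fin 2) (Fin 2) ℝ) :
    (∃ d : Fin 2 → ℝ, (∀ i, 0 < d i) ∧
        (A * Matrix.diagonal d + Matrix.diagonal d * Aᵀ).PosDef) ↔
    (0 < A 0 0 ∧ 0 < A 1 1 ∧ 0 < A.det) := by
  constructor
  · rintro ⟨d, hd, hM⟩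
    have h0 := (posDef_iff_dotProduct_mulVec.mp hM).2 (x := ![1, 0]) (by intro h; simpa using congrFun h 0)
    have h1 := (posDef_iff_dotProduct_mulVec.mp hM).2 (x := ![0, 1]) (by intro h; simpa using congrFun h 1)
    rw [quadform_eq] at h0 h1
    simp only [Matrix.cons_val_zero, Matrix.cons_val_one, Matrix.head_cons] at h0 h1
    have hdet := hM.det_pos
    rw [Matrix.det_fin_two] at hdet
    simp only [Matrix.add_apply, Matrix.mul_diagonal, Matrix.diagonal_mul,
      Matrix.transpose_apply] at hdet
    have hA00 : 0 < A 0 0 := by nlinarith [hd 0]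
    have hA11 : 0 < A 1 1 := by nlinarith [hd 1]
    refine ⟨hA00, hA11, ?_⟩
    rw [Matrix.det_fin_two]
    nlinarith [hd 0, hd 1, sq_nonneg (A 0 1 * d 1 - A 1 0 * d 0),
      mul_pos (hd 0) (hd 1)]
  · rintro ⟨hA00, hA11, hdet⟩
    rw [Matrix.det_fin_two] at hdet
    obtain ⟨d0, d1, hd0, hd1, hkey⟩ :=
      exists_good_d (A 0 0) (A 0 1) (A 1 0) (A 1 1) hA00 hA11 (by linarith)
    refine ⟨![d0, d1], by intro i; fin_cases i <;> simpa, posDef_iff_dotProduct_mulVec.mpr ⟨?_, ?_⟩⟩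
    · ext i j
      fin_cases i <;> fin_cases j <;>
        simp [Matrix.conjTranspose_apply, Matrix.add_apply, Matrix.mul_diagonal,
          Matrix.diagonal_mul, Matrix.transpose_apply] <;> ring
    · intro x hx
      rw [quadform_eq]
      simp only [Matrix.cons_val_zero, Matrix.cons_val_one, Matrix.head_cons]
      have hx' : x 0 ≠ 0 ∨ x 1 ≠ 0 := by
        by_contra h
        push_neg at h
        exact hx (funext fun i => by fin_cases i <;> simp [h.1, h.2])
      rcases eq_or_ne (x 1) 0 with h1 | h1
      · have h0 : x 0 ≠ 0 := by tauto
        rw [h1]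
        have : 0 < x 0 ^ 2 := by positivity
        nlinarith [mul_pos hA00 hd0]
      · have hx1 : 0 < x 1 ^ 2 := by positivity
        nlinarith [sq_nonneg (2 * A 0 0 * d0 * x 0 + (A 0 1 * d1 + A 1 0 * d0) * x 1),
          mul_pos (sub_pos.mpr hkey) hx1, mul_pos hA00 hd0]
end

section
/- If a real n×n matrix A is Lyapunov diagonally stable, then every principal submatrix of A (obtained by keeping the rows and columns indexed by any nonempty subset S of {1,…,n}) is Lyapunov diagonally stable. -/
open Matrix

lemma posdef_submatrix_of_injective {m n : Type*} [Fintype m] [Fintype n] [DecidableEq n]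
    {M : Matrix n n ℝ} (hM : M.PosDef) {f : m → n} (hf : Function.Injective f) :
    (M.submatrix f f).PosDef := by
  classical
  refine PosDef.of_dotProduct_mulVec_pos (hM.1.submatrix f) fun x hx => ?_
  set y : n → ℝ := fun j => ∑ i, if f i = j then x i else 0 with hy
  have hyf : ∀ i, y (f i) = x i := by
    intro i
    simp only [hy]
    rw [Finset.sum_eq_single i (fun b _ hb => if_neg (fun h => hb (hf h)))
      (fun h => absurd (Finset.mem_univ i) h)]
    simp
  have hy0 : y ≠ 0 := by
    obtain ⟨i, hi⟩ := Function.ne_iff.mp hx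
    intro h
    exact hi (by rw [← hyf i, h]; rfl)
  have hMy : ∀ a, (M *ᵥ y) a = ∑ j, M a (f j) * x j := by
    intro a
    simp only [mulVec, dotProduct, hy, Finset.mul_sum, mul_ite, mul_zero]
    rw [Finset.sum_comm]
    refine Finset.sum_congr rfl fun j _ => ?_
    rw [Finset.sum_eq_single (f j) (fun b _ hb => if_neg (Ne.symm hb))
      (fun h => absurd (Finset.mem_univ (f j)) h)]
    simp
  have key : star x ⬝ᵥ ((M.submatrix f f) *ᵥ x) = star y ⬝ᵥ (M *ᵥ y) := by
    simp only [dotProduct, star, id, RCLike.star_def, starRingEnd_apply, star_trivial]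
    calc ∑ i, x i * ((M.submatrix f f) *ᵥ x) i
        = ∑ i, y (f i) * (M *ᵥ y) (f i) := by
          refine Finset.sum_congr rfl fun i _ => ?_
          rw [hyf, hMy]
          simp [mulVec, dotProduct, submatrix]
      _ = ∑ a, y a * (M *ᵥ y) a := by
          rw [← Finset.sum_image (f := fun a => y a * (M *ᵥ y) a)
            (fun a _ b _ h => hf h)]
          refine Finset.sum_subset (Finset.subset_univ _) fun a _ ha => ?_
          have : y a = 0 := by
            simp only [hy]
            refine Finset.sum_eq_zero fun i _ => if_neg fun h => ha ?_
            exact Finset.mem_image.mpr ⟨i, Finset.mem_univ i, h⟩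
          simp [this]
  rw [key]
  exact hM.dotProduct_mulVec_pos hy0

/-- **Cross.** Every principal submatrix of a Lyapunov diagonally stable real
matrix is Lyapunov diagonally stable. -/
theorem principal_submatrix_lyapunov_diag_stable {n : ℕ}
    (A : Matrix (Fin n) (Fin n) ℝ)
    (hA : ∃ d : Fin n → ℝ, (∀ i, 0 < d i) ∧
        (A * Matrix.diagonal d + Matrix.diagonal d * Aᵀ).PosDef) :
    ∀ S : Finset (Fin n), S.Nonempty →
      ∃ e : S → ℝ, (∀ i, 0 < e i) ∧
        ((A.submatrix (fun i : S => (i : Fin n)) (fun i : S => (i : Fin n))) *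
            Matrix.diagonal e +
          Matrix.diagonal e *
            (A.submatrix (fun i : S => (i : Fin n)) (fun i : S => (i : Fin n)))ᵀ).PosDef := by
  obtain ⟨d, hd, hpd⟩ := hA
  intro S hS
  refine ⟨fun i => d i, fun i => hd i, ?_⟩
  have hf : Function.Injective (fun i : S => (i : Fin n)) := Subtype.val_injective
  have := posdef_submatrix_of_injective hpd hf
  convert this using 1
  ext i j
  simp only [Matrix.add_apply, Matrix.mul_apply, Matrix.diagonal_apply,
    Matrix.submatrix_apply, Matrix.transpose_apply, mul_ite, ite_mul, mul_zero, zero_mul,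
    Subtype.coe_inj]
  rw [Finset.sum_ite_eq' Finset.univ j, Finset.sum_ite_eq Finset.univ i]
  simp
end

section
/- If a real n×n matrix A is Lyapunov diagonally stable, then A is multiplicative D-stable: for every n×n diagonal matrix D with strictly positive diagonal entries, all eigenvalues of D·A have strictly positive real part. -/
open Matrix

lemma re_quad_pos_of_posDef {n : ℕ} {Q : Matrix (Fin n) (Fin n) ℝ} (hQ : Q.PosDef)
    (w : Fin n → ℂ) (hw : w ≠ 0) :
    0 < (star w ⬝ᵥ (Q.map Complex.ofReal) *ᵥ w).re := by
  set x : Fin n → ℝ := fun i => (w i).re with hx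
  set y : Fin n → ℝ := fun i => (w i).im with hy
  have key : (star w ⬝ᵥ (Q.map Complex.ofReal) *ᵥ w).re
      = x ⬝ᵥ Q *ᵥ x + y ⬝ᵥ Q *ᵥ y := by
    simp only [dotProduct, mulVec, Matrix.map_apply, Pi.star_apply,
      Complex.re_sum, Finset.mul_sum, ← Finset.sum_add_distrib]
    refine Finset.sum_congr rfl fun i _ => Finset.sum_congr rfl fun j _ => ?_
    simp [Complex.mul_re, Complex.mul_im, hx, hy]
  rw [key]
  have hxy : x ≠ 0 ∨ y ≠ 0 := by
    by_contra h
    push_neg at h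
    apply hw
    funext i
    have h1 : x i = 0 := by rw [h.1]; rfl
    have h2 : y i = 0 := by rw [h.2]; rfl
    exact Complex.ext h1 h2
  have hxnn : 0 ≤ x ⬝ᵥ Q *ᵥ x := by simpa using hQ.posSemidef.dotProduct_mulVec_nonneg x
  have hynn : 0 ≤ y ⬝ᵥ Q *ᵥ y := by simpa using hQ.posSemidef.dotProduct_mulVec_nonneg y
  rcases hxy with h | h
  · have := hQ.dotProduct_mulVec_pos h
    simp only [star_trivial] at this
    linarith
  · have := hQ.dotProduct_mulVec_pos h
    simp only [star_trivial] at this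
    linarith

/-- **Cross.** A Lyapunov diagonally stable real matrix is multiplicative
D-stable: for every positive diagonal matrix `D`, every eigenvalue of `D * A`
has strictly positive real part. -/
theorem lyapunov_diag_stable_is_D_stable {n : ℕ} (A : Matrix (Fin n) (Fin n) ℝ)
    (hA : ∃ d : Fin n → ℝ, (∀ i, 0 < d i) ∧
        (A * Matrix.diagonal d + Matrix.diagonal d * Aᵀ).PosDef) :
    ∀ e : Fin n → ℝ, (∀ i, 0 < e i) →
      ∀ μ ∈ spectrum ℂ ((Matrix.diagonal e * A).map Complex.ofReal), 0 < μ.re := by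
  obtain ⟨d, hd, hQ⟩ := hA
  intro e he μ hμ
  set M : Matrix (Fin n) (Fin n) ℂ := (Matrix.diagonal e * A).map Complex.ofReal with hM
  have mapmul : ∀ (X Y : Matrix (Fin n) (Fin n) ℝ),
      (X * Y).map Complex.ofReal = X.map Complex.ofReal * Y.map Complex.ofReal :=
    fun X Y => Matrix.map_mul (f := Complex.ofRealHom)
  -- extract a left eigenvector
  have hdet : ((algebraMap ℂ (Matrix (Fin n) (Fin n) ℂ)) μ - M).det = 0 := by
    rw [spectrum.mem_iff] at hμ
    by_contra h
    exact hμ ((Matrix.isUnit_iff_isUnit_det _).mpr (isUnit_iff_ne_zero.mpr h))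
  obtain ⟨v, hv0, hv⟩ := Matrix.exists_vecMul_eq_zero_iff.mpr hdet
  have heig : v ᵥ* M = μ • v := by
    have := hv
    rw [Matrix.vecMul_sub] at this
    have h2 : v ᵥ* (algebraMap ℂ (Matrix (Fin n) (Fin n) ℂ)) μ = μ • v := by
      simp [Matrix.algebraMap_eq_diagonal, Matrix.vecMul_diagonal]
      funext i
      simp [Matrix.vecMul_diagonal]
      ring
    rw [h2] at this
    linear_combination (norm := module) -this
  -- the key real matrix identity
  set Q : Matrix (Fin n) (Fin n) ℝ := A * Matrix.diagonal d + Matrix.diagonal d * Aᵀ with hQdef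
  have hid : (Matrix.diagonal e * A) * Matrix.diagonal (fun i => d i * e i)
      + Matrix.diagonal (fun i => d i * e i) * (Matrix.diagonal e * A)ᵀ
      = Matrix.diagonal e * Q * Matrix.diagonal e := by
    rw [hQdef, Matrix.transpose_mul, Matrix.diagonal_transpose]
    ext i j
    simp only [Matrix.add_apply, Matrix.mul_diagonal, Matrix.diagonal_mul,
      Matrix.transpose_apply]
    ring
  -- complexified quantities
  set Bc : Matrix (Fin n) (Fin n) ℂ :=
    (Matrix.diagonal (fun i => d i * e i)).map Complex.ofReal with hBc
  have hBcd : Bc = Matrix.diagonal (fun i => ((d i * e i : ℝ) : ℂ)) := by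
    rw [hBc, Matrix.diagonal_map (by simp)]
  set β : ℂ := star v ⬝ᵥ Bc *ᵥ v with hβ
  have hβval : β = ((∑ i, d i * e i * Complex.normSq (v i) : ℝ) : ℂ) := by
    rw [hβ, hBcd]
    simp only [dotProduct, Matrix.mulVec_diagonal, Pi.star_apply]
    rw [Complex.ofReal_sum]
    refine Finset.sum_congr rfl fun i _ => ?_
    have h1 : star (v i) * (((d i * e i : ℝ) : ℂ) * v i)
        = ((d i * e i : ℝ) : ℂ) * (v i * star (v i)) := by ring
    rw [h1, show (star (v i)) = (starRingEnd ℂ) (v i) from rfl, Complex.mul_conj]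
    push_cast
    ring
  have hβre : 0 < β.re ∧ β.im = 0 := by
    rw [hβval]
    refine ⟨?_, Complex.ofReal_im _⟩
    rw [Complex.ofReal_re]
    obtain ⟨i, hi⟩ := Function.ne_iff.mp hv0
    have hnn : ∀ j, 0 ≤ d j * e j * Complex.normSq (v j) := fun j =>
      mul_nonneg (le_of_lt (mul_pos (hd j) (he j))) (Complex.normSq_nonneg _)
    refine Finset.sum_pos' (fun j _ => hnn j) ⟨i, Finset.mem_univ i, ?_⟩
    exact mul_pos (mul_pos (hd i) (he i)) (Complex.normSq_pos.mpr hi)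
  -- z computation
  set z : ℂ := star v ⬝ᵥ (M * Bc + Bc * Mᵀ) *ᵥ v with hz
  have hMT : Mᵀ *ᵥ v = μ • v := by
    rw [Matrix.mulVec_transpose, heig]
  have hterm2 : star v ⬝ᵥ (Bc * Mᵀ) *ᵥ v = μ * β := by
    rw [← Matrix.mulVec_mulVec, hMT, Matrix.mulVec_smul, dotProduct_smul,
      smul_eq_mul, ← hβ]
  have hMr : ∀ i j, star (M i j) = M i j := by
    intro i j
    rw [hM]
    simp [Matrix.map_apply, Complex.star_def, Complex.conj_ofReal]
  have hstarM : star v ᵥ* M = (starRingEnd ℂ μ) • star v := by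
    funext j
    have h := congrFun heig j
    simp only [Matrix.vecMul, dotProduct, Pi.smul_apply, smul_eq_mul] at h
    have key : ∑ i, star (v i) * M i j = (starRingEnd ℂ) μ * star (v j) := by
      calc ∑ i, star (v i) * M i j
          = star (∑ i, v i * M i j) := by
            rw [star_sum]
            exact Finset.sum_congr rfl fun i _ => by rw [star_mul', hMr, mul_comm]
        _ = star (μ * v j) := by rw [h]
        _ = (starRingEnd ℂ) μ * star (v j) := by
            rw [star_mul']
            rfl
    simpa [Matrix.vecMul, dotProduct] using key
  have hterm1 : star v ⬝ᵥ (M * Bc) *ᵥ v = (starRingEnd ℂ μ) * β := by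
    rw [← Matrix.mulVec_mulVec, Matrix.dotProduct_mulVec, hstarM,
      smul_dotProduct, smul_eq_mul, ← hβ]
  have hzval : z = ((2 * μ.re : ℝ) : ℂ) * β := by
    rw [hz, Matrix.add_mulVec, dotProduct_add, hterm1, hterm2,
      ← Complex.add_conj]
    ring
  -- z.re > 0 from posdef
  have hzpos : 0 < z.re := by
    have hE : (Matrix.diagonal e).map Complex.ofReal *ᵥ v ≠ 0 := by
      intro h
      apply hv0
      funext i
      have hh := congrFun h i
      rw [Matrix.diagonal_map (by simp), Matrix.mulVec_diagonal] at hh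
      have he' : ((e i : ℝ) : ℂ) ≠ 0 := by
        simp only [ne_eq, Complex.ofReal_eq_zero]
        exact ne_of_gt (he i)
      exact (mul_eq_zero.mp hh).resolve_left he'
    have hEQE : M * Bc + Bc * Mᵀ
        = ((Matrix.diagonal e * Q * Matrix.diagonal e).map Complex.ofReal) := by
      have mapadd : ∀ (X Y : Matrix (Fin n) (Fin n) ℝ),
          (X + Y).map Complex.ofReal = X.map Complex.ofReal + Y.map Complex.ofReal := by
        intro X Y
        ext i j
        simp [Matrix.map_apply]
      rw [hM, hBc, ← hid]
      simp only [mapadd, mapmul, Matrix.transpose_map]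
    have hswap : ∀ w : Fin n → ℂ,
        star v ⬝ᵥ ((Matrix.diagonal e).map Complex.ofReal *ᵥ w)
          = star ((Matrix.diagonal e).map Complex.ofReal *ᵥ v) ⬝ᵥ w := by
      intro w
      simp only [dotProduct, Matrix.diagonal_map (by simp : ((0:ℝ):ℂ) = 0),
        Matrix.mulVec_diagonal, Pi.star_apply]
      refine Finset.sum_congr rfl fun i _ => ?_
      rw [star_mul', Complex.star_def, Complex.conj_ofReal]
      ring
    have hw := re_quad_pos_of_posDef hQ ((Matrix.diagonal e).map Complex.ofReal *ᵥ v) hE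
    rw [hz, hEQE, mapmul, mapmul, ← Matrix.mulVec_mulVec, ← Matrix.mulVec_mulVec, hswap]
    exact hw
  rw [hzval] at hzpos
  rw [Complex.mul_re, Complex.ofReal_re, Complex.ofReal_im, hβre.2] at hzpos
  simp only [mul_zero, zero_mul, sub_zero] at hzpos
  nlinarith [hβre.1]
end

section
/- If a real n×n matrix A is Lyapunov diagonally stable, then A is additive D-stable: for every n×n diagonal matrix E with nonnegative diagonal entries, all eigenvalues of A + E have strictly positive real part. -/
open Matrix Complex

lemma re_dot_eq {n : ℕ} (S : Matrix (Fin n) (Fin n) ℝ) (x : Fin n → ℂ) :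
    (star x ⬝ᵥ (S.map Complex.ofReal) *ᵥ x).re =
      (fun i => (x i).re) ⬝ᵥ S *ᵥ (fun i => (x i).re)
      + (fun i => (x i).im) ⬝ᵥ S *ᵥ (fun i => (x i).im) := by
  simp only [dotProduct, mulVec, map_apply, Pi.star_apply, Finset.mul_sum, Complex.re_sum,
    ← Finset.sum_add_distrib]
  refine Finset.sum_congr rfl fun i _ => Finset.sum_congr rfl fun j _ => ?_
  simp [Complex.mul_re, Complex.mul_im]

lemma re_dot_pos {n : ℕ} {S : Matrix (Fin n) (Fin n) ℝ} (hS : S.PosDef)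
    (x : Fin n → ℂ) (hx : x ≠ 0) :
    0 < (star x ⬝ᵥ (S.map Complex.ofReal) *ᵥ x).re := by
  rw [re_dot_eq]
  have hre := hS.posSemidef.dotProduct_mulVec_nonneg (fun i => (x i).re)
  have him := hS.posSemidef.dotProduct_mulVec_nonneg (fun i => (x i).im)
  simp only [star_trivial, RCLike.re_to_real] at hre him
  by_cases hR : (fun i => (x i).re) = 0
  · have hI : (fun i => (x i).im) ≠ 0 := by
      intro hI
      apply hx
      funext i
      exact Complex.ext (congrFun hR i) (congrFun hI i)
    have := hS.dotProduct_mulVec_pos hI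
    simp only [star_trivial] at this
    linarith
  · have := hS.dotProduct_mulVec_pos hR
    simp only [star_trivial] at this
    linarith

lemma dot_transpose_conj {n : ℕ} (P : Matrix (Fin n) (Fin n) ℝ) (x : Fin n → ℂ) :
    star x ⬝ᵥ (P.map Complex.ofReal)ᵀ *ᵥ x
      = (starRingEnd ℂ) (star x ⬝ᵥ (P.map Complex.ofReal) *ᵥ x) := by
  simp only [dotProduct, mulVec, transpose_apply, map_apply, Pi.star_apply, Finset.mul_sum,
    map_sum]
  rw [Finset.sum_comm]
  refine Finset.sum_congr rfl fun i _ => Finset.sum_congr rfl fun j _ => ?_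
  simp [Complex.ext_iff, Complex.mul_re, Complex.mul_im]
  constructor <;> ring

/-- **Cross.** A Lyapunov diagonally stable real matrix is additive D-stable:
for every nonnegative diagonal matrix `E`, every eigenvalue of `A + E` has
strictly positive real part. -/
theorem lyapunov_diag_stable_is_additive_D_stable {n : ℕ}
    (A : Matrix (Fin n) (Fin n) ℝ)
    (hA : ∃ d : Fin n → ℝ, (∀ i, 0 < d i) ∧
        (A * Matrix.diagonal d + Matrix.diagonal d * Aᵀ).PosDef) :
    ∀ e : Fin n → ℝ, (∀ i, 0 ≤ e i) →
      ∀ μ ∈ spectrum ℂ ((A + Matrix.diagonal e).map Complex.ofReal), 0 < μ.re := by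
  obtain ⟨d, hd, hPD⟩ := hA
  intro e he μ hμ
  set B := A + Matrix.diagonal e with hB
  -- The Lyapunov quantity for B is still positive definite.
  have hS : (B * Matrix.diagonal d + Matrix.diagonal d * Bᵀ).PosDef := by
    have heq : B * Matrix.diagonal d + Matrix.diagonal d * Bᵀ
        = (A * Matrix.diagonal d + Matrix.diagonal d * Aᵀ)
          + Matrix.diagonal (fun i => e i * d i + d i * e i) := by
      simp only [hB, add_mul, mul_add, transpose_add, diagonal_transpose,
        diagonal_mul_diagonal, ← diagonal_add]
      abel
    rw [heq]
    exact hPD.add_posSemidef (posSemidef_diagonal_iff.mpr fun i => by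
      nlinarith [hd i, he i])
  -- Extract an eigenvector.
  rw [spectrum.mem_iff, Matrix.isUnit_iff_isUnit_det, isUnit_iff_ne_zero, not_not,
    ← Matrix.exists_mulVec_eq_zero_iff] at hμ
  obtain ⟨v, hv, hv2⟩ := hμ
  rw [Algebra.algebraMap_eq_smul_one, sub_mulVec, smul_mulVec, one_mulVec,
    sub_eq_zero] at hv2
  have hmv : (B.map Complex.ofReal) *ᵥ v = μ • v := hv2.symm
  -- Scale the eigenvector by D⁻¹.
  set x : Fin n → ℂ := fun i => (((d i)⁻¹ : ℝ) : ℂ) * v i with hxdef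
  have hdne : ∀ i, (((d i) : ℝ) : ℂ) ≠ 0 := fun i => by exact_mod_cast (hd i).ne'
  have hx : x ≠ 0 := by
    intro h
    apply hv
    funext i
    have h1 := congrFun h i
    simp only [hxdef, Pi.zero_apply, mul_eq_zero, inv_eq_zero] at h1
    rcases h1 with h1 | h1
    · exact absurd h1 (Complex.ofReal_ne_zero.mpr (inv_ne_zero (hd i).ne'))
    · exact h1
  have hDx : ((Matrix.diagonal d).map Complex.ofReal) *ᵥ x = v := by
    funext i
    rw [Matrix.diagonal_map (by simp)]
    rw [mulVec_diagonal]
    simp only [hxdef]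
    rw [← mul_assoc]
    push_cast
    rw [mul_inv_cancel₀ (hdne i), one_mul]
  set c : ℂ := star x ⬝ᵥ v with hcdef
  have hc_eq : star x ⬝ᵥ ((Matrix.diagonal d).map Complex.ofReal) *ᵥ x = c := by
    rw [hDx]
  have hc_re : 0 < c.re := by
    rw [← hc_eq]
    exact re_dot_pos (Matrix.PosDef.diagonal hd) x hx
  have hc_im : c.im = 0 := by
    have h := dot_transpose_conj (Matrix.diagonal d) x
    rw [← Matrix.transpose_map, Matrix.diagonal_transpose, hc_eq] at h
    have := congrArg Complex.im h
    simp only [Complex.conj_im] at this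
    linarith
  -- Compute the quadratic form of the Lyapunov matrix at x.
  have hmapmul : (B * Matrix.diagonal d).map Complex.ofReal
      = B.map Complex.ofReal * (Matrix.diagonal d).map Complex.ofReal := by
    ext i j
    simp only [Matrix.map_apply, Matrix.mul_apply]
    push_cast
    rfl
  have h1 : star x ⬝ᵥ ((B * Matrix.diagonal d).map Complex.ofReal) *ᵥ x = μ * c := by
    rw [hmapmul, ← mulVec_mulVec, hDx, hmv, dotProduct_smul, smul_eq_mul, hcdef]
  have h2 : star x ⬝ᵥ ((Matrix.diagonal d * Bᵀ).map Complex.ofReal) *ᵥ x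
      = (starRingEnd ℂ) (μ * c) := by
    have hT : Matrix.diagonal d * Bᵀ = (B * Matrix.diagonal d)ᵀ := by
      rw [transpose_mul, diagonal_transpose]
    rw [hT, Matrix.transpose_map, dot_transpose_conj, h1]
  have hpos := re_dot_pos hS x hx
  rw [Matrix.map_add _ Complex.ofReal_add, add_mulVec, dotProduct_add, h1, h2] at hpos
  simp only [Complex.add_re, Complex.conj_re, Complex.mul_re, hc_im, mul_zero, sub_zero] at hpos
  nlinarith [hc_re]
end

section
/- Let A be a real n×n Z-matrix (all off-diagonal entries of A are nonpositive). Then A is Lyapunov diagonally stable if and only if A is a P-matrix (every principal minor of A is strictly positive), i.e., if and only if A is an M-matrix. -/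
open Matrix Finset

section Aux
variable {m : Type*} [Fintype m] [DecidableEq m]

/-- Weighted diagonal dominance criterion for positive definiteness. -/
lemma posdef_of_dominance (N : Matrix m m ℝ) (hsym : N.IsHermitian)
    (hoff : ∀ i j, i ≠ j → N i j ≤ 0)
    (v : m → ℝ) (hv : ∀ i, 0 < v i) (hNv : ∀ i, 0 < (N *ᵥ v) i) :
    N.PosDef := by
  have hsymm : ∀ i j, N j i = N i j := fun i j => by simpa using hsym.apply i j
  refine Matrix.PosDef.of_dotProduct_mulVec_pos hsym fun x hx => ?_
  have key : ∀ i j, N i j * ((x i)^2 * v j / v i + (x j)^2 * v i / v j) / 2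
      ≤ x i * (N i j * x j) := by
    intro i j
    rcases eq_or_ne i j with rfl | hij
    · have hvi : v i ≠ 0 := (hv i).ne'
      apply le_of_eq
      field_simp
      ring
    · have h1 := hoff i j hij
      have hp := hv i; have hq := hv j
      have hS : 2*(x i * x j) ≤ (x i)^2 * v j / v i + (x j)^2 * v i / v j := by
        rw [← sub_nonneg]
        have heq : (x i)^2 * v j / v i + (x j)^2 * v i / v j - 2*(x i * x j)
            = (x i * v j - x j * v i)^2 / (v i * v j) := by
          field_simp; ring
        rw [heq]; positivity
      have h2 := mul_le_mul_of_nonpos_left hS h1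
      linarith
  have expand : x ⬝ᵥ N *ᵥ x = ∑ i, ∑ j, x i * (N i j * x j) := by
    simp [dotProduct, mulVec, Finset.mul_sum]
  have lhs_eq : (∑ i, (x i)^2 / v i * (N *ᵥ v) i)
      = ∑ i, ∑ j, N i j * ((x i)^2 * v j / v i + (x j)^2 * v i / v j) / 2 := by
    have step1 : (∑ i, (x i)^2 / v i * (N *ᵥ v) i)
        = ∑ i, ∑ j, N i j * ((x i)^2 * v j / v i) := by
      refine Finset.sum_congr rfl fun i _ => ?_
      simp only [mulVec, dotProduct, Finset.mul_sum]
      refine Finset.sum_congr rfl fun j _ => by ring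
    rw [step1]
    have step2 : ∀ i j, N i j * ((x i)^2 * v j / v i + (x j)^2 * v i / v j) / 2
        = N i j * ((x i)^2 * v j / v i) / 2 + N i j * ((x j)^2 * v i / v j) / 2 := by
      intro i j; ring
    simp only [step2, Finset.sum_add_distrib]
    have step3 : (∑ i, ∑ j, N i j * ((x j)^2 * v i / v j) / 2)
        = ∑ i, ∑ j, N i j * ((x i)^2 * v j / v i) / 2 := by
      calc (∑ i, ∑ j, N i j * ((x j)^2 * v i / v j) / 2)
          = ∑ j, ∑ i, N i j * ((x j)^2 * v i / v j) / 2 := Finset.sum_comm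
        _ = ∑ i, ∑ j, N i j * ((x i)^2 * v j / v i) / 2 :=
            Finset.sum_congr rfl fun i _ => Finset.sum_congr rfl fun j _ => by rw [hsymm i j]
    rw [step3]
    symm
    rw [← Finset.sum_add_distrib]
    refine Finset.sum_congr rfl fun i _ => ?_
    rw [← Finset.sum_add_distrib]
    exact Finset.sum_congr rfl fun j _ => by ring
  have hquad : (∑ i, (x i)^2 / v i * (N *ᵥ v) i) ≤ x ⬝ᵥ N *ᵥ x := by
    rw [expand, lhs_eq]
    exact Finset.sum_le_sum fun i _ => Finset.sum_le_sum fun j _ => key i j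
  have hpos : 0 < ∑ i, (x i)^2 / v i * (N *ᵥ v) i := by
    obtain ⟨i0, hi0⟩ : ∃ i, x i ≠ 0 := by
      by_contra h; push_neg at h; exact hx (funext h)
    refine Finset.sum_pos' (fun i _ => mul_nonneg (div_nonneg (sq_nonneg _) (hv i).le) (hNv i).le)
      ⟨i0, Finset.mem_univ _, ?_⟩
    have hx2 : 0 < (x i0)^2 := by positivity
    exact mul_pos (div_pos hx2 (hv i0)) (hNv i0)
  simpa using lt_of_lt_of_le hpos hquad

lemma posdef_combo {P Q : Matrix m m ℝ} (hPp : P.PosDef) (hQ : Q.PosDef) {t : ℝ}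
    (h0 : 0 ≤ t) (h1 : t ≤ 1) : (t • P + (1 - t) • Q).PosDef := by
  rw [posDef_iff_dotProduct_mulVec] at hPp hQ ⊢
  constructor
  · have h1' := hPp.1; have h2' := hQ.1
    simp only [Matrix.IsHermitian, conjTranspose_add, conjTranspose_smul, star_trivial] at *
    rw [h1', h2']
  · intro x hx
    have hp := hPp.2 hx
    have hq := hQ.2 hx
    simp only [add_mulVec, smul_mulVec, dotProduct_add, dotProduct_smul, smul_eq_mul] at *
    rcases eq_or_lt_of_le h0 with rfl | h0'
    · linarith [hq]
    · nlinarith [mul_pos h0' hp, mul_nonneg (by linarith : (0:ℝ) ≤ 1 - t) hq.le]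

lemma det_pos_of_lyap (A : Matrix m m ℝ) (d : m → ℝ) (hd : ∀ i, 0 < d i)
    (hP : (A * diagonal d + diagonal d * Aᵀ).PosDef) : 0 < A.det := by
  set B : ℝ → Matrix m m ℝ := fun t => t • A + (1 - t) • 1 with hB
  have hDpos : (diagonal d + diagonal d).PosDef := by
    have : (diagonal d + diagonal d) = diagonal (fun i => d i + d i) := by
      simp [Matrix.diagonal_add]
    rw [this]
    exact (Matrix.posDef_diagonal_iff).2 fun i => by linarith [hd i]
  have hcomb : ∀ t : ℝ, t ∈ Set.Icc (0:ℝ) 1 →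
      (B t * diagonal d + diagonal d * (B t)ᵀ).PosDef := by
    intro t ht
    have heq : B t * diagonal d + diagonal d * (B t)ᵀ
        = t • (A * diagonal d + diagonal d * Aᵀ) + (1 - t) • (diagonal d + diagonal d) := by
      simp only [hB, transpose_add, transpose_smul, transpose_one, add_mul, mul_add,
        Matrix.smul_mul, Matrix.mul_smul, one_mul, mul_one, smul_add]
      abel
    rw [heq]
    exact posdef_combo hP hDpos ht.1 ht.2
  have hinv : ∀ t : ℝ, t ∈ Set.Icc (0:ℝ) 1 → (B t).det ≠ 0 := by
    intro t ht hdet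
    have hdetT : ((B t)ᵀ).det = 0 := by rw [Matrix.det_transpose]; exact hdet
    obtain ⟨y, hy0, hy⟩ := (Matrix.exists_mulVec_eq_zero_iff).2 hdetT
    have hpos := (hcomb t ht).dotProduct_mulVec_pos hy0
    have hz : star y ⬝ᵥ ((B t * diagonal d + diagonal d * (B t)ᵀ) *ᵥ y) = 0 := by
      have h1 : (B t * diagonal d) *ᵥ y = (B t) *ᵥ (diagonal d *ᵥ y) := by
        rw [mulVec_mulVec]
      have h2 : (diagonal d * (B t)ᵀ) *ᵥ y = diagonal d *ᵥ ((B t)ᵀ *ᵥ y) := by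
        rw [mulVec_mulVec]
      rw [add_mulVec, h1, h2, hy, dotProduct_add]
      have hsy : star y = y := by funext i; simp
      rw [hsy]
      have h3 : y ⬝ᵥ (B t) *ᵥ (diagonal d *ᵥ y) = (y ᵥ* (B t)) ⬝ᵥ (diagonal d *ᵥ y) :=
        dotProduct_mulVec _ _ _
      have h4 : y ᵥ* (B t) = (B t)ᵀ *ᵥ y := (mulVec_transpose _ _).symm
      rw [h3, h4, hy]
      simp
    rw [hz] at hpos
    exact lt_irrefl _ hpos
  have hcont : Continuous fun t : ℝ => (B t).det := by
    apply Continuous.matrix_det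
    exact (continuous_id.smul continuous_const).add
      ((continuous_const.sub continuous_id).smul continuous_const)
  have hf0 : (B 0).det = 1 := by simp [hB]
  have hf1 : (B 1).det = A.det := by simp [hB]
  by_contra hle
  push_neg at hle
  have hne := hinv 1 (by norm_num)
  rw [hf1] at hne
  have hlt : A.det < 0 := lt_of_le_of_ne hle hne
  have hsub := intermediate_value_Icc' (zero_le_one) hcont.continuousOn
  have h0mem : (0:ℝ) ∈ Set.Icc ((fun t => (B t).det) 1) ((fun t => (B t).det) 0) := by
    simp only [hf0, hf1]
    exact ⟨hlt.le, zero_le_one⟩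
  obtain ⟨t, ht, hft⟩ := hsub h0mem
  exact hinv t ht hft

lemma posdef_submatrix {N : Matrix m m ℝ} (hN : N.PosDef) (S : Finset m) :
    (N.submatrix (fun i : S => (i : m)) (fun i : S => (i : m))).PosDef := by
  classical
  rw [posDef_iff_dotProduct_mulVec] at hN ⊢
  constructor
  · have h := hN.1
    ext i j
    simp only [conjTranspose_apply, submatrix_apply, star_trivial]
    conv_rhs => rw [← h]
    simp [conjTranspose_apply]
  · intro y hy
    set x : m → ℝ := fun j => if h : j ∈ S then y ⟨j, h⟩ else 0 with hxdef
    have hx : x ≠ 0 := by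
      obtain ⟨i0, hi0⟩ : ∃ i, y i ≠ 0 := by
        by_contra h; push_neg at h; exact hy (funext h)
      intro h
      apply hi0
      have := congrFun h (i0 : m)
      simpa [hxdef, i0.2] using this
    have hform := hN.2 hx
    have hy' : ∀ j : S, y j = x (j : m) := fun j => by simp [hxdef, j.2]
    have inner : ∀ a : m, (∑ j : S, N a (j:m) * x (j:m)) = (N *ᵥ x) a := by
      intro a
      rw [Finset.sum_coe_sort S (fun j => N a j * x j)]
      have h2 : (N *ᵥ x) a = ∑ j : m, N a j * x j := by simp [mulVec, dotProduct]
      rw [h2]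
      apply Finset.sum_subset (Finset.subset_univ S)
      intro j _ hj
      simp [hxdef, hj]
    have key : star y ⬝ᵥ ((N.submatrix (fun i : S => (i : m)) (fun i : S => (i : m))) *ᵥ y)
        = x ⬝ᵥ N *ᵥ x := by
      calc star y ⬝ᵥ ((N.submatrix (fun i : S => (i : m)) (fun i : S => (i : m))) *ᵥ y)
          = ∑ i : S, x (i:m) * ∑ j : S, N (i:m) (j:m) * x (j:m) := by
            simp only [dotProduct, mulVec, submatrix_apply, Pi.star_apply, star_trivial, hy']
        _ = ∑ i : S, x (i:m) * (N *ᵥ x) (i:m) :=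
            Finset.sum_congr rfl fun i _ => by rw [inner]
        _ = x ⬝ᵥ N *ᵥ x := by
            rw [Finset.sum_coe_sort S (fun i => x i * (N *ᵥ x) i)]
            symm
            simp only [dotProduct]
            apply (Finset.sum_subset (Finset.subset_univ S) ?_).symm
            intro j _ hj
            simp [hxdef, hj]
    rw [key]
    exact hform

lemma lyap_submatrix (A : Matrix m m ℝ) (d : m → ℝ) (S : Finset m) :
    (A * diagonal d + diagonal d * Aᵀ).submatrix (fun i : S => (i:m)) (fun i : S => (i:m))
    = (A.submatrix (fun i : S => (i:m)) (fun i : S => (i:m))) * diagonal (fun i : S => d i)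
      + diagonal (fun i : S => d i) * (A.submatrix (fun i : S => (i:m)) (fun i : S => (i:m)))ᵀ := by
  ext i j
  simp [mul_diagonal, diagonal_mul, submatrix_apply, transpose_apply, Matrix.add_apply]

end Aux

lemma det_schur_aux {β : Type*} [Fintype β] [DecidableEq β]
    (a : ℝ) (b c : β → ℝ) (Dm : Matrix β β ℝ) (ha : a ≠ 0) :
    (Matrix.fromBlocks (Matrix.of fun _ _ : Unit => a) (Matrix.of fun (_ : Unit) j => b j)
      (Matrix.of fun i (_ : Unit) => c i) Dm).det
    = a * (Matrix.of fun i j => Dm i j - c i * b j / a).det := by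
  have hfac : Matrix.fromBlocks (Matrix.of fun _ _ : Unit => a) (Matrix.of fun (_ : Unit) j => b j)
        (Matrix.of fun i (_ : Unit) => c i) Dm
      = Matrix.fromBlocks (1 : Matrix Unit Unit ℝ) 0 (Matrix.of fun i (_ : Unit) => c i / a) 1
        * Matrix.fromBlocks (Matrix.of fun _ _ : Unit => a) (Matrix.of fun (_ : Unit) j => b j)
          0 (Matrix.of fun i j => Dm i j - c i * b j / a) := by
    rw [Matrix.fromBlocks_multiply]
    ext i j
    rcases i with i | i <;> rcases j with j | j <;>
      simp [Matrix.mul_apply, Matrix.one_apply, div_mul_cancel₀, ha] <;>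
      field_simp <;> ring
  rw [hfac, Matrix.det_mul, Matrix.det_fromBlocks_zero₁₂, Matrix.det_fromBlocks_zero₂₁]
  simp [Matrix.det_unique]

lemma exists_pos_lt_of_pos {μ : Type*} [Fintype μ] (g : μ → ℝ) (hg : ∀ i, 0 < g i) :
    ∃ ε : ℝ, 0 < ε ∧ ∀ i, ε < g i := by
  rcases isEmpty_or_nonempty μ with h | h
  · exact ⟨1, one_pos, fun i => (IsEmpty.false i).elim⟩
  · have hne : (Finset.univ : Finset μ).Nonempty := Finset.univ_nonempty
    obtain ⟨i0, _, hmin⟩ := Finset.exists_mem_eq_inf' hne g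
    refine ⟨Finset.univ.inf' hne g / 2, by rw [hmin]; linarith [hg i0], fun i => ?_⟩
    have hle : Finset.univ.inf' hne g ≤ g i := Finset.inf'_le g (Finset.mem_univ i)
    rw [hmin] at hle ⊢
    linarith [hg i0]

lemma m_matrix_exists_u : ∀ (k : ℕ) (m : Type) (_ : Fintype m) (_ : DecidableEq m),
    Fintype.card m = k →
    ∀ A : Matrix m m ℝ, (∀ i j, i ≠ j → A i j ≤ 0) →
    (∀ S : Finset m, S.Nonempty →
      0 < (A.submatrix (fun i : S => (i : m)) (fun i : S => (i : m))).det) →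
    ∃ u : m → ℝ, (∀ i, 0 < u i) ∧ ∀ i, 0 < (A *ᵥ u) i := by
  intro k
  induction k with
  | zero =>
    intro m _ _ hcard A hZ hP
    have : IsEmpty m := Fintype.card_eq_zero_iff.mp hcard
    exact ⟨fun _ => 1, fun i => (IsEmpty.false i).elim, fun i => (IsEmpty.false i).elim⟩
  | succ k ih =>
    intro m _ _ hcard A hZ hP
    have hpos' : 0 < Fintype.card m := by omega
    obtain ⟨a⟩ := Fintype.card_pos_iff.mp hpos'
    -- positivity of diagonal entries
    have hdiag : ∀ i : m, 0 < A i i := by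
      intro i
      have h := hP {i} ⟨i, Finset.mem_singleton_self i⟩
      haveI : Subsingleton ({i} : Finset m) :=
        ⟨by rintro ⟨x, hx⟩ ⟨y, hy⟩; simp only [Finset.mem_singleton] at hx hy; subst hx; subst hy; rfl⟩
      rw [Matrix.det_eq_elem_of_subsingleton _ ⟨i, Finset.mem_singleton_self i⟩] at h
      exact h
    have haa := hdiag a
    -- the complement subtype and Schur complement matrix
    set m' := {x : m // x ≠ a} with hm'
    have hcard' : Fintype.card m' = k := by
      have h1 : Fintype.card m' = Fintype.card m - Fintype.card {x : m // x = a} :=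
        Fintype.card_subtype_compl _
      rw [Fintype.card_subtype_eq, hcard] at h1
      omega
    set Sm : Matrix m' m' ℝ := fun i j => A i j - A i a * A a j / A a a with hSm
    have hSZ : ∀ i j : m', i ≠ j → Sm i j ≤ 0 := by
      intro i j hij
      have h1 : A (i : m) (j : m) ≤ 0 := hZ _ _ (fun h => hij (Subtype.ext h))
      have h2 : A (i : m) a ≤ 0 := hZ _ _ i.2
      have h3 : A a (j : m) ≤ 0 := hZ _ _ (fun h => j.2 h.symm)
      have : 0 ≤ A (i : m) a * A a (j : m) / A a a :=
        div_nonneg (by nlinarith) haa.le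
      simp only [hSm]
      linarith
    -- principal minors of the Schur complement are positive
    have hSP : ∀ J : Finset m', J.Nonempty →
        0 < (Sm.submatrix (fun i : J => (i : m')) (fun i : J => (i : m'))).det := by
      intro J hJ
      classical
      set T : Finset m := insert a (J.image (fun x : m' => (x : m))) with hT
      have haT : a ∈ T := Finset.mem_insert_self _ _
      have hmemT : ∀ j : J, ((j : m') : m) ∈ T := fun j => by
        rw [hT, Finset.mem_insert]
        exact Or.inr (Finset.mem_image_of_mem _ j.2)
      let e : Unit ⊕ J ≃ T :=
        { toFun := Sum.elim (fun _ => ⟨a, haT⟩) (fun j => ⟨((j : m') : m), hmemT j⟩)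
          invFun := fun t => if h : (t : m) = a then Sum.inl () else
            Sum.inr ⟨⟨(t : m), h⟩, by
              rcases Finset.mem_insert.mp t.2 with h' | h'
              · exact absurd h' h
              · obtain ⟨x, hxJ, hx⟩ := Finset.mem_image.mp h'
                have hxx : x = ⟨(t : m), h⟩ := Subtype.ext hx
                subst hxx
                exact hxJ⟩
          left_inv := by
            rintro (u | j)
            · simp
            · have hne : ((j : m') : m) ≠ a := (j : m').2
              simp [hne]
          right_inv := fun t => by
            by_cases h : (t : m) = a
            · simp only [h, dif_pos]
              exact Subtype.ext h.symm
            · simp only [dif_neg h]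
              rfl }
      have hTpos := hP T ⟨a, haT⟩
      have hblocks : (A.submatrix (fun i : T => (i : m)) (fun i : T => (i : m))).submatrix e e
          = Matrix.fromBlocks (Matrix.of fun _ _ : Unit => A a a)
              (Matrix.of fun (_ : Unit) (j : J) => A a ((j : m') : m))
              (Matrix.of fun (i : J) (_ : Unit) => A ((i : m') : m) a)
              (Matrix.of fun (i j : J) => A ((i : m') : m) ((j : m') : m)) := by
        ext i j
        rcases i with i | i <;> rcases j with j | j <;> rfl
      have hdet1 : (A.submatrix (fun i : T => (i : m)) (fun i : T => (i : m))).det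
          = A a a * (Sm.submatrix (fun i : J => (i : m')) (fun i : J => (i : m'))).det := by
        rw [← Matrix.det_submatrix_equiv_self e, hblocks, det_schur_aux _ _ _ _ haa.ne']
        rfl
      rw [hdet1] at hTpos
      by_contra hle
      push_neg at hle
      nlinarith
    -- apply induction hypothesis
    obtain ⟨v, hv, hSv⟩ := ih m' inferInstance inferInstance hcard' Sm hSZ hSP
    -- assemble u
    set bv : ℝ := ∑ j : m', A a (j : m) * v j with hbv
    have hbv0 : bv ≤ 0 := by
      apply Finset.sum_nonpos
      intro j _
      exact mul_nonpos_of_nonpos_of_nonneg (hZ _ _ (fun h => j.2 h.symm)) (hv j).le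
    set L : ℝ := -bv / A a a with hL
    have hL0 : 0 ≤ L := div_nonneg (by linarith) haa.le
    set Dv : m' → ℝ := fun i => ∑ j : m', A (i : m) (j : m) * v j with hDv
    set g : m' → ℝ := fun i => Dv i + A (i : m) a * L with hg
    have hgpos : ∀ i, 0 < g i := by
      intro i
      have h1 := hSv i
      have hexp : (Sm *ᵥ v) i = Dv i - A (i : m) a / A a a * bv := by
        simp only [hSm, mulVec, dotProduct, hDv, hbv]
        rw [Finset.mul_sum, ← Finset.sum_sub_distrib]
        refine Finset.sum_congr rfl fun j _ => by ring
      rw [hexp] at h1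
      have : A (i : m) a * L = -(A (i : m) a / A a a * bv) := by
        rw [hL]; field_simp; try ring
      simp only [hg]
      rw [this]
      linarith
    obtain ⟨ε, hε0, hεlt⟩ := exists_pos_lt_of_pos (fun i : m' => g i / (1 - A (i : m) a))
      (fun i => div_pos (hgpos i) (by have := hZ (i : m) a i.2; linarith))
    set t : ℝ := L + ε with ht
    have ht0 : 0 < t := by linarith
    classical
    set u : m → ℝ := fun x => if h : x = a then t else v ⟨x, h⟩ with hu
    have hupos : ∀ x, 0 < u x := by
      intro x
      simp only [hu]
      split
      · exact ht0
      · exact hv _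
    have split_sum : ∀ f : m → ℝ, (∑ x : m, f x) = f a + ∑ x : m', f (x : m) := by
      intro f
      rw [← Finset.add_sum_erase _ f (Finset.mem_univ a)]
      congr 1
      exact Finset.sum_subtype _ (fun x => by simp) f
    have huv : ∀ x : m', u (x : m) = v x := fun x => by
      simp only [hu]; rw [dif_neg x.2]
    have hua : u a = t := by simp [hu]
    refine ⟨u, hupos, ?_⟩
    intro i
    by_cases hia : i = a
    · subst hia
      have : (A *ᵥ u) i = A i i * t + bv := by
        simp only [mulVec, dotProduct]
        rw [split_sum (fun x => A i x * u x), hua, hbv]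
        congr 1
        exact Finset.sum_congr rfl fun j _ => by rw [huv]
      rw [this]
      have hAL : A i i * L = -bv := by rw [hL]; field_simp; try ring
      have : A i i * t = A i i * L + A i i * ε := by rw [ht]; ring
      rw [this, hAL]
      have := mul_pos haa hε0
      linarith
    · -- i corresponds to an element of m'
      set i' : m' := ⟨i, hia⟩ with hi'
      have hexp : (A *ᵥ u) i = A i a * t + Dv i' := by
        simp only [mulVec, dotProduct]
        rw [split_sum (fun x => A i x * u x), hua, hDv]
        congr 1
        exact Finset.sum_congr rfl fun j _ => by rw [huv]
      rw [hexp]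
      have hεg : ε * (1 - A i a) < g i' := by
        have h2 := hεlt i'
        have h3 : (0:ℝ) < 1 - A i a := by have := hZ i a hia; linarith
        exact (lt_div_iff₀ h3).mp h2
      have hAia : A i a ≤ 0 := hZ i a hia
      have hgi := hgpos i'
      simp only [hg] at hgi hεg
      have : A i a * t = A i a * L + A i a * ε := by rw [ht]; ring
      rw [this]
      nlinarith


/-- A Z-matrix (all off-diagonal entries nonpositive) is Lyapunov diagonally
stable if and only if it is a P-matrix (every principal minor is strictly
positive), i.e. if and only if it is an M-matrix. -/
theorem z_matrix_lyapunov_diag_stable_iff_P_matrix {n : ℕ}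
    (A : Matrix (Fin n) (Fin n) ℝ) (hZ : ∀ i j, i ≠ j → A i j ≤ 0) :
    (∃ d : Fin n → ℝ, (∀ i, 0 < d i) ∧
        (A * Matrix.diagonal d + Matrix.diagonal d * Aᵀ).PosDef) ↔
    (∀ S : Finset (Fin n), S.Nonempty →
        0 < (A.submatrix (fun i : S => (i : Fin n)) (fun i : S => (i : Fin n))).det) := by
  constructor
  · rintro ⟨d, hd, hPD⟩ S hS
    have hsub := posdef_submatrix hPD S
    rw [lyap_submatrix] at hsub
    exact det_pos_of_lyap _ _ (fun i : S => hd (i : Fin n)) hsub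
  · intro hP
    -- obtain positive vectors for A and Aᵀ
    obtain ⟨u, hu, hAu⟩ := m_matrix_exists_u (Fintype.card (Fin n)) (Fin n)
      inferInstance inferInstance rfl A hZ hP
    have hZT : ∀ i j, i ≠ j → Aᵀ i j ≤ 0 := fun i j hij => hZ j i (fun h => hij h.symm)
    have hPT : ∀ S : Finset (Fin n), S.Nonempty →
        0 < ((Aᵀ).submatrix (fun i : S => (i : Fin n)) (fun i : S => (i : Fin n))).det := by
      intro S hS
      have h1 : (Aᵀ).submatrix (fun i : S => (i : Fin n)) (fun i : S => (i : Fin n))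
          = (A.submatrix (fun i : S => (i : Fin n)) (fun i : S => (i : Fin n)))ᵀ :=
        (Matrix.transpose_submatrix A _ _).symm
      rw [h1, Matrix.det_transpose]
      exact hP S hS
    obtain ⟨v, hv, hAv⟩ := m_matrix_exists_u (Fintype.card (Fin n)) (Fin n)
      inferInstance inferInstance rfl Aᵀ hZT hPT
    set d : Fin n → ℝ := fun i => u i / v i with hd
    have hdpos : ∀ i, 0 < d i := fun i => div_pos (hu i) (hv i)
    refine ⟨d, hdpos, ?_⟩
    set N : Matrix (Fin n) (Fin n) ℝ := A * Matrix.diagonal d + Matrix.diagonal d * Aᵀ with hN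
    have hNentry : ∀ i j, N i j = A i j * d j + d i * A j i := by
      intro i j
      simp [hN, Matrix.add_apply, Matrix.mul_diagonal, Matrix.diagonal_mul,
        Matrix.transpose_apply]
    have hsym : N.IsHermitian := by
      ext i j
      simp only [Matrix.conjTranspose_apply, star_trivial]
      rw [hNentry i j, hNentry j i]
      ring
    have hoff : ∀ i j, i ≠ j → N i j ≤ 0 := by
      intro i j hij
      rw [hNentry i j]
      have h1 := hZ i j hij
      have h2 := hZ j i (fun h => hij h.symm)
      have h3 := hdpos i
      have h4 := hdpos j
      nlinarith
    have hNv : ∀ i, 0 < (N *ᵥ v) i := by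
      intro i
      have hDv : Matrix.diagonal d *ᵥ v = u := by
        funext j
        rw [Matrix.mulVec_diagonal]
        show u j / v j * v j = u j
        exact div_mul_cancel₀ (u j) (hv j).ne'
      have hexp : (N *ᵥ v) i = (A *ᵥ u) i + d i * ((Aᵀ *ᵥ v) i) := by
        have h1 : (A * Matrix.diagonal d) *ᵥ v = A *ᵥ u := by
          rw [← Matrix.mulVec_mulVec, hDv]
        have h2 : (Matrix.diagonal d * Aᵀ) *ᵥ v = Matrix.diagonal d *ᵥ (Aᵀ *ᵥ v) :=
          (Matrix.mulVec_mulVec _ _ _).symm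
        rw [hN, Matrix.add_mulVec, Pi.add_apply, h1, h2, Matrix.mulVec_diagonal]
      rw [hexp]
      have := mul_pos (hdpos i) (hAv i)
      linarith [hAu i]
    exact posdef_of_dominance N hsym hoff v hv hNv
end

section
/- Let A be a real n×n matrix with nonnegative diagonal entries that is generalized row-diagonally dominant: there exists a vector x ∈ ℝⁿ with all entries x_i > 0 such that |a_{ii}|·x_i > Σ_{j≠i} |a_{ij}|·x_j for every i. Then A is Lyapunov diagonally stable. -/
open Matrix

open Finset in
private lemma sum_erase_to_ite {n : ℕ} (f : Fin n → Fin n → ℝ) (i : Fin n) :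
    ∑ j ∈ Finset.univ.erase i, f i j = ∑ j, if i = j then 0 else f i j := by
  rw [← Finset.add_sum_erase _ (fun j => if i = j then 0 else f i j) (Finset.mem_univ i),
    if_pos rfl, zero_add]
  exact Finset.sum_congr rfl fun j hj =>
    (if_neg (Ne.symm (Finset.mem_erase.mp hj).1)).symm

private lemma sum_erase_swap {n : ℕ} (g : Fin n → Fin n → ℝ) :
    ∑ i, ∑ j ∈ Finset.univ.erase i, g i j = ∑ j, ∑ i ∈ Finset.univ.erase j, g i j := by
  have h1 : ∑ i, ∑ j ∈ Finset.univ.erase i, g i j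
      = ∑ i, ∑ j, if i = j then 0 else g i j :=
    Finset.sum_congr rfl fun i _ => sum_erase_to_ite g i
  have h2 : ∑ j, ∑ i ∈ Finset.univ.erase j, g i j
      = ∑ j, ∑ i, if j = i then 0 else g i j :=
    Finset.sum_congr rfl fun j _ => sum_erase_to_ite (fun j i => g i j) j
  rw [h1, h2, Finset.sum_comm]
  refine Finset.sum_congr rfl fun j _ => Finset.sum_congr rfl fun i _ => ?_
  by_cases h : i = j
  · simp [h]
  · rw [if_neg h, if_neg (Ne.symm h)]

private lemma aux_pair (m vi vj wi wj : ℝ) (hwi : 0 < wi) (hwj : 0 < wj) :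
    0 ≤ vi * (m * vj) + (|m| * ((vi ^ 2 / wi) * wj) + |m| * ((vj ^ 2 / wj) * wi)) / 2 := by
  have hw : 0 < wi * wj := mul_pos hwi hwj
  have key : 0 ≤ (vi * (m * vj)
      + (|m| * ((vi ^ 2 / wi) * wj) + |m| * ((vj ^ 2 / wj) * wi)) / 2) * (wi * wj) := by
    have e : (vi * (m * vj)
        + (|m| * ((vi ^ 2 / wi) * wj) + |m| * ((vj ^ 2 / wj) * wi)) / 2) * (wi * wj)
        = vi * m * vj * wi * wj + |m| * ((vi * wj) ^ 2 + (vj * wi) ^ 2) / 2 := by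
      field_simp
    rw [e]
    nlinarith [mul_nonneg (abs_nonneg m) (sq_nonneg (vi * wj + vj * wi)),
      mul_nonneg (abs_nonneg m) (sq_nonneg (vi * wj - vj * wi)),
      le_abs_self m, neg_abs_le m]
  exact (mul_nonneg_iff_of_pos_right hw).mp key

/-- A symmetric real matrix that is generalized strictly diagonally dominant with positive
diagonal is positive definite. -/
private lemma posdef_of_weighted_dominant {n : ℕ} (M : Matrix (Fin n) (Fin n) ℝ)
    (hsym : ∀ i j, M j i = M i j) (w : Fin n → ℝ) (hw : ∀ i, 0 < w i)
    (hdom : ∀ i, (∑ j ∈ Finset.univ.erase i, |M i j| * w j) < M i i * w i) :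
    M.PosDef := by
  rw [posDef_iff_dotProduct_mulVec]
  constructor
  · ext i j
    simp only [conjTranspose_apply, star_trivial]
    exact hsym i j
  intro v hv
  obtain ⟨i0, hi0⟩ : ∃ i, v i ≠ 0 := by
    by_contra h; push_neg at h; exact hv (funext h)
  set c : Fin n → ℝ := fun i => v i ^ 2 / w i with hc
  have hc0 : ∀ i, 0 ≤ c i := fun i => div_nonneg (sq_nonneg _) (hw i).le
  have hcw : ∀ i, c i * w i = v i ^ 2 := fun i => div_mul_cancel₀ _ (hw i).ne'
  have hstar : star v = v := rfl
  have expand : star v ⬝ᵥ M *ᵥ v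
      = ∑ i, (v i * (M i i * v i) + ∑ j ∈ Finset.univ.erase i, v i * (M i j * v j)) := by
    rw [hstar]
    simp only [dotProduct, mulVec, Finset.mul_sum]
    exact Finset.sum_congr rfl fun i _ =>
      (Finset.add_sum_erase _ (fun j => v i * (M i j * v j)) (Finset.mem_univ i)).symm
  -- swap identity
  have swap : ∑ i, ∑ j ∈ Finset.univ.erase i, |M i j| * (c i * w j)
      = ∑ i, ∑ j ∈ Finset.univ.erase i, |M i j| * (c j * w i) := by
    rw [sum_erase_swap (fun i j => |M i j| * (c i * w j))]
    exact Finset.sum_congr rfl fun j _ => Finset.sum_congr rfl fun i _ => by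
      rw [hsym j i]
  -- half-half rewriting
  have half : ∑ i, ∑ j ∈ Finset.univ.erase i, |M i j| * (c i * w j)
      = ∑ i, ∑ j ∈ Finset.univ.erase i,
          (|M i j| * (c i * w j) + |M i j| * (c j * w i)) / 2 := by
    have : ∀ (a b : ℝ), a = b → a = (a + b) / 2 := by intro a b h; rw [h]; ring
    calc ∑ i, ∑ j ∈ Finset.univ.erase i, |M i j| * (c i * w j)
        = (∑ i, ∑ j ∈ Finset.univ.erase i, |M i j| * (c i * w j)
          + ∑ i, ∑ j ∈ Finset.univ.erase i, |M i j| * (c j * w i)) / 2 := by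
          rw [← swap]; ring
      _ = _ := by
          rw [← Finset.sum_add_distrib, Finset.sum_div]
          refine Finset.sum_congr rfl fun i _ => ?_
          rw [← Finset.sum_add_distrib, Finset.sum_div]
  have offdiag_nonneg : 0 ≤ ∑ i, ∑ j ∈ Finset.univ.erase i,
      (v i * (M i j * v j)
        + (|M i j| * (c i * w j) + |M i j| * (c j * w i)) / 2) :=
    Finset.sum_nonneg fun i _ => Finset.sum_nonneg fun j _ =>
      aux_pair (M i j) (v i) (v j) (w i) (w j) (hw i) (hw j)
  have lower : ∑ i, c i * (M i i * w i - ∑ j ∈ Finset.univ.erase i, |M i j| * w j)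
      ≤ star v ⬝ᵥ M *ᵥ v := by
    rw [expand]
    have lhs_eq : ∑ i, c i * (M i i * w i - ∑ j ∈ Finset.univ.erase i, |M i j| * w j)
        = ∑ i, (v i * (M i i * v i)
            - ∑ j ∈ Finset.univ.erase i, |M i j| * (c i * w j)) := by
      refine Finset.sum_congr rfl fun i _ => ?_
      rw [mul_sub, Finset.mul_sum]
      have h1 : c i * (M i i * w i) = v i * (M i i * v i) := by
        rw [show c i * (M i i * w i) = M i i * (c i * w i) by ring, hcw]; ring
      rw [h1]
      congr 1
      exact Finset.sum_congr rfl fun j _ => by ring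
    rw [lhs_eq, Finset.sum_sub_distrib, Finset.sum_add_distrib]
    have h0 : 0 ≤ (∑ i, ∑ j ∈ Finset.univ.erase i, v i * (M i j * v j))
        + ∑ i, ∑ j ∈ Finset.univ.erase i, |M i j| * (c i * w j) := by
      rw [half]
      calc (0:ℝ) ≤ ∑ i, ∑ j ∈ Finset.univ.erase i, (v i * (M i j * v j)
            + (|M i j| * (c i * w j) + |M i j| * (c j * w i)) / 2) := offdiag_nonneg
        _ = _ := by simp only [Finset.sum_add_distrib]
    linarith
  have pos : 0 < ∑ i, c i * (M i i * w i - ∑ j ∈ Finset.univ.erase i, |M i j| * w j) := by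
    refine Finset.sum_pos' (fun i _ => mul_nonneg (hc0 i) (by linarith [hdom i]))
      ⟨i0, Finset.mem_univ i0, ?_⟩
    have hv2 : 0 < v i0 ^ 2 :=
      lt_of_le_of_ne (sq_nonneg _) (Ne.symm (pow_ne_zero 2 hi0))
    exact mul_pos (div_pos hv2 (hw i0)) (by linarith [hdom i0])
  exact lt_of_lt_of_le pos lower


private lemma exists_col_weights {n : ℕ} (A : Matrix (Fin n) (Fin n) ℝ) (x : Fin n → ℝ)
    (hx : ∀ i, 0 < x i) (hAd : ∀ i, 0 < |A i i|)
    (hdom : ∀ i, (∑ j ∈ Finset.univ.erase i, |A i j| * x j) < |A i i| * x i) :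
    ∃ y : Fin n → ℝ, (∀ i, 0 < y i) ∧
      ∀ j, (∑ i ∈ Finset.univ.erase j, |A i j| * y i) < |A j j| * y j := by
  rcases Nat.eq_zero_or_pos n with hn | hn
  · subst hn
    exact ⟨fun _ => 1, fun i => i.elim0, fun j => j.elim0⟩
  have hne : Nonempty (Fin n) := ⟨⟨0, hn⟩⟩
  set N : Matrix (Fin n) (Fin n) ℝ :=
    Matrix.of fun i j => if i = j then 0 else |A i j| * x j / (|A i i| * x i) with hNdef
  have hNa : ∀ i j, N i j = if i = j then 0 else |A i j| * x j / (|A i i| * x i) := by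
    intro i j; rw [hNdef]; rfl
  have hN0 : ∀ i j, 0 ≤ N i j := by
    intro i j; rw [hNa]
    split
    · exact le_refl 0
    · have := hAd i; have := hx i; have := hx j; positivity
  have hrow : ∀ i, ∑ j, N i j < 1 := by
    intro i
    have hpos : 0 < |A i i| * x i := mul_pos (hAd i) (hx i)
    have hsum : ∑ j, N i j
        = (∑ j ∈ Finset.univ.erase i, |A i j| * x j) / (|A i i| * x i) := by
      rw [← Finset.add_sum_erase _ (fun j => N i j) (Finset.mem_univ i), hNa, if_pos rfl,
        zero_add, Finset.sum_div]
      refine Finset.sum_congr rfl fun j hj => ?_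
      rw [hNa, if_neg (Ne.symm (Finset.mem_erase.mp hj).1)]
    rw [hsum, div_lt_one hpos]
    exact hdom i
  set r : ℝ := Finset.univ.sup' Finset.univ_nonempty (fun i => ∑ j, N i j) with hr
  have hr1 : r < 1 := (Finset.sup'_lt_iff _).mpr fun i _ => hrow i
  have hrle : ∀ i, ∑ j, N i j ≤ r := fun i => by
    rw [hr]; exact Finset.le_sup' (fun i => ∑ j, N i j) (Finset.mem_univ i)
  have hr0 : 0 ≤ r :=
    le_trans (Finset.sum_nonneg fun j _ => hN0 _ j) (hrle (Classical.arbitrary _))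
  have hpow : ∀ k : ℕ, (∀ i j, 0 ≤ (N ^ k) i j) ∧ ∀ i, ∑ j, (N ^ k) i j ≤ r ^ k := by
    intro k
    induction k with
    | zero =>
      refine ⟨fun i j => ?_, fun i => ?_⟩
      · rw [pow_zero, Matrix.one_apply]
        split <;> norm_num
      · rw [pow_zero]
        simp [Matrix.one_apply]
    | succ k ih =>
      refine ⟨fun i j => ?_, fun i => ?_⟩
      · rw [pow_succ, Matrix.mul_apply]
        exact Finset.sum_nonneg fun l _ => mul_nonneg (ih.1 i l) (hN0 l j)
      · rw [pow_succ]
        calc ∑ j, (N ^ k * N) i j = ∑ l, (N ^ k) i l * ∑ j, N l j := by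
              simp only [Matrix.mul_apply]
              rw [Finset.sum_comm]
              exact Finset.sum_congr rfl fun l _ => (Finset.mul_sum _ _ _).symm
          _ ≤ ∑ l, (N ^ k) i l * r :=
              Finset.sum_le_sum fun l _ => mul_le_mul_of_nonneg_left (hrle l) (ih.1 i l)
          _ = (∑ l, (N ^ k) i l) * r := by rw [Finset.sum_mul]
          _ ≤ r ^ k * r := mul_le_mul_of_nonneg_right (ih.2 i) hr0
  obtain ⟨K, hK⟩ : ∃ K : ℕ, (n : ℝ) * r ^ K < 1 := by
    have hnpos : (0:ℝ) < n := by exact_mod_cast hn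
    obtain ⟨K, hK⟩ := exists_pow_lt_of_lt_one (show (0:ℝ) < 1 / n by positivity) hr1
    exact ⟨K, by rw [mul_comm]; exact (lt_div_iff₀ hnpos).mp hK⟩
  set T : Matrix (Fin n) (Fin n) ℝ := ∑ k ∈ Finset.range K, N ^ k with hT
  have hTa : ∀ i j, T i j = ∑ k ∈ Finset.range K, (N ^ k) i j := by
    intro i j; rw [hT]; simp [Matrix.sum_apply]
  have hT0 : ∀ i j, 0 ≤ T i j := fun i j => by
    rw [hTa]; exact Finset.sum_nonneg fun k _ => (hpow k).1 i j
  have hK0 : 0 < K := by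
    rcases Nat.eq_zero_or_pos K with h | h
    · exfalso
      rw [h, pow_zero, mul_one] at hK
      have : (1:ℝ) ≤ n := by exact_mod_cast hn
      linarith
    · exact h
  set y' : Fin n → ℝ := fun j => ∑ i, T i j with hy'
  have hy'1 : ∀ j, 1 ≤ y' j := by
    intro j
    have h1 : (1:ℝ) ≤ T j j := by
      rw [hTa]
      have := Finset.single_le_sum (f := fun k => (N ^ k) j j)
        (fun k _ => (hpow k).1 j j) (Finset.mem_range.mpr hK0)
      simpa [Matrix.one_apply_eq] using this
    have h2 : T j j ≤ y' j :=
      Finset.single_le_sum (f := fun i => T i j) (fun i _ => hT0 i j) (Finset.mem_univ j)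
    linarith
  have hgeom : T - T * N = 1 - N ^ K := by
    have h := geom_sum_mul N K
    have h2 : T - T * N = -((∑ k ∈ Finset.range K, N ^ k) * (N - 1)) := by
      rw [hT]; noncomm_ring
    rw [h2, h, neg_sub]
  have key : ∀ j, ∑ l, y' l * N l j < y' j := by
    intro j
    have hent : ∀ i, T i j - (T * N) i j = (1 : Matrix (Fin n) (Fin n) ℝ) i j - (N ^ K) i j := by
      intro i
      have := congrFun (congrFun hgeom i) j
      simpa [Matrix.sub_apply] using this
    have hsum := Finset.sum_congr rfl fun i (_ : i ∈ Finset.univ) => hent i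
    rw [Finset.sum_sub_distrib, Finset.sum_sub_distrib] at hsum
    have hTN : ∑ i, (T * N) i j = ∑ l, y' l * N l j := by
      simp only [Matrix.mul_apply]
      rw [Finset.sum_comm]
      exact Finset.sum_congr rfl fun l _ => by rw [hy']; rw [← Finset.sum_mul]
    have hone : ∑ i, (1 : Matrix (Fin n) (Fin n) ℝ) i j = 1 := by
      simp [Matrix.one_apply]
    have hNK : ∑ i, (N ^ K) i j ≤ (n : ℝ) * r ^ K := by
      have hentry : ∀ i, (N ^ K) i j ≤ r ^ K := fun i =>
        le_trans (Finset.single_le_sum (f := fun j' => (N ^ K) i j')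
          (fun j' _ => (hpow K).1 i j') (Finset.mem_univ j)) ((hpow K).2 i)
      calc ∑ i, (N ^ K) i j ≤ ∑ _i : Fin n, r ^ K := Finset.sum_le_sum fun i _ => hentry i
        _ = (n : ℝ) * r ^ K := by
            rw [Finset.sum_const, Finset.card_univ, Fintype.card_fin, nsmul_eq_mul]
    have hyj : ∑ i, T i j = y' j := rfl
    rw [hTN, hone, hyj] at hsum
    linarith
  refine ⟨fun i => y' i / (|A i i| * x i), fun i => ?_, fun j => ?_⟩
  · have := hy'1 i
    have := hAd i; have := hx i
    positivity
  · have hkj := key j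
    have hsplit : ∑ l, y' l * N l j
        = ∑ l ∈ Finset.univ.erase j, y' l * N l j := by
      rw [← Finset.add_sum_erase _ (fun l => y' l * N l j) (Finset.mem_univ j), hNa,
        if_pos rfl, mul_zero, zero_add]
    rw [hsplit] at hkj
    have hterm : ∀ l ∈ Finset.univ.erase j, y' l * N l j
        = (|A l j| * (y' l / (|A l l| * x l))) * x j := by
      intro l hl
      rw [hNa, if_neg (Finset.mem_erase.mp hl).1]
      have h1 : |A l l| * x l ≠ 0 := (mul_pos (hAd l) (hx l)).ne'
      field_simp
    rw [Finset.sum_congr rfl hterm, ← Finset.sum_mul] at hkj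
    have hj1 : |A j j| * x j ≠ 0 := (mul_pos (hAd j) (hx j)).ne'
    have hy'j : y' j = (|A j j| * (y' j / (|A j j| * x j))) * x j := by
      have h3 := (hAd j).ne'; have h4 := (hx j).ne'
      field_simp
    rw [hy'j] at hkj
    exact lt_of_mul_lt_mul_right hkj (hx j).le

/-- A generalized row-diagonally dominant (quasi-diagonally dominant) real
matrix with nonnegative diagonal entries is Lyapunov diagonally stable. -/
theorem quasi_diag_dominant_lyapunov_diag_stable {n : ℕ}
    (A : Matrix (Fin n) (Fin n) ℝ) (hdiag : ∀ i, 0 ≤ A i i)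
    (hdom : ∃ x : Fin n → ℝ, (∀ i, 0 < x i) ∧
        ∀ i, (∑ j ∈ Finset.univ.erase i, |A i j| * x j) < |A i i| * x i) :
    ∃ d : Fin n → ℝ, (∀ i, 0 < d i) ∧
      (A * Matrix.diagonal d + Matrix.diagonal d * Aᵀ).PosDef := by
  obtain ⟨x, hx, hdomx⟩ := hdom
  have hApos : ∀ i, 0 < A i i := by
    intro i
    have h := hdomx i
    have hs : 0 ≤ ∑ j ∈ Finset.univ.erase i, |A i j| * x j :=
      Finset.sum_nonneg fun j _ => mul_nonneg (abs_nonneg _) (hx j).le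
    have hpos : 0 < |A i i| * x i := lt_of_le_of_lt hs h
    have hne : |A i i| ≠ 0 := by
      intro h0
      rw [h0, zero_mul] at hpos
      exact lt_irrefl 0 hpos
    exact lt_of_le_of_ne (hdiag i) (Ne.symm (abs_ne_zero.mp hne))
  have hAd : ∀ i, 0 < |A i i| := fun i => abs_pos.mpr (hApos i).ne'
  have habs : ∀ i, |A i i| = A i i := fun i => abs_of_pos (hApos i)
  obtain ⟨y, hy, hcol⟩ := exists_col_weights A x hx hAd hdomx
  set d : Fin n → ℝ := fun i => x i / y i with hd
  have hdpos : ∀ i, 0 < d i := fun i => div_pos (hx i) (hy i)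
  have hdy : ∀ i, d i * y i = x i := fun i => div_mul_cancel₀ _ (hy i).ne'
  refine ⟨d, hdpos, ?_⟩
  set M : Matrix (Fin n) (Fin n) ℝ := A * Matrix.diagonal d + Matrix.diagonal d * Aᵀ with hM
  have hMa : ∀ i j, M i j = A i j * d j + d i * A j i := by
    intro i j
    rw [hM, Matrix.add_apply, Matrix.mul_diagonal, Matrix.diagonal_mul, Matrix.transpose_apply]
  refine posdef_of_weighted_dominant M (fun i j => by rw [hMa, hMa]; ring) y hy ?_
  intro i
  have hMii : M i i * y i = 2 * (A i i * x i) := by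
    rw [hMa]
    linear_combination (2 * A i i) * hdy i
  have hboundterm : ∀ j ∈ Finset.univ.erase i, |M i j| * y j
      ≤ |A i j| * x j + d i * (|A j i| * y j) := by
    intro j _
    have h1 : |M i j| ≤ |A i j| * d j + d i * |A j i| := by
      rw [hMa]
      calc |A i j * d j + d i * A j i| ≤ |A i j * d j| + |d i * A j i| := abs_add_le _ _
        _ = |A i j| * d j + d i * |A j i| := by
            rw [abs_mul, abs_mul, abs_of_pos (hdpos j), abs_of_pos (hdpos i)]
    have h2 : |M i j| * y j ≤ (|A i j| * d j + d i * |A j i|) * y j :=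
      mul_le_mul_of_nonneg_right h1 (hy j).le
    calc |M i j| * y j ≤ (|A i j| * d j + d i * |A j i|) * y j := h2
      _ = |A i j| * (d j * y j) + d i * (|A j i| * y j) := by ring
      _ = |A i j| * x j + d i * (|A j i| * y j) := by rw [hdy j]
  calc ∑ j ∈ Finset.univ.erase i, |M i j| * y j
      ≤ ∑ j ∈ Finset.univ.erase i, (|A i j| * x j + d i * (|A j i| * y j)) :=
        Finset.sum_le_sum hboundterm
    _ = (∑ j ∈ Finset.univ.erase i, |A i j| * x j)
        + d i * ∑ j ∈ Finset.univ.erase i, |A j i| * y j := by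
        rw [Finset.sum_add_distrib, Finset.mul_sum]
    _ < |A i i| * x i + d i * (|A i i| * y i) := by
        have hc := hcol i
        have := mul_lt_mul_of_pos_left hc (hdpos i)
        linarith [hdomx i]
    _ = 2 * (A i i * x i) := by
        rw [habs]
        linear_combination (A i i) * hdy i
    _ = M i i * y i := hMii.symm
end

section
/- A real n×n matrix A is generalized row-diagonally dominant if and only if it is generalized column-diagonally dominant. That is, there exist positive reals x_1,…,x_n with |a_{ii}|·x_i > Σ_{j≠i} |a_{ij}|·x_j for all i, if and only if there exist positive reals y_1,…,y_n with |a_{jj}|·y_j > Σ_{i≠j} |a_{ij}|·y_i for all j. -/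
open Matrix

-- Key lemma: if F ≥ 0 and F x < x for some x > 0 (entrywise) then Fᵀ y < y for some y > 0.
lemma key_neumann {n : ℕ} (F : Matrix (Fin n) (Fin n) ℝ) (hF : ∀ i j, 0 ≤ F i j)
    (x : Fin n → ℝ) (hx : ∀ i, 0 < x i) (h : ∀ i, F.mulVec x i < x i) :
    ∃ y : Fin n → ℝ, (∀ i, 0 < y i) ∧ ∀ j, Fᵀ.mulVec y j < y j := by
  rcases Nat.eq_zero_or_pos n with hn | hn
  · subst hn
    exact ⟨fun _ => 1, fun i => i.elim0, fun j => j.elim0⟩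
  haveI : NeZero n := ⟨hn.ne'⟩
  set q : ℝ := Finset.univ.sup' Finset.univ_nonempty (fun i => F.mulVec x i / x i) with hqdef
  have hmv0 : ∀ i, 0 ≤ F.mulVec x i := by
    intro i
    simp only [Matrix.mulVec, dotProduct]
    exact Finset.sum_nonneg fun j _ => mul_nonneg (hF i j) (hx j).le
  have hq1 : q < 1 := by
    rw [hqdef, Finset.sup'_lt_iff]
    exact fun i _ => (div_lt_one (hx i)).mpr (h i)
  obtain ⟨i0⟩ : Nonempty (Fin n) := inferInstance
  have hq0 : 0 ≤ q :=
    le_trans (div_nonneg (hmv0 i0) (hx i0).le)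
      (Finset.le_sup' (fun i => F.mulVec x i / x i) (Finset.mem_univ i0))
  have hqb : ∀ i, F.mulVec x i ≤ q * x i := by
    intro i
    have h1 := Finset.le_sup' (fun i => F.mulVec x i / x i) (Finset.mem_univ i)
    rw [← hqdef] at h1
    exact (div_le_iff₀ (hx i)).mp h1
  -- entries of powers are nonnegative
  have hentry : ∀ k i j, 0 ≤ (F ^ k) i j := by
    intro k
    induction k with
    | zero => intro i j; by_cases hij : i = j <;> simp [pow_zero, Matrix.one_apply, hij]
    | succ k ih =>
      intro i j
      rw [pow_succ, Matrix.mul_apply]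
      exact Finset.sum_nonneg fun l _ => mul_nonneg (ih i l) (hF l j)
  -- geometric bound on powers applied to x
  have hpow : ∀ k i, (F ^ k).mulVec x i ≤ q ^ k * x i := by
    intro k
    induction k with
    | zero => intro i; simp [pow_zero, Matrix.one_mulVec]
    | succ k ih =>
      intro i
      have h1 : (F ^ (k + 1)).mulVec x i = F.mulVec ((F ^ k).mulVec x) i := by
        rw [pow_succ', Matrix.mulVec_mulVec]
      rw [h1]
      have h2 : F.mulVec ((F ^ k).mulVec x) i ≤ F.mulVec (fun j => q ^ k * x j) i := by
        simp only [Matrix.mulVec, dotProduct]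
        exact Finset.sum_le_sum fun j _ => mul_le_mul_of_nonneg_left (ih j) (hF i j)
      have h3 : F.mulVec (fun j => q ^ k * x j) i = q ^ k * F.mulVec x i := by
        simp only [Matrix.mulVec, dotProduct, Finset.mul_sum]
        exact Finset.sum_congr rfl fun j _ => by ring
      calc F.mulVec ((F ^ k).mulVec x) i ≤ q ^ k * F.mulVec x i := by rw [← h3]; exact h2
        _ ≤ q ^ k * (q * x i) := mul_le_mul_of_nonneg_left (hqb i) (pow_nonneg hq0 k)
        _ = q ^ (k + 1) * x i := by ring
  -- entrywise geometric bound
  have hentry_le : ∀ k i j, (F ^ k) i j ≤ q ^ k * (x i / x j) := by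
    intro k i j
    have h1 : (F ^ k) i j * x j ≤ (F ^ k).mulVec x i := by
      refine Finset.single_le_sum (f := fun l => (F ^ k) i l * x l) ?_ (Finset.mem_univ j)
      exact fun l _ => mul_nonneg (hentry k i l) (hx l).le
    have h2 := le_trans h1 (hpow k i)
    have h3 : q ^ k * (x i / x j) = q ^ k * x i / x j := by ring
    rw [h3, le_div_iff₀ (hx j)]
    linarith
  -- summability of entries of powers
  have hsum : ∀ i j, Summable (fun k => (F ^ k) i j) := by
    intro i j
    refine Summable.of_nonneg_of_le (fun k => hentry k i j) (fun k => hentry_le k i j) ?_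
    exact (summable_geometric_of_lt_one hq0 hq1).mul_right (x i / x j)
  set S : Matrix (Fin n) (Fin n) ℝ := fun i j => ∑' k, (F ^ k) i j with hSdef
  have hS0 : ∀ i j, 0 ≤ S i j := fun i j => tsum_nonneg fun k => hentry k i j
  have hS1 : ∀ j, 1 ≤ S j j := by
    intro j
    have h1 : (F ^ 0) j j ≤ S j j := Summable.le_tsum (hsum j j) 0 fun k _ => hentry k j j
    simpa using h1
  have key : ∀ i j, ∑ l, S i l * F l j = S i j - (1 : Matrix (Fin n) (Fin n) ℝ) i j := by
    intro i j
    have h1 : ∀ l, S i l * F l j = ∑' k, (F ^ k) i l * F l j := by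
      intro l
      exact (tsum_mul_right).symm
    have h2 : ∑ l, S i l * F l j = ∑' k, ∑ l, (F ^ k) i l * F l j := by
      rw [Finset.sum_congr rfl fun l _ => h1 l]
      exact (Summable.tsum_finsetSum fun l _ => (hsum i l).mul_right _).symm
    have h3 : ∀ k : ℕ, ∑ l, (F ^ k) i l * F l j = (F ^ (k + 1)) i j := by
      intro k
      rw [pow_succ, Matrix.mul_apply]
    have h4 : S i j = (F ^ 0) i j + ∑' k, (F ^ (k + 1)) i j := Summable.tsum_eq_zero_add (hsum i j)
    rw [h2, tsum_congr h3]
    rw [pow_zero] at h4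
    linarith [h4]
  refine ⟨fun j => ∑ i, S i j, ?_, ?_⟩
  · intro j
    have h1 : S j j ≤ ∑ i, S i j :=
      Finset.single_le_sum (fun i _ => hS0 i j) (Finset.mem_univ j)
    linarith [hS1 j]
  · intro j
    have h1 : Fᵀ.mulVec (fun j => ∑ i, S i j) j = ∑ i, ∑ l, S i l * F l j := by
      simp only [Matrix.mulVec, dotProduct, Matrix.transpose_apply, Finset.mul_sum]
      rw [Finset.sum_comm]
      exact Finset.sum_congr rfl fun i _ => Finset.sum_congr rfl fun l _ => by ring
    have h2 : ∑ i, (1 : Matrix (Fin n) (Fin n) ℝ) i j = 1 := by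
      simp [Matrix.one_apply]
    rw [h1, Finset.sum_congr rfl fun i _ => key i j, Finset.sum_sub_distrib, h2]
    have h3 : (0:ℝ) < 1 := one_pos
    linarith

lemma row_to_col {n : ℕ} (A : Matrix (Fin n) (Fin n) ℝ)
    (h : ∃ x : Fin n → ℝ, (∀ i, 0 < x i) ∧
        ∀ i, (∑ j ∈ Finset.univ.erase i, |A i j| * x j) < |A i i| * x i) :
    ∃ y : Fin n → ℝ, (∀ i, 0 < y i) ∧
        ∀ j, (∑ i ∈ Finset.univ.erase j, |A i j| * y i) < |A j j| * y j := by
  obtain ⟨x, hx, hrow⟩ := h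
  have hdiag : ∀ i, 0 < |A i i| := by
    intro i
    have h0 : 0 ≤ ∑ j ∈ Finset.univ.erase i, |A i j| * x j :=
      Finset.sum_nonneg fun j _ => mul_nonneg (abs_nonneg _) (hx j).le
    have h1 := lt_of_le_of_lt h0 (hrow i)
    nlinarith [hx i, abs_nonneg (A i i)]
  set F : Matrix (Fin n) (Fin n) ℝ :=
    Matrix.of fun i j => if j = i then 0 else |A i j| / |A i i| with hFdef
  have hF : ∀ i j, 0 ≤ F i j := by
    intro i j
    by_cases hij : j = i <;>
      simp [hFdef, hij, div_nonneg (abs_nonneg _) (hdiag i).le]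
  have hFi0 : ∀ i, F i i = 0 := by intro i; simp [hFdef]
  have hmv : ∀ i, F.mulVec x i < x i := by
    intro i
    have h1 : F.mulVec x i = ∑ j ∈ Finset.univ.erase i, F i j * x j := by
      rw [Matrix.mulVec, dotProduct]
      rw [Finset.sum_erase _ (by rw [hFi0]; ring)]
    have h2 : ∑ j ∈ Finset.univ.erase i, F i j * x j
        = (∑ j ∈ Finset.univ.erase i, |A i j| * x j) / |A i i| := by
      rw [Finset.sum_div]
      refine Finset.sum_congr rfl fun j hj => ?_
      have hji : j ≠ i := Finset.ne_of_mem_erase hj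
      simp [hFdef, hji]
      ring
    rw [h1, h2, div_lt_iff₀ (hdiag i)]
    calc (∑ j ∈ Finset.univ.erase i, |A i j| * x j) < |A i i| * x i := hrow i
      _ = x i * |A i i| := by ring
  obtain ⟨y, hy, hcol⟩ := key_neumann F hF x hx hmv
  refine ⟨fun l => y l / |A l l|, fun l => div_pos (hy l) (hdiag l), ?_⟩
  intro j
  have h1 : ∑ i ∈ Finset.univ.erase j, |A i j| * (y i / |A i i|)
      = ∑ i ∈ Finset.univ.erase j, F i j * y i := by
    refine Finset.sum_congr rfl fun i hi => ?_
    have hij : i ≠ j := Finset.ne_of_mem_erase hi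
    simp [hFdef, hij.symm]
    ring
  have h2 : ∑ i ∈ Finset.univ.erase j, F i j * y i = Fᵀ.mulVec y j := by
    rw [Matrix.mulVec, dotProduct]
    rw [Finset.sum_erase _ (by simp [Matrix.transpose_apply, hFi0])]
    exact Finset.sum_congr rfl fun i _ => by rw [Matrix.transpose_apply]
  have h3 : |A j j| * (y j / |A j j|) = y j := by
    rw [mul_div_assoc', mul_comm, mul_div_assoc, div_self (hdiag j).ne', mul_one]
  rw [h1, h2, h3]
  exact hcol j

/-- A real square matrix is generalized row-diagonally dominant if and only if
it is generalized column-diagonally dominant. -/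
theorem row_diag_dominant_iff_col_diag_dominant {n : ℕ}
    (A : Matrix (Fin n) (Fin n) ℝ) :
    (∃ x : Fin n → ℝ, (∀ i, 0 < x i) ∧
        ∀ i, (∑ j ∈ Finset.univ.erase i, |A i j| * x j) < |A i i| * x i) ↔
    (∃ y : Fin n → ℝ, (∀ i, 0 < y i) ∧
        ∀ j, (∑ i ∈ Finset.univ.erase j, |A i j| * y i) < |A j j| * y j) := by
  constructor
  · exact row_to_col A
  · intro h
    have h' : ∃ x : Fin n → ℝ, (∀ i, 0 < x i) ∧
        ∀ i, (∑ j ∈ Finset.univ.erase i, |Aᵀ i j| * x j) < |Aᵀ i i| * x i := by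
      obtain ⟨y, hy, hc⟩ := h
      exact ⟨y, hy, fun i => by simpa [Matrix.transpose_apply] using hc i⟩
    obtain ⟨z, hz, hc⟩ := row_to_col Aᵀ h'
    exact ⟨z, hz, fun i => by simpa [Matrix.transpose_apply] using hc i⟩
end

section
/- If A is an n×n real non-singular matrix, then there exists an n×n permutation matrix P such that P·A is strongly non-singular, i.e., all n leading principal minors of P·A are nonzero. -/
open Matrix

lemma key_strongly_nonsingular : ∀ (n : ℕ) (A : Matrix (Fin n) (Fin n) ℝ), A.det ≠ 0 →
    ∃ σ : Equiv.Perm (Fin n), ∀ k : Fin n,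
      ((A.submatrix σ id).submatrix (Fin.castLE k.isLt) (Fin.castLE k.isLt)).det ≠ 0 := by
  intro n
  induction n with
  | zero => exact fun A _ => ⟨1, fun k => k.elim0⟩
  | succ n ih =>
    intro A hA
    have hrow : ∃ i : Fin (n+1), (A.submatrix i.succAbove Fin.castSucc).det ≠ 0 := by
      by_contra h
      push_neg at h
      apply hA
      rw [Matrix.det_succ_column A (Fin.last n)]
      refine Finset.sum_eq_zero fun i _ => ?_
      rw [Fin.succAbove_last, h i]
      ring
    obtain ⟨i, hi⟩ := hrow
    obtain ⟨τ, hτ⟩ := ih _ hi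
    set σ : Equiv.Perm (Fin (n+1)) :=
      finSuccEquivLast.trans ((Equiv.optionCongr τ).trans (finSuccEquiv' i).symm) with hσ
    have hσc : ∀ j : Fin n, σ (Fin.castSucc j) = i.succAbove (τ j) := by
      intro j
      simp [hσ, finSuccEquiv'_symm_some]
    have hσl : σ (Fin.last n) = i := by
      simp [hσ]
    refine ⟨σ, fun k => ?_⟩
    obtain ⟨kv, hkv⟩ := k
    rcases Nat.lt_or_ge kv n with hk | hk
    · have hk' : kv + 1 ≤ n := hk
      have hmat : (A.submatrix σ id).submatrix (Fin.castLE hkv) (Fin.castLE hkv)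
          = (((A.submatrix i.succAbove Fin.castSucc).submatrix τ id).submatrix
              (Fin.castLE hk') (Fin.castLE hk')) := by
        ext a b
        simp only [Matrix.submatrix_apply, id]
        have h1 : Fin.castLE hkv a = Fin.castSucc (Fin.castLE hk' a) := rfl
        have h2 : Fin.castLE hkv b = Fin.castSucc (Fin.castLE hk' b) := rfl
        rw [h1, h2, hσc]
      have := hτ ⟨kv, hk⟩
      simpa [hmat] using this
    · have hkn : kv = n := le_antisymm (Nat.lt_succ_iff.mp hkv) hk
      subst hkn
      have hmat : (A.submatrix σ id).submatrix (Fin.castLE hkv) (Fin.castLE hkv)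
          = A.submatrix σ id := by
        ext a b
        simp [Fin.castLE]
      rw [hmat]
      have := Matrix.det_permute σ A
      intro hzero
      rw [hzero] at this
      rcases Int.units_eq_one_or (Equiv.Perm.sign σ) with hs | hs <;>
        simp [hs] at this <;> apply hA <;> linarith

/-- **Corfmat–Morse.** For every non-singular real `n × n` matrix `A` there is
a permutation matrix `P` such that `P * A` is strongly non-singular, i.e. all
leading principal minors of `P * A` are nonzero. -/
theorem exists_perm_strongly_nonsingular {n : ℕ} (A : Matrix (Fin n) (Fin n) ℝ)
    (hA : A.det ≠ 0) :
    ∃ σ : Equiv.Perm (Fin n), ∀ k : Fin n,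
      (((σ.permMatrix ℝ) * A).submatrix (Fin.castLE k.isLt) (Fin.castLE k.isLt)).det ≠ 0 := by
  obtain ⟨σ, hσ⟩ := key_strongly_nonsingular n A hA
  refine ⟨σ, fun k => ?_⟩
  have : (σ.permMatrix ℝ) * A = A.submatrix σ id := by
    rw [Equiv.Perm.permMatrix]
    exact PEquiv.toMatrix_toPEquiv_mul σ A
  rw [this]
  exact hσ k
end
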